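/- arXiv:1710.06456 — 8 statements merged into one kernel-verified Lean document; each statement's English description precedes it below -/
import Mathlib

section
/- For any simple graph G on vertex set {1,…,n}, cc(G) equals the least k ∈ ℕ for which there exist pairwise commuting nonzero orthogonal projections P_1,…,P_n ∈ M_k (i.e., P_i = P_iᴴ = P_i², P_i ≠ 0, and P_iP_j = P_jP_i for all i,j) such that for all distinct i,j: i and j are adjacent in G if and only if P_iP_j ≠ 0. -/
open Matrix
open scoped ComplexOrder

/-- Graph parameter `cc(G)`: the least `k` for which `G` is the non-orthogonality graph
of a tuple of nonzero entrywise-nonnegative vectors in `ℝ^k`. -/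
noncomputable def ccG {n : ℕ} (G : SimpleGraph (Fin n)) : ℕ :=
  sInf {k | ∃ x : Fin n → Fin k → ℝ, (∀ i, x i ≠ 0) ∧ (∀ i r, 0 ≤ x i r) ∧
    ∀ i j, i ≠ j → (G.Adj i j ↔ ∑ r, x i r * x j r ≠ 0)}

/-!
Both sides count the least `k` such that `G` is the intersection graph of `n` nonempty subsets
of a `k`-element set. For nonnegative vectors take supports: a sum of nonnegative products
vanishes iff the supports are disjoint. From sets one gets diagonal `0/1` projections. Conversely,
commuting idempotents `P i` split the identity into the Boolean atoms
`Q S = ∏ i ∈ S, P i * ∏ i ∉ S, (1 - P i)`, a complete family of orthogonal idempotents with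
`P i * P j = ∑ S ∋ i, j, Q S`. Vectors taken from the ranges of the nonzero atoms are linearly
independent, so there are at most `k` of them, and `i ↦ {S | i ∈ S, Q S ≠ 0}` represents `G`.
-/

namespace SimpleGraph

variable {V α β : Type*} (G : SimpleGraph V)

def IsIntersectionRep (s : V → Set α) : Prop :=
  (∀ i, (s i).Nonempty) ∧ ∀ i j, i ≠ j → (G.Adj i j ↔ ¬Disjoint (s i) (s j))

variable {G}

theorem IsIntersectionRep.image {s : V → Set α} (hs : G.IsIntersectionRep s) {f : α → β}
    (hf : f.Injective) : G.IsIntersectionRep fun i ↦ f '' s i :=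
  ⟨fun i ↦ (hs.1 i).image f, fun i j hij ↦ by rw [Set.disjoint_image_iff hf, hs.2 i j hij]⟩

end SimpleGraph

theorem sum_mul_eq_zero_iff_disjoint_support {α R : Type*} [Fintype α] [Semiring R]
    [PartialOrder R] [IsOrderedRing R] [NoZeroDivisors R] {x y : α → R} (hx : ∀ r, 0 ≤ x r)
    (hy : ∀ r, 0 ≤ y r) :
    ∑ r, x r * y r = 0 ↔ Disjoint x.support y.support := by
  rw [Finset.sum_eq_zero_iff_of_nonneg fun r _ ↦ mul_nonneg (hx r) (hy r),
    Set.disjoint_iff_inter_eq_empty, ← Function.support_mul, Function.support_eq_empty_iff,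
    funext_iff]
  simp

theorem exists_nonneg_vectors_iff_isIntersectionRep {V α R : Type*} [Fintype α] [Semiring R]
    [PartialOrder R] [IsOrderedRing R] [NoZeroDivisors R] [Nontrivial R] (G : SimpleGraph V) :
    (∃ x : V → α → R, (∀ i, x i ≠ 0) ∧ (∀ i r, 0 ≤ x i r) ∧
      ∀ i j, i ≠ j → (G.Adj i j ↔ ∑ r, x i r * x j r ≠ 0)) ↔
    ∃ s : V → Set α, G.IsIntersectionRep s := by
  constructor
  · rintro ⟨x, hne, hnn, hadj⟩
    refine ⟨fun i ↦ (x i).support, fun i ↦ Function.support_nonempty_iff.2 (hne i),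
      fun i j hij ↦ ?_⟩
    exact (hadj i j hij).trans (sum_mul_eq_zero_iff_disjoint_support (hnn i) (hnn j)).not
  · rintro ⟨s, hne, hadj⟩
    have hsupp : ∀ i, ((s i).indicator (1 : α → R)).support = s i := fun i ↦ by
      simp [Set.support_indicator]
    have hnn : ∀ i r, 0 ≤ (s i).indicator (1 : α → R) r :=
      fun i ↦ Set.indicator_nonneg fun _ _ ↦ zero_le_one
    refine ⟨fun i ↦ (s i).indicator 1, fun i ↦ ?_, fun i ↦ hnn i, fun i j hij ↦ ?_⟩
    · rw [← Function.support_nonempty_iff, hsupp]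
      exact hne i
    · rw [hadj i j hij, ne_eq, sum_mul_eq_zero_iff_disjoint_support (hnn i) (hnn j), hsupp, hsupp]

section BoolAtom

variable {R ι : Type*} [CommRing R] [Fintype ι] [DecidableEq ι] (e : ι → R)

def boolAtom (S : Finset ι) : R :=
  (∏ i ∈ S, e i) * ∏ i ∈ Sᶜ, (1 - e i)

theorem sum_boolAtom : ∑ S, boolAtom e S = 1 := by
  have h : ∏ i, (e i + (1 - e i)) = 1 := by simp
  rw [Finset.prod_add, Finset.powerset_univ] at h
  simpa only [boolAtom, Finset.compl_eq_univ_sdiff] using h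

variable {e}

theorem mul_boolAtom_of_mem {i : ι} (he : IsIdempotentElem (e i)) {S : Finset ι} (h : i ∈ S) :
    e i * boolAtom e S = boolAtom e S := by
  rw [boolAtom, ← Finset.mul_prod_erase _ e h, ← mul_assoc, ← mul_assoc, he.eq]

theorem mul_boolAtom_of_notMem {i : ι} (he : IsIdempotentElem (e i)) {S : Finset ι}
    (h : i ∉ S) :
    e i * boolAtom e S = 0 := by
  rw [boolAtom, ← Finset.mul_prod_erase _ _ (Finset.mem_compl.2 h), mul_left_comm,
    ← mul_assoc (e i), mul_sub, mul_one, he.eq, sub_self, zero_mul, mul_zero]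

theorem completeOrthogonalIdempotents_boolAtom (he : ∀ i, IsIdempotentElem (e i)) :
    CompleteOrthogonalIdempotents (boolAtom e) := by
  refine CompleteOrthogonalIdempotents.iff_ortho_complete.2 ⟨fun S T hST ↦ ?_, sum_boolAtom e⟩
  obtain ⟨i, hi⟩ := not_forall.1 (mt Finset.ext hST)
  by_cases hiS : i ∈ S
  · have hiT : i ∉ T := fun hiT ↦ hi (iff_of_true hiS hiT)
    rw [← mul_boolAtom_of_mem (he i) hiS, mul_assoc, mul_left_comm,
      mul_boolAtom_of_notMem (he i) hiT, mul_zero]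
  · have hiT : i ∈ T := by_contra fun hiT ↦ hi (iff_of_false hiS hiT)
    rw [← mul_boolAtom_of_mem (he i) hiT, mul_left_comm, ← mul_assoc,
      mul_boolAtom_of_notMem (he i) hiS, zero_mul]

theorem mul_eq_sum_boolAtom (he : ∀ i, IsIdempotentElem (e i)) (i j : ι) :
    e i * e j = ∑ S with i ∈ S ∧ j ∈ S, boolAtom e S := by
  have h : ∀ S, e i * e j * boolAtom e S = if i ∈ S ∧ j ∈ S then boolAtom e S else 0 := by
    intro S
    rw [mul_assoc]
    by_cases hj : j ∈ S
    · by_cases hi : i ∈ S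
      · simp [hi, hj, mul_boolAtom_of_mem (he i), mul_boolAtom_of_mem (he j)]
      · simp [hi, hj, mul_boolAtom_of_mem (he j), mul_boolAtom_of_notMem (he i)]
    · simp [hj, mul_boolAtom_of_notMem (he j)]
  rw [Finset.sum_filter, ← Finset.sum_congr rfl fun S _ ↦ h S, ← Finset.mul_sum, sum_boolAtom,
    mul_one]

end BoolAtom

open scoped IsMulCommutative in
theorem exists_completeOrthogonalIdempotents_mul_eq_sum {R ι : Type*} [Ring R] [Fintype ι]
    [DecidableEq ι] {p : ι → R} (hp : ∀ i, IsIdempotentElem (p i))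
    (hcomm : ∀ i j, Commute (p i) (p j)) :
    ∃ q : Finset ι → R, CompleteOrthogonalIdempotents q ∧
      ∀ i j, p i * p j = ∑ S with i ∈ S ∧ j ∈ S, q S := by
  let A := Subring.closure (Set.range p)
  have : IsMulCommutative A := Subring.isMulCommutative_closure <| by
    rintro _ ⟨i, rfl⟩ _ ⟨j, rfl⟩
    exact hcomm i j
  let e : ι → A := fun i ↦ ⟨p i, Subring.subset_closure ⟨i, rfl⟩⟩
  have he : ∀ i, IsIdempotentElem (e i) := fun i ↦ Subtype.ext (hp i)
  refine ⟨A.subtype ∘ boolAtom e, (completeOrthogonalIdempotents_boolAtom he).map _,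
    fun i j ↦ ?_⟩
  simp only [Function.comp_apply, ← map_sum]
  rw [← mul_eq_sum_boolAtom he]
  rfl

theorem OrthogonalIdempotents.sum_eq_zero_iff {R ι : Type*} [Semiring R] {e : ι → R}
    (he : OrthogonalIdempotents e) {s : Finset ι} :
    ∑ i ∈ s, e i = 0 ↔ ∀ i ∈ s, e i = 0 :=
  ⟨fun h i hi ↦ by rw [← he.mul_sum_of_mem hi, h, mul_zero], Finset.sum_eq_zero⟩

theorem Matrix.card_le_of_orthogonalIdempotents {K m ι : Type*} [Field K] [Fintype m]
    [DecidableEq m] [Fintype ι] {e : ι → Matrix m m K} (he : OrthogonalIdempotents e)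
    (hne : ∀ i, e i ≠ 0) :
    Fintype.card ι ≤ Fintype.card m := by
  classical
  have : ∀ i, ∃ v, e i *ᵥ v ≠ 0 := fun i ↦
    not_forall.1 fun h ↦ hne i (mulVec_injective (funext fun v ↦ by simp [h v]))
  choose v hv using this
  have hw : ∀ i j, e i *ᵥ (e j *ᵥ v j) = if i = j then e j *ᵥ v j else 0 := fun i j ↦ by
    rw [mulVec_mulVec, he.mul_eq]
    split_ifs with h <;> simp [h]
  have hli : LinearIndependent K fun i ↦ e i *ᵥ v i := by
    refine linearIndependent_iff'.2 fun s g hg i hi ↦ ?_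
    have := congrArg (e i *ᵥ ·) hg
    simp only [mulVec_sum, mulVec_smul, hw, smul_ite, smul_zero, Finset.sum_ite_eq,
      if_pos hi, mulVec_zero] at this
    exact (smul_eq_zero.1 this).resolve_right (hv i)
  simpa using hli.fintype_card_le_finrank

theorem exists_isIntersectionRep_of_commuting_idempotents {V m K : Type*} [Fintype V]
    [DecidableEq V] [Fintype m] [DecidableEq m] [Field K] {G : SimpleGraph V}
    {P : V → Matrix m m K} (hidem : ∀ i, P i * P i = P i) (hne : ∀ i, P i ≠ 0)
    (hcomm : ∀ i j, P i * P j = P j * P i)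
    (hadj : ∀ i j, i ≠ j → (G.Adj i j ↔ P i * P j ≠ 0)) :
    ∃ s : V → Set m, G.IsIntersectionRep s := by
  classical
  obtain ⟨q, hq, hPP⟩ := exists_completeOrthogonalIdempotents_mul_eq_sum hidem hcomm
  let A := {S : Finset V // q S ≠ 0}
  have hcard : Fintype.card A ≤ Fintype.card m :=
    card_le_of_orthogonalIdempotents (hq.1.embedding (Function.Embedding.subtype _))
      fun S ↦ S.2
  obtain ⟨φ⟩ := Function.Embedding.nonempty_of_card_le hcard
  have hmul : ∀ i j, P i * P j ≠ 0 ↔ ∃ S : A, i ∈ S.1 ∧ j ∈ S.1 := fun i j ↦ by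
    simp [hPP, hq.1.sum_eq_zero_iff, A, and_comm]
  suffices G.IsIntersectionRep fun i ↦ {S : A | i ∈ S.1} from ⟨_, this.image φ.injective⟩
  refine ⟨fun i ↦ ?_, fun i j hij ↦ ?_⟩
  · obtain ⟨S, hS, -⟩ := (hmul i i).1 (by rw [hidem]; exact hne i)
    exact ⟨S, hS⟩
  · rw [hadj i j hij, hmul, Set.not_disjoint_iff]
    rfl

theorem SimpleGraph.IsIntersectionRep.exists_commuting_projections {V m R : Type*}
    [Fintype m] [DecidableEq m] [Semiring R] [StarRing R] [Nontrivial R] {G : SimpleGraph V}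
    {s : V → Set m} (hs : G.IsIntersectionRep s) :
    ∃ P : V → Matrix m m R,
      (∀ i, (P i)ᴴ = P i) ∧ (∀ i, P i * P i = P i) ∧ (∀ i, P i ≠ 0) ∧
      (∀ i j, P i * P j = P j * P i) ∧
      ∀ i j, i ≠ j → (G.Adj i j ↔ P i * P j ≠ 0) := by
  have hmul : ∀ t u : Set m, diagonal (t.indicator (1 : m → R)) * diagonal (u.indicator 1) =
      diagonal ((t ∩ u).indicator 1) := fun t u ↦ by
    rw [diagonal_mul_diagonal, Set.inter_indicator_one]
    rfl
  have hzero : ∀ t : Set m, diagonal (t.indicator (1 : m → R)) = 0 ↔ t = ∅ := fun t ↦ by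
    simp [diagonal_eq_zero, funext_iff, Set.eq_empty_iff_forall_notMem]
  refine ⟨fun i ↦ diagonal ((s i).indicator 1), fun i ↦ ?_, fun i ↦ ?_, fun i ↦ ?_,
    fun i j ↦ ?_, fun i j hij ↦ ?_⟩
  · rw [diagonal_conjTranspose]
    congr 1
    ext r
    by_cases h : r ∈ s i <;> simp [h]
  · rw [hmul, Set.inter_self]
  · rw [Ne, hzero, ← Set.not_nonempty_iff_eq_empty, not_not]
    exact hs.1 i
  · rw [hmul, hmul, Set.inter_comm]
  · rw [hs.2 i j hij, hmul, Ne, hzero, Set.not_disjoint_iff_nonempty_inter,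
      Set.nonempty_iff_ne_empty]

theorem exists_commuting_projections_iff_isIntersectionRep {V m K : Type*} [Fintype V]
    [DecidableEq V] [Fintype m] [DecidableEq m] [Field K] [StarRing K] (G : SimpleGraph V) :
    (∃ P : V → Matrix m m K,
      (∀ i, (P i)ᴴ = P i) ∧ (∀ i, P i * P i = P i) ∧ (∀ i, P i ≠ 0) ∧
      (∀ i j, P i * P j = P j * P i) ∧
      ∀ i j, i ≠ j → (G.Adj i j ↔ P i * P j ≠ 0)) ↔
    ∃ s : V → Set m, G.IsIntersectionRep s :=
  ⟨fun ⟨_, _, hidem, hne, hcomm, hadj⟩ ↦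
    exists_isIntersectionRep_of_commuting_idempotents hidem hne hcomm hadj,
   fun ⟨_, hs⟩ ↦ hs.exists_commuting_projections⟩

/-- `cc(G)` equals the least `k` admitting pairwise commuting nonzero
orthogonal projections in `M_k` whose non-orthogonality graph is `G`. -/
theorem cc_eq_commuting_projections (n : ℕ) (G : SimpleGraph (Fin n)) :
    ccG G = sInf {k : ℕ | ∃ P : Fin n → Matrix (Fin k) (Fin k) ℂ,
      (∀ i, (P i)ᴴ = P i) ∧ (∀ i, P i * P i = P i) ∧ (∀ i, P i ≠ 0) ∧
      (∀ i j, P i * P j = P j * P i) ∧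
      ∀ i j, i ≠ j → (G.Adj i j ↔ P i * P j ≠ 0)} := by
  rw [ccG]
  congr 1
  ext k
  exact (exists_nonneg_vectors_iff_isIntersectionRep G).trans
    (exists_commuting_projections_iff_isIntersectionRep G).symm
end

section
/- Let G be a simple graph on vertex set {1,…,n} and let t = (t_1,…,t_n) be a tuple of positive integers. Define mpsd_t(G) as the least k ∈ ℕ for which there exist orthogonal projections P_1,…,P_n ∈ M_k with rank P_i = t_i for each i and, for all distinct i,j, P_iP_j ≠ 0 if and only if i and j are adjacent in G. Then mpsd_t(G) = min{rank A : A is a positive semidefinite complex block matrix [A_{ij}]_{i,j=1}^n with blocks A_{ij} of size t_i × t_j, such that for all i,j, A_{ij} ≠ 0 ⟺ (i = j or i,j adjacent in G), and rank(A_{ii}) = t_i for each i} = min{rank B : B is a positive semidefinite complex block matrix [B_{ij}]_{i,j=1}^n with blocks B_{ij} of size t_i × t_j, such that for all i,j, B_{ij} ≠ 0 ⟺ (i = j or i,j adjacent in G), and B_{ii} = I_{t_i} for each i}. -/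
/-!
A positive semidefinite block matrix `A` of rank `ρ` is a Gram matrix `Mᴴ M` with `M` having `ρ`
rows. When the diagonal blocks `Aᵢᵢ = Mᵢᴴ Mᵢ` have full rank, each column block `Mᵢ` has full
column rank, and the orthogonal projections `Pᵢ ∈ M_ρ` onto the column spaces of the `Mᵢ` have
rank `tᵢ` and satisfy `Pᵢ Pⱼ = 0 ↔ Mᵢᴴ Mⱼ = Aᵢⱼ = 0`. Conversely, a projection `Pᵢ ∈ M_k` of
rank `tᵢ` factors as `Vᵢ Vᵢᴴ` with `Vᵢᴴ Vᵢ = I`, and the Gram matrix `[Vᵢᴴ Vⱼ]` is positive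
semidefinite of rank at most `k`, has identity diagonal blocks and the zero pattern of the `Pᵢ Pⱼ`.
Identity blocks have full rank, so the three minima agree.
-/

open Matrix
open scoped ComplexOrder

/-- `mpsd_t(G)`: the least `k` admitting orthogonal projections `Pᵢ ∈ M_k` of rank `tᵢ`
whose non-orthogonality graph is `G`. -/
noncomputable def mpsd {n : ℕ} (G : SimpleGraph (Fin n)) (t : Fin n → ℕ) : ℕ :=
  sInf {k : ℕ | ∃ P : Fin n → Matrix (Fin k) (Fin k) ℂ,
    (∀ i, (P i)ᴴ = P i) ∧ (∀ i, P i * P i = P i) ∧ (∀ i, (P i).rank = t i) ∧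
    ∀ i j, i ≠ j → (P i * P j ≠ 0 ↔ G.Adj i j)}

theorem csInf_eq_csInf_of_subset_of_forall_exists_le {α : Type*}
    [ConditionallyCompleteLattice α] [OrderBot α] {S T : Set α} (hTS : T ⊆ S)
    (h : ∀ k ∈ S, ∃ ρ ∈ T, ρ ≤ k) : sInf S = sInf T := by
  rcases S.eq_empty_or_nonempty with rfl | hS
  · rw [Set.subset_empty_iff.1 hTS]
  obtain ⟨ρ, hρ, -⟩ := h _ hS.some_mem
  refine le_antisymm (csInf_le_csInf (OrderBot.bddBelow S) ⟨ρ, hρ⟩ hTS)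
    (le_csInf hS fun k hk => ?_)
  obtain ⟨ρ, hρ, hle⟩ := h k hk
  exact (csInf_le (OrderBot.bddBelow T) hρ).trans hle

theorem csInf_eq_csInf_and_csInf_eq_csInf_of_cycle {α : Type*}
    [ConditionallyCompleteLattice α] [OrderBot α] {S T U : Set α} (hUT : U ⊆ T) (hTS : T ⊆ S)
    (h : ∀ k ∈ S, ∃ ρ ∈ U, ρ ≤ k) : sInf S = sInf T ∧ sInf S = sInf U :=
  ⟨csInf_eq_csInf_of_subset_of_forall_exists_le hTS fun k hk =>
      (h k hk).imp fun _ hρ => ⟨hUT hρ.1, hρ.2⟩,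
    csInf_eq_csInf_of_subset_of_forall_exists_le (hUT.trans hTS) h⟩

theorem SimpleGraph.forall_iff_eq_or_adj_iff_forall_ne {V : Type*} (G : SimpleGraph V)
    {p : V → V → Prop} (hp : ∀ i, p i i) :
    (∀ i j, p i j ↔ i = j ∨ G.Adj i j) ↔ ∀ i j, i ≠ j → (p i j ↔ G.Adj i j) := by
  refine ⟨fun h i j hij => by simpa [hij] using h i j, fun h i j => ?_⟩
  rcases eq_or_ne i j with rfl | hij
  · simpa using hp i
  · simpa [hij] using h i j hij

namespace Matrix

variable {l m n R 𝕜 : Type*} [RCLike 𝕜]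

theorem isUnit_of_rank_eq_card {K : Type*} [Field K] [Fintype n] [DecidableEq n]
    {A : Matrix n n K} (h : A.rank = Fintype.card n) : IsUnit A := by
  have hrange : LinearMap.range A.mulVecLin = ⊤ :=
    Submodule.eq_top_of_finrank_eq (by rwa [Module.finrank_pi])
  exact mulVec_surjective_iff_isUnit.1 (LinearMap.range_eq_top.1 hrange)

theorem conjTranspose_mul_self_submatrix [Semiring R] [Star R] [Fintype m] {l' : Type*}
    (M : Matrix m n R) (f : l → n) (g : l' → n) :
    (Mᴴ * M).submatrix f g = (M.submatrix id f)ᴴ * M.submatrix id g := by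
  rw [submatrix_mul _ _ _ id _ Function.bijective_id, conjTranspose_submatrix]

theorem conjTranspose_submatrix_mul_submatrix_of_row_eq_zero [Semiring R] [StarRing R]
    [Fintype l] [Fintype m] {p : m → Prop} (e : l ≃ {i // p i}) (F : Matrix m n R)
    (hF : ∀ i, ¬ p i → F i = 0) :
    (F.submatrix (fun r => e r) id)ᴴ * F.submatrix (fun r => e r) id = Fᴴ * F := by
  classical
  ext x y
  simp only [mul_apply, conjTranspose_apply, submatrix_apply, id]
  have hzero : ∑ i : {i // ¬ p i}, star (F i x) * F i y = 0 :=
    Finset.sum_eq_zero fun i _ => by simp [hF i i.2]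
  rw [e.sum_comp (fun i : {i // p i} => star (F i x) * F i y),
    ← Fintype.sum_subtype_add_sum_subtype p, hzero, add_zero]

theorem PosSemidef.exists_conjTranspose_mul_self_eq [Fintype n] [DecidableEq n]
    {A : Matrix n n 𝕜} (hA : A.PosSemidef) {r : ℕ} (hr : A.rank = r) :
    ∃ M : Matrix (Fin r) n 𝕜, Mᴴ * M = A := by
  subst hr
  let U : Matrix n n 𝕜 := hA.1.eigenvectorUnitary
  let F : Matrix n n 𝕜 := diagonal (fun i => (√(hA.1.eigenvalues i) : 𝕜)) * star U
  have hFA : Fᴴ * F = A := by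
    conv_rhs => rw [hA.1.spectral_theorem, Unitary.conjStarAlgAut_apply]
    simp only [F, U, conjTranspose_mul, diagonal_conjTranspose, star_eq_conjTranspose,
      conjTranspose_conjTranspose, mul_assoc]
    rw [← mul_assoc (diagonal _), diagonal_mul_diagonal]
    congr 3
    ext i
    simp [← RCLike.ofReal_mul, Real.mul_self_sqrt (hA.eigenvalues_nonneg i)]
  have hF : ∀ i, ¬ hA.1.eigenvalues i ≠ 0 → F i = 0 := fun i hi => by
    ext j
    simp [F, not_not.1 hi]
  let e := (Fintype.equivFinOfCardEq hA.1.rank_eq_card_non_zero_eigs.symm).symm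
  exact ⟨F.submatrix (fun r => e r) id, by
    rw [conjTranspose_submatrix_mul_submatrix_of_row_eq_zero e F hF, hFA]⟩

theorem exists_conjTranspose_mul_self_eq_one_and_mul_conjTranspose_eq [Fintype m]
    [DecidableEq m] {P : Matrix m m 𝕜} (hP : Pᴴ = P) (hPP : P * P = P) {t : ℕ}
    (hr : P.rank = t) : ∃ V : Matrix m (Fin t) 𝕜, Vᴴ * V = 1 ∧ V * Vᴴ = P := by
  have hP_psd : P.PosSemidef := by
    simpa only [hP, hPP] using posSemidef_conjTranspose_mul_self P
  obtain ⟨M, hM⟩ := hP_psd.exists_conjTranspose_mul_self_eq hr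
  refine ⟨Mᴴ, ?_, by rwa [conjTranspose_conjTranspose]⟩
  rw [conjTranspose_conjTranspose]
  have hunit : IsUnit (M * Mᴴ) := isUnit_of_rank_eq_card <| by
    rw [rank_self_mul_conjTranspose, ← rank_conjTranspose_mul_self, hM, hr, Fintype.card_fin]
  -- `Q = M Mᴴ` satisfies `Q³ = M P² Mᴴ = M P Mᴴ = Q²`, and `Q` is invertible.
  have hcube : (M * Mᴴ) * (M * Mᴴ) * (M * Mᴴ) = (M * Mᴴ) * (M * Mᴴ) * 1 := by
    calc (M * Mᴴ) * (M * Mᴴ) * (M * Mᴴ) = M * ((Mᴴ * M) * (Mᴴ * M)) * Mᴴ := by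
          simp only [Matrix.mul_assoc]
      _ = (M * Mᴴ) * (M * Mᴴ) * 1 := by
          rw [hM, hPP, ← hM]
          simp only [Matrix.mul_assoc, mul_one]
  exact (hunit.mul hunit).mul_left_cancel hcube

/-- The orthogonal projection onto the column space of `V` when `Vᴴ * V` is invertible
(junk otherwise). -/
noncomputable def colSpaceProj [Fintype m] [Fintype n] [DecidableEq n] (V : Matrix m n 𝕜) :
    Matrix m m 𝕜 :=
  V * (Vᴴ * V)⁻¹ * Vᴴ

section colSpaceProj

variable [Fintype m] [Fintype n] [DecidableEq n] {V : Matrix m n 𝕜}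

theorem conjTranspose_colSpaceProj : (colSpaceProj V)ᴴ = colSpaceProj V := by
  rw [colSpaceProj, conjTranspose_mul, conjTranspose_mul, conjTranspose_nonsing_inv,
    conjTranspose_mul, conjTranspose_conjTranspose, Matrix.mul_assoc]

theorem colSpaceProj_mul_self (hV : IsUnit (Vᴴ * V)) : colSpaceProj V * V = V := by
  rw [colSpaceProj, Matrix.mul_assoc _ Vᴴ, Matrix.mul_assoc V,
    nonsing_inv_mul _ ((isUnit_iff_isUnit_det _).1 hV), Matrix.mul_one]

theorem conjTranspose_mul_colSpaceProj (hV : IsUnit (Vᴴ * V)) : Vᴴ * colSpaceProj V = Vᴴ := by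
  rw [colSpaceProj, ← Matrix.mul_assoc, ← Matrix.mul_assoc,
    mul_nonsing_inv _ ((isUnit_iff_isUnit_det _).1 hV), Matrix.one_mul]

theorem colSpaceProj_mul_colSpaceProj (hV : IsUnit (Vᴴ * V)) :
    colSpaceProj V * colSpaceProj V = colSpaceProj V := by
  nth_rewrite 2 [colSpaceProj]
  rw [← Matrix.mul_assoc, ← Matrix.mul_assoc, colSpaceProj_mul_self hV, colSpaceProj]

theorem rank_colSpaceProj (hV : IsUnit (Vᴴ * V)) : (colSpaceProj V).rank = Fintype.card n := by
  refine le_antisymm ((rank_mul_le_left _ _).trans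
    ((rank_mul_le_left _ _).trans V.rank_le_card_width)) ?_
  calc Fintype.card n = (Vᴴ * (colSpaceProj V * V)).rank := by
        rw [colSpaceProj_mul_self hV, rank_of_isUnit _ hV]
    _ ≤ (colSpaceProj V).rank := (rank_mul_le_right _ _).trans (rank_mul_le_left _ _)

end colSpaceProj

theorem mul_eq_zero_iff_conjTranspose_mul_eq_zero [Semiring R] [Star R] {a b : Type*}
    [Fintype m] [Fintype a] [Fintype b] {P Q : Matrix m m R} {V : Matrix m a R}
    {W : Matrix m b R} {X : Matrix a a R} {Y : Matrix b b R} (hP : P = V * X * Vᴴ)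
    (hVP : Vᴴ * P = Vᴴ) (hQ : Q = W * Y * Wᴴ) (hQW : Q * W = W) :
    P * Q = 0 ↔ Vᴴ * W = 0 := by
  constructor
  · intro h
    rw [← hVP, ← hQW, Matrix.mul_assoc, ← Matrix.mul_assoc P, h, Matrix.zero_mul,
      Matrix.mul_zero]
  · intro h
    rw [hP, hQ, Matrix.mul_assoc, ← Matrix.mul_assoc Vᴴ, ← Matrix.mul_assoc Vᴴ, h]
    simp only [Matrix.zero_mul, Matrix.mul_zero]

variable {ι : Type*} [Fintype ι] {t : ι → ℕ}

theorem PosSemidef.exists_projections_of_rank_diag_block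
    {A : Matrix (Σ i, Fin (t i)) (Σ i, Fin (t i)) 𝕜} (hA : A.PosSemidef)
    (hdiag : ∀ i, (A.submatrix (Sigma.mk i) (Sigma.mk i)).rank = t i) {r : ℕ}
    (hr : A.rank = r) :
    ∃ P : ι → Matrix (Fin r) (Fin r) 𝕜, (∀ i, (P i)ᴴ = P i) ∧ (∀ i, P i * P i = P i) ∧
      (∀ i, (P i).rank = t i) ∧
      ∀ i j, P i * P j = 0 ↔ A.submatrix (Sigma.mk i) (Sigma.mk j) = 0 := by
  classical
  obtain ⟨M, rfl⟩ := hA.exists_conjTranspose_mul_self_eq hr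
  have hunit : ∀ i, IsUnit ((M.submatrix id (Sigma.mk i))ᴴ * M.submatrix id (Sigma.mk i)) :=
    fun i => isUnit_of_rank_eq_card <| by
      rw [← conjTranspose_mul_self_submatrix, hdiag, Fintype.card_fin]
  refine ⟨fun i => colSpaceProj (M.submatrix id (Sigma.mk i)),
    fun i => conjTranspose_colSpaceProj, fun i => colSpaceProj_mul_colSpaceProj (hunit i),
    fun i => (rank_colSpaceProj (hunit i)).trans (Fintype.card_fin _), fun i j => ?_⟩
  rw [conjTranspose_mul_self_submatrix]
  exact mul_eq_zero_iff_conjTranspose_mul_eq_zero rfl (conjTranspose_mul_colSpaceProj (hunit i))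
    rfl (colSpaceProj_mul_self (hunit j))

theorem exists_posSemidef_of_projections [Fintype m] [DecidableEq m] {P : ι → Matrix m m 𝕜}
    (hP : ∀ i, (P i)ᴴ = P i) (hPP : ∀ i, P i * P i = P i) (hr : ∀ i, (P i).rank = t i) :
    ∃ B : Matrix (Σ i, Fin (t i)) (Σ i, Fin (t i)) 𝕜, B.PosSemidef ∧
      B.rank ≤ Fintype.card m ∧ (∀ i, B.submatrix (Sigma.mk i) (Sigma.mk i) = 1) ∧
      ∀ i j, B.submatrix (Sigma.mk i) (Sigma.mk j) = 0 ↔ P i * P j = 0 := by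
  choose V hV hVP using fun i =>
    exists_conjTranspose_mul_self_eq_one_and_mul_conjTranspose_eq (hP i) (hPP i) (hr i)
  let W : Matrix m (Σ i, Fin (t i)) 𝕜 := Matrix.of fun x p => V p.1 x p.2
  have hPV : ∀ i, P i * V i = V i := fun i => by
    rw [← hVP, Matrix.mul_assoc, hV, Matrix.mul_one]
  have hVP' : ∀ i, (V i)ᴴ * P i = (V i)ᴴ := fun i => by
    rw [← hVP, ← Matrix.mul_assoc, hV, Matrix.one_mul]
  have hPVV : ∀ i, P i = V i * (1 : Matrix (Fin (t i)) (Fin (t i)) 𝕜) * (V i)ᴴ := fun i => by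
    rw [Matrix.mul_one, hVP]
  refine ⟨Wᴴ * W, posSemidef_conjTranspose_mul_self W, ?_, fun i => ?_, fun i j => ?_⟩
  · rw [rank_conjTranspose_mul_self]
    exact W.rank_le_card_height
  · exact (conjTranspose_mul_self_submatrix W _ _).trans (hV i)
  · rw [conjTranspose_mul_self_submatrix]
    exact (mul_eq_zero_iff_conjTranspose_mul_eq_zero (hPVV i) (hVP' i) (hPVV j) (hPV j)).symm

end Matrix

/-- `mpsd_t(G)` is the minimum rank of a PSD block matrix whose blocks are
supported exactly on the (non-strict) adjacency pattern of `G`, with full-rank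
(resp. identity) diagonal blocks. -/
theorem mpsd_eq_minrank (n : ℕ) (G : SimpleGraph (Fin n)) (t : Fin n → ℕ)
    (ht : ∀ i, 0 < t i) :
    mpsd G t =
      sInf {ρ : ℕ | ∃ A : Matrix ((i : Fin n) × Fin (t i)) ((i : Fin n) × Fin (t i)) ℂ,
        A.PosSemidef ∧
        (∀ i j : Fin n, (Matrix.of fun (a : Fin (t i)) (b : Fin (t j)) =>
            A ⟨i, a⟩ ⟨j, b⟩) ≠ 0 ↔ (i = j ∨ G.Adj i j)) ∧
        (∀ i : Fin n, (Matrix.of fun a b : Fin (t i) => A ⟨i, a⟩ ⟨i, b⟩).rank = t i) ∧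
        A.rank = ρ} ∧
    mpsd G t =
      sInf {ρ : ℕ | ∃ B : Matrix ((i : Fin n) × Fin (t i)) ((i : Fin n) × Fin (t i)) ℂ,
        B.PosSemidef ∧
        (∀ i j : Fin n, (Matrix.of fun (a : Fin (t i)) (b : Fin (t j)) =>
            B ⟨i, a⟩ ⟨j, b⟩) ≠ 0 ↔ (i = j ∨ G.Adj i j)) ∧
        (∀ i : Fin n, (Matrix.of fun a b : Fin (t i) => B ⟨i, a⟩ ⟨i, b⟩) = 1) ∧
        B.rank = ρ} := by
  unfold mpsd
  refine csInf_eq_csInf_and_csInf_eq_csInf_of_cycle ?_ ?_ ?_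
  · rintro ρ ⟨B, hB, hpat, hdiag, hρ⟩
    exact ⟨B, hB, hpat, fun i => by rw [hdiag, rank_one, Fintype.card_fin], hρ⟩
  · rintro ρ ⟨A, hA, hpat, hdiag, hρ⟩
    obtain ⟨P, hP, hPP, hr, hPA⟩ := hA.exists_projections_of_rank_diag_block hdiag hρ
    have hApat :=
      (G.forall_iff_eq_or_adj_iff_forall_ne fun i => (hpat i i).2 (Or.inl rfl)).1 hpat
    exact ⟨P, hP, hPP, hr, fun i j hij => (hPA i j).not.trans (hApat i j hij)⟩
  · rintro k ⟨P, hP, hPP, hr, hPG⟩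
    obtain ⟨B, hB, hBk, hdiag, hBP⟩ := exists_posSemidef_of_projections hP hPP hr
    have hdiag_ne : ∀ i, B.submatrix (Sigma.mk i) (Sigma.mk i) ≠ 0 := fun i => by
      have : Nonempty (Fin (t i)) := Fin.pos_iff_nonempty.1 (ht i)
      rw [hdiag]
      exact one_ne_zero
    refine ⟨B.rank, ⟨B, hB, ?_, hdiag, rfl⟩, hBk.trans_eq (Fintype.card_fin k)⟩
    exact (G.forall_iff_eq_or_adj_iff_forall_ne hdiag_ne).2
      fun i j hij => (hBP i j).not.trans (hPG i j hij)
end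

section
/- For any simple graph G on vertex set {1,…,n}, the quantum intersection number of G — the least k ∈ ℕ for which there exist nonzero orthogonal projections P_1,…,P_n ∈ M_k (P_i = P_iᴴ = P_i², P_i ≠ 0) such that for all distinct i,j, P_iP_j ≠ 0 if and only if i and j are adjacent in G — is equal to γ(G), the least k ∈ ℕ for which there exist nonzero vectors x_1,…,x_n ∈ ℂ^k such that for all distinct i,j, ⟨x_j, x_i⟩ ≠ 0 if and only if i and j are adjacent in G. -/
open Matrix
open scoped ComplexOrder

/-- Graph parameter `γ(G)`: the least `k` for which `G` is the non-orthogonality graph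
of a tuple of nonzero vectors in `ℂ^k`. -/
noncomputable def gammaG {n : ℕ} (G : SimpleGraph (Fin n)) : ℕ :=
  sInf {k | ∃ x : Fin n → Fin k → ℂ, (∀ i, x i ≠ 0) ∧
    ∀ i j, i ≠ j → (G.Adj i j ↔ ∑ r, star (x i r) * x j r ≠ 0)}

/-! Nonzero vectors give rank-one projections `P_x = ‖x‖⁻² x xᴴ`, and
`P_x P_y = ‖x‖⁻² ‖y‖⁻² ⟨x, y⟩ x yᴴ` vanishes exactly when `⟨x, y⟩ = 0`.

Conversely, given nonzero orthogonal projections `P_i`, choose `x_i ∈ range P_i` one index at a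
time. If `P_i P_j = 0` then `⟨x_i, x_j⟩ = ⟨x_i, P_i P_j x_j⟩ = 0` automatically. The new vector
`x_i = P_i u` must avoid finitely many proper subspaces of `u`'s: the kernels of the matrices
`P_j P_i ≠ 0` (so that `P_j x_i ≠ 0` later on), and the kernels of the functionals
`u ↦ ⟨x_j, P_i u⟩ = ⟨P_i x_j, u⟩` for earlier `x_j` with `P_i P_j ≠ 0`, which are nonzero because
`P_i x_j ≠ 0` was ensured when `x_j` was chosen. Over an infinite field finitely many proper
subspaces never cover the whole space. -/

theorem IsSelfAdjoint.mul_eq_zero_comm {R : Type*} [NonUnitalNonAssocSemiring R] [StarRing R]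
    {p q : R} (hp : IsSelfAdjoint p) (hq : IsSelfAdjoint q) : p * q = 0 ↔ q * p = 0 := by
  rw [← star_eq_zero, star_mul, hp.star_eq, hq.star_eq]

theorem Submodule.exists_forall_notMem_of_ne_top {K V ι : Type*} [DivisionRing K] [Infinite K]
    [AddCommGroup V] [Module K V] [Finite ι] {p : ι → Submodule K V} (hp : ∀ i, p i ≠ ⊤) :
    ∃ v, ∀ i, v ∉ p i := by
  by_contra! h
  obtain ⟨i, hi⟩ := Subspace.exists_eq_top_of_iUnion_eq_univ
    (Set.eq_univ_of_forall fun v => Set.mem_iUnion.2 (h v))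
  exact hp i hi

theorem Matrix.exists_forall_mulVec_ne_zero_and_dotProduct_ne_zero {K m n ι κ : Type*} [Field K]
    [Infinite K] [Fintype n] [Finite ι] [Finite κ] {A : ι → Matrix m n K}
    {y : κ → n → K} (hA : ∀ i, A i ≠ 0) (hy : ∀ j, y j ≠ 0) :
    ∃ v, (∀ i, A i *ᵥ v ≠ 0) ∧ ∀ j, y j ⬝ᵥ v ≠ 0 := by
  classical
  obtain ⟨v, hv⟩ := Submodule.exists_forall_notMem_of_ne_top
    (p := Sum.elim (fun i => LinearMap.ker (toLin' (A i)))
      (fun j => LinearMap.ker (dotProductEquiv K n (y j))))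
    (by
      rintro (i | j) <;> simp only [Sum.elim_inl, Sum.elim_inr, ne_eq, LinearMap.ker_eq_top]
      · simpa using hA i
      · simpa using hy j)
  exact ⟨v, fun i => by simpa using hv (.inl i), fun j => by simpa using hv (.inr j)⟩

theorem IsSelfAdjoint.star_mulVec_dotProduct {R m : Type*} [CommSemiring R] [StarRing R]
    [Fintype m] {P : Matrix m m R} (hP : IsSelfAdjoint P) (x y : m → R) :
    star (P *ᵥ x) ⬝ᵥ y = star x ⬝ᵥ (P *ᵥ y) := by
  rw [star_mulVec, ← star_eq_conjTranspose, hP.star_eq, dotProduct_mulVec]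

section GenericRangeFamily

variable {𝕜 ι m : Type*} [RCLike 𝕜] [Fintype m] {P : ι → Matrix m m 𝕜}
  {s : Finset ι} {x : ι → m → 𝕜}

structure IsGenericRangeFamily (P : ι → Matrix m m 𝕜) (s : Finset ι) (x : ι → m → 𝕜) : Prop where
  mulVec_self : ∀ i, P i *ᵥ x i = x i
  mulVec_ne_zero : ∀ i ∈ s, ∀ j, P j * P i ≠ 0 → P j *ᵥ x i ≠ 0
  dotProduct_ne_zero : ∀ i ∈ s, ∀ j ∈ s, P i * P j ≠ 0 → star (x i) ⬝ᵥ x j ≠ 0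

theorem IsGenericRangeFamily.empty : IsGenericRangeFamily P ∅ 0 where
  mulVec_self _ := mulVec_zero _
  mulVec_ne_zero := by simp
  dotProduct_ne_zero := by simp

theorem IsGenericRangeFamily.exists_generic_vector [Finite ι] (hP : ∀ i, IsStarProjection (P i))
    (h : IsGenericRangeFamily P s x) (i : ι) :
    ∃ u, (∀ j, P j * P i ≠ 0 → (P j * P i) *ᵥ u ≠ 0) ∧
      ∀ j ∈ s, P i * P j ≠ 0 → star (x j) ⬝ᵥ (P i *ᵥ u) ≠ 0 := by
  obtain ⟨u, hA, hy⟩ := exists_forall_mulVec_ne_zero_and_dotProduct_ne_zero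
    (A := fun j : {j // P j * P i ≠ 0} => P j * P i)
    (y := fun j : {j // j ∈ s ∧ P i * P j ≠ 0} => star (P i *ᵥ x j)) (fun j => j.2)
    (fun j => star_ne_zero.2 (h.mulVec_ne_zero j j.2.1 i j.2.2))
  refine ⟨u, fun j hj => hA ⟨j, hj⟩, fun j hj hij => ?_⟩
  rw [← (hP i).isSelfAdjoint.star_mulVec_dotProduct]
  exact hy ⟨j, hj, hij⟩

theorem IsGenericRangeFamily.exists_insert [Finite ι] [DecidableEq ι]
    (hP : ∀ i, IsStarProjection (P i)) (h : IsGenericRangeFamily P s x) {i : ι} (hi : i ∉ s) :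
    ∃ x', IsGenericRangeFamily P (insert i s) x' := by
  obtain ⟨u, hker, hdot⟩ := h.exists_generic_vector hP i
  set x' := Function.update x i (P i *ᵥ u)
  have hx'i : x' i = P i *ᵥ u := Function.update_self _ _ _
  have hx'ne : ∀ j ≠ i, x' j = x j := fun j hj => Function.update_of_ne hj _ _
  have hx'j : ∀ j ∈ s, x' j = x j := fun j hj => hx'ne j (ne_of_mem_of_not_mem hj hi)
  have hmul_comm : ∀ j k, P j * P k ≠ 0 ↔ P k * P j ≠ 0 := fun j k =>
    ((hP j).isSelfAdjoint.mul_eq_zero_comm (hP k).isSelfAdjoint).not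
  have hnew : ∀ j ∈ insert i s, P j * P i ≠ 0 → star (x' j) ⬝ᵥ x' i ≠ 0 := by
    intro j hj hji
    rcases Finset.mem_insert.1 hj with rfl | hj
    · rw [hx'i, Ne, dotProduct_star_self_eq_zero]
      simpa only [mulVec_mulVec, (hP j).isIdempotentElem.eq] using hker j hji
    · rw [hx'i, hx'j j hj]
      exact hdot j hj ((hmul_comm j i).1 hji)
  refine ⟨x', ⟨fun j => ?_, fun j hj k hkj => ?_, fun j hj k hk hjk => ?_⟩⟩
  · by_cases hji : j = i
    · rw [hji, hx'i, mulVec_mulVec, (hP i).isIdempotentElem.eq]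
    · rw [hx'ne j hji]
      exact h.mulVec_self j
  · rcases Finset.mem_insert.1 hj with rfl | hj
    · rw [hx'i, mulVec_mulVec]
      exact hker k hkj
    · rw [hx'j j hj]
      exact h.mulVec_ne_zero j hj k hkj
  · rcases Finset.mem_insert.1 hk with rfl | hks
    · exact hnew j hj hjk
    rcases Finset.mem_insert.1 hj with rfl | hjs
    · rw [star_dotProduct, star_ne_zero]
      exact hnew k hk ((hmul_comm _ _).1 hjk)
    · rw [hx'j j hjs, hx'j k hks]
      exact h.dotProduct_ne_zero j hjs k hks hjk

theorem exists_isGenericRangeFamily [Finite ι] [DecidableEq ι]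
    (hP : ∀ i, IsStarProjection (P i)) (s : Finset ι) : ∃ x, IsGenericRangeFamily P s x := by
  induction s using Finset.induction_on with
  | empty => exact ⟨0, .empty⟩
  | insert i s hi ih =>
    obtain ⟨x, hx⟩ := ih
    exact hx.exists_insert hP hi

theorem exists_dotProduct_ne_zero_iff_mul_ne_zero [Fintype ι] (hP : ∀ i, IsStarProjection (P i))
    (hP0 : ∀ i, P i ≠ 0) :
    ∃ x : ι → m → 𝕜, (∀ i, x i ≠ 0) ∧ ∀ i j, star (x i) ⬝ᵥ x j ≠ 0 ↔ P i * P j ≠ 0 := by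
  classical
  obtain ⟨x, hx⟩ := exists_isGenericRangeFamily hP Finset.univ
  refine ⟨x, fun i hi => ?_, fun i j => ⟨fun hdot hPij => hdot ?_,
    hx.dotProduct_ne_zero i (Finset.mem_univ i) j (Finset.mem_univ j)⟩⟩
  · have hPi : P i * P i ≠ 0 := by rw [(hP i).isIdempotentElem.eq]; exact hP0 i
    exact hx.mulVec_ne_zero i (Finset.mem_univ i) i hPi (by rw [hi, mulVec_zero])
  · rw [← hx.mulVec_self i, ← hx.mulVec_self j, (hP i).isSelfAdjoint.star_mulVec_dotProduct,
      mulVec_mulVec, hPij, zero_mulVec, dotProduct_zero]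

end GenericRangeFamily

section RankOne

variable {𝕜 m : Type*} [RCLike 𝕜] [Fintype m]

noncomputable def rankOneProj (x : m → 𝕜) : Matrix m m 𝕜 :=
  (star x ⬝ᵥ x)⁻¹ • vecMulVec x (star x)

theorem rankOneProj_mul_rankOneProj (x y : m → 𝕜) :
    rankOneProj x * rankOneProj y =
      ((star x ⬝ᵥ x)⁻¹ * (star x ⬝ᵥ y) * (star y ⬝ᵥ y)⁻¹) • vecMulVec x (star y) := by
  simp only [rankOneProj, Matrix.smul_mul, Matrix.mul_smul, vecMulVec_mul_vecMulVec,
    vecMulVec_smul, smul_smul]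
  ring_nf

variable {x y : m → 𝕜}

theorem rankOneProj_mul_ne_zero_iff (hx : x ≠ 0) (hy : y ≠ 0) :
    rankOneProj x * rankOneProj y ≠ 0 ↔ star x ⬝ᵥ y ≠ 0 := by
  have hx' := dotProduct_star_self_eq_zero.not.2 hx
  have hy' := dotProduct_star_self_eq_zero.not.2 hy
  simp [rankOneProj_mul_rankOneProj, smul_eq_zero, hx, hy, hx', hy']

theorem isStarProjection_rankOneProj (hx : x ≠ 0) : IsStarProjection (rankOneProj x) where
  isIdempotentElem := by
    have hx' := dotProduct_star_self_eq_zero.not.2 hx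
    rw [IsIdempotentElem, rankOneProj_mul_rankOneProj, rankOneProj, inv_mul_cancel₀ hx', one_mul]
  isSelfAdjoint := by
    rw [IsSelfAdjoint, rankOneProj, star_smul, star_eq_conjTranspose, conjTranspose_vecMulVec,
      star_star, star_inv₀, ← star_dotProduct]

theorem rankOneProj_ne_zero (hx : x ≠ 0) : rankOneProj x ≠ 0 := by
  rw [← (isStarProjection_rankOneProj hx).isIdempotentElem.eq, rankOneProj_mul_ne_zero_iff hx hx]
  exact dotProduct_star_self_eq_zero.not.2 hx

end RankOne

/-- the quantum intersection number of `G` (least `k` admitting nonzero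
projections in `M_k` with non-orthogonality graph `G`) equals `γ(G)`. -/
theorem qinter_eq_gamma (n : ℕ) (G : SimpleGraph (Fin n)) :
    sInf {k : ℕ | ∃ P : Fin n → Matrix (Fin k) (Fin k) ℂ,
      (∀ i, (P i)ᴴ = P i) ∧ (∀ i, P i * P i = P i) ∧ (∀ i, P i ≠ 0) ∧
      ∀ i j, i ≠ j → (G.Adj i j ↔ P i * P j ≠ 0)} = gammaG G := by
  rw [gammaG]
  congr 1
  ext k
  constructor
  · rintro ⟨P, hH, hI, hP0, hG⟩
    obtain ⟨x, hx0, hx⟩ := exists_dotProduct_ne_zero_iff_mul_ne_zero (fun i => ⟨hI i, hH i⟩) hP0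
    exact ⟨x, hx0, fun i j hij => (hG i j hij).trans (hx i j).symm⟩
  · rintro ⟨x, hx0, hG⟩
    have hP i := isStarProjection_rankOneProj (hx0 i)
    exact ⟨fun i => rankOneProj (x i), fun i => (hP i).isSelfAdjoint,
      fun i => (hP i).isIdempotentElem, fun i => rankOneProj_ne_zero (hx0 i),
      fun i j hij => (hG i j hij).trans (rankOneProj_mul_ne_zero_iff (hx0 i) (hx0 j)).symm⟩
end

section
/- For every operator system S ⊆ M_n, the quantum complexity satisfies γ(S) ≤ 2n². -/
open Matrix
open scoped ComplexOrder

/-- A tuple of Kraus operators for a quantum channel `M_ι → M_k`: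
`r` matrices of size `k × ι` with `∑ Aᵢᴴ Aᵢ = I`. -/
noncomputable def IsKraus {ι : Type*} [Fintype ι] [DecidableEq ι] {k r : ℕ}
    (A : Fin r → Matrix (Fin k) ι ℂ) : Prop :=
  ∑ i, (A i)ᴴ * A i = 1

/-- The non-commutative confusability graph `S_Φ = span{Aᵢᴴ Aⱼ}` of a channel
given by Kraus operators. -/
noncomputable def confGraph {ι : Type*} [Fintype ι] {k r : ℕ}
    (A : Fin r → Matrix (Fin k) ι ℂ) : Submodule ℂ (Matrix ι ι ℂ) :=
  Submodule.span ℂ {B | ∃ i j, B = (A i)ᴴ * A j}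

/-- An operator system in `M_ι`: a subspace containing `I` and closed under `ᴴ`. -/
def IsOperatorSystem {ι : Type*} [Fintype ι] [DecidableEq ι]
    (S : Submodule ℂ (Matrix ι ι ℂ)) : Prop :=
  (1 : Matrix ι ι ℂ) ∈ S ∧ ∀ A ∈ S, Aᴴ ∈ S

/-- Quantum complexity `γ(S)`: the least `k` such that `S = S_Φ` for some
quantum channel `Φ : M_ι → M_k`. -/
noncomputable def gammaOS {ι : Type*} [Fintype ι] [DecidableEq ι]
    (S : Submodule ℂ (Matrix ι ι ℂ)) : ℕ :=
  sInf {k | ∃ r : ℕ, ∃ A : Fin r → Matrix (Fin k) ι ℂ, IsKraus A ∧ confGraph A = S}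

/-! Pick `n²` matrices `B i j` spanning `S` and form the Hermitian `2 × 2` block matrix
`K = [[0, B], [Bᴴ, 0]]` of `n × n` blocks, all of which lie in `S`. For large `s`, the matrix
`G = t (s I + K)` is positive semidefinite, and choosing `t = 1 / (2 n s)` makes its diagonal blocks
sum to `I`. Writing `G = Rᴴ R`, the `2n` block columns `A_u` of `R` satisfy `A_uᴴ A_v = G_uv`,
so they are Kraus operators into `M_{2n²}` whose confusability graph is the span of the blocks
`G_uv`, that is, `S`. -/

lemma Submodule.exists_span_range_eq {K V T : Type*} [DivisionRing K] [AddCommGroup V]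
    [Module K V] {b : T → V} (hb : span K (Set.range b) = ⊤) (S : Submodule K V) :
    ∃ f : T → V, span K (Set.range f) = S := by
  obtain ⟨g, hg⟩ := S.subtype.exists_leftInverse_of_injective S.ker_subtype
  have hg_range : LinearMap.range g = ⊤ := LinearMap.range_eq_top.mpr
    (Function.LeftInverse.surjective fun x => LinearMap.congr_fun hg x)
  refine ⟨(S.subtype ∘ₗ g) ∘ b, ?_⟩
  rw [Set.range_comp, ← map_span, hb, map_top, LinearMap.range_comp, hg_range, map_subtype_top]

open scoped MatrixOrder Matrix.Norms.L2Operator in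
lemma Matrix.IsHermitian.exists_posSemidef_smul_one_add {m : Type*} [Fintype m] [DecidableEq m]
    {H : Matrix m m ℂ} (hH : H.IsHermitian) : ∃ s : ℝ, 0 < s ∧ (s • 1 + H).PosSemidef := by
  refine ⟨‖H‖ + 1, by positivity, ?_⟩
  have h := hH.isSelfAdjoint.neg_algebraMap_norm_le_self
  rw [neg_le_iff_add_nonneg', Algebra.algebraMap_eq_smul_one] at h
  rw [add_smul, one_smul, add_right_comm]
  exact h.posSemidef.add PosSemidef.one

open scoped MatrixOrder in
lemma Matrix.exists_conjTranspose_mul_eq_of_posSemidef_comp {𝕜 κ ι : Type*} [RCLike 𝕜]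
    [Fintype κ] [Fintype ι] {G : Matrix κ κ (Matrix ι ι 𝕜)}
    (hG : (comp κ κ ι ι 𝕜 G).PosSemidef) :
    ∃ A : κ → Matrix (κ × ι) ι 𝕜, ∀ u v, (A u)ᴴ * A v = G u v := by
  classical
  obtain ⟨B, hB⟩ := CStarAlgebra.nonneg_iff_eq_star_mul_self.mp hG.nonneg
  refine ⟨fun u => B.submatrix id (u, ·), fun u v => ?_⟩
  ext p q
  have hBuv := congr_fun₂ hB (u, p) (v, q)
  simp only [comp_apply, star_eq_conjTranspose] at hBuv
  simp [hBuv, mul_apply]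

lemma exists_isKraus_confGraph_eq_span_blocks {κ ι : Type*} [Fintype κ] [Fintype ι]
    [DecidableEq ι] {G : Matrix κ κ (Matrix ι ι ℂ)} (hG : (comp κ κ ι ι ℂ G).PosSemidef)
    (hG_diag : ∑ u, G u u = 1) :
    ∃ A : Fin (Fintype.card κ) → Matrix (Fin (Fintype.card κ * Fintype.card ι)) ι ℂ,
      IsKraus A ∧ confGraph A = Submodule.span ℂ {M | ∃ u v, M = G u v} := by
  obtain ⟨A, hA⟩ := exists_conjTranspose_mul_eq_of_posSemidef_comp hG
  let e := (Fintype.equivFinOfCardEq (Fintype.card_prod κ ι)).symm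
  let σ := (Fintype.equivFin κ).symm
  have hσ (i j) : ((A (σ i)).submatrix e id)ᴴ * (A (σ j)).submatrix e id = G (σ i) (σ j) := by
    rw [conjTranspose_submatrix, submatrix_mul_equiv _ _ _ e, submatrix_id_id, hA]
  refine ⟨fun i => (A (σ i)).submatrix e id, ?_, ?_⟩
  · simp only [IsKraus, hσ]
    rwa [σ.sum_comp fun u => G u u]
  · simp only [confGraph, hσ, σ.exists_congr_left, Equiv.apply_symm_apply]

lemma IsOperatorSystem.exists_posSemidef_blockMatrix {ι : Type*} [Fintype ι] [DecidableEq ι]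
    {S : Submodule ℂ (Matrix ι ι ℂ)} (hS : IsOperatorSystem S) :
    ∃ G : Matrix (ι ⊕ ι) (ι ⊕ ι) (Matrix ι ι ℂ), (comp _ _ _ _ ℂ G).PosSemidef ∧
      ∑ u, G u u = 1 ∧ Submodule.span ℂ {M | ∃ u v, M = G u v} = S := by
  rcases isEmpty_or_nonempty ι with hι | hι
  · refine ⟨0, ?_, Subsingleton.elim _ _, Subsingleton.elim _ _⟩
    convert PosSemidef.zero (n := (ι ⊕ ι) × ι) (R := ℂ)
    exact Subsingleton.elim _ _
  obtain ⟨B, hB⟩ := S.exists_span_range_eq (stdBasis ℂ ι ι).span_eq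
  have hB_mem (i j : ι) : B (i, j) ∈ S := hB ▸ Submodule.subset_span ⟨_, rfl⟩
  let K : Matrix (ι ⊕ ι) (ι ⊕ ι) (Matrix ι ι ℂ) :=
    fromBlocks 0 (of fun i j => B (i, j)) (of fun i j => B (i, j))ᴴ 0
  have hK : K.IsHermitian := by simp [K, IsHermitian, fromBlocks_conjTranspose]
  have hK_mem (u v) : K u v ∈ S := by
    rcases u with i | i <;> rcases v with j | j <;>
      simp [K, star_eq_conjTranspose, hB_mem, hS.2, S.zero_mem]
  have hK_diag (u) : K u u = 0 := by rcases u with i | i <;> simp [K]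
  obtain ⟨s, hs, hsK⟩ := (isHermitian_comp_iff.mpr hK).exists_posSemidef_smul_one_add
  set t : ℝ := (Fintype.card (ι ⊕ ι) * s)⁻¹ with ht
  have ht0 : 0 < t := by positivity
  refine ⟨t • (s • 1 + K), ?_, ?_, ?_⟩
  · have h_comp (M : Matrix (ι ⊕ ι) (ι ⊕ ι) (Matrix ι ι ℂ)) :
        comp _ _ _ _ ℂ M = compAlgEquiv _ ι ℂ ℝ M := rfl
    simp only [h_comp, map_smul, map_add, map_one]
    exact hsK.smul ht0.le
  · simp only [Matrix.smul_apply, Matrix.add_apply, one_apply_eq, hK_diag, add_zero,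
      Finset.sum_const, Finset.card_univ, smul_smul]
    have h_card : (Fintype.card (ι ⊕ ι) : ℝ) * (t * s) = 1 := by rw [ht]; field_simp
    rw [← Nat.cast_smul_eq_nsmul ℝ, smul_smul, h_card, one_smul]
  · have h_one_mem (u v) : (1 : Matrix (ι ⊕ ι) (ι ⊕ ι) (Matrix ι ι ℂ)) u v ∈ S := by
      rw [one_apply]
      split_ifs
      exacts [hS.1, S.zero_mem]
    apply le_antisymm
    · rw [Submodule.span_le]
      rintro _ ⟨u, v, rfl⟩
      simp only [Matrix.smul_apply, Matrix.add_apply]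
      exact S.smul_of_tower_mem _
        (S.add_mem (S.smul_of_tower_mem _ (h_one_mem u v)) (hK_mem u v))
    · rw [← hB, Submodule.span_le]
      rintro _ ⟨⟨i, j⟩, rfl⟩
      have h : B (i, j) = t⁻¹ • (t • (s • 1 + K)) (.inl i) (.inr j) := by simp [K, ht0.ne']
      rw [h]
      exact Submodule.smul_of_tower_mem _ _ (Submodule.subset_span ⟨_, _, rfl⟩)

/-- for every operator system `S ⊆ M_n`, `γ(S) ≤ 2n²`. -/
theorem gamma_le (n : ℕ) (S : Submodule ℂ (Matrix (Fin n) (Fin n) ℂ))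
    (hS : IsOperatorSystem S) :
    gammaOS S ≤ 2 * n ^ 2 ∧
    ∃ k ≤ 2 * n ^ 2, ∃ r : ℕ, ∃ A : Fin r → Matrix (Fin k) (Fin n) ℂ,
      IsKraus A ∧ confGraph A = S := by
  obtain ⟨G, hG, hG_diag, hG_span⟩ := hS.exists_posSemidef_blockMatrix
  obtain ⟨A, hA, hA_conf⟩ := exists_isKraus_confGraph_eq_span_blocks hG hG_diag
  have hk : Fintype.card (Fin n ⊕ Fin n) * Fintype.card (Fin n) = 2 * n ^ 2 := by simp; ring
  have h_mem : Fintype.card (Fin n ⊕ Fin n) * Fintype.card (Fin n) ∈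
      {k | ∃ r : ℕ, ∃ A : Fin r → Matrix (Fin k) (Fin n) ℂ, IsKraus A ∧ confGraph A = S} :=
    ⟨_, A, hA, hA_conf.trans hG_span⟩
  exact ⟨(Nat.sInf_le h_mem).trans_eq hk, _, hk.le, _, A, hA, hA_conf.trans hG_span⟩
end

section
/- For every operator system S ⊆ M_n, the chain of inequalities α(S) ≤ β(S) ≤ γ(S) ≤ cc(S) holds (the last inequality is interpreted in ℕ ∪ {∞}). -/
/-!
If `S_Φ ⊆ S` and `(x_p)` is `S`-independent, pick for each `p` a Kraus operator with
`A_{f p} x_p ≠ 0` (possible since `∑ Aᵢᴴ Aᵢ = 1`). The vectors `A_{f p} x_p ∈ ℂᵏ` are nonzero and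
pairwise orthogonal, since their inner products are the pairings of `x_p x_qᴴ` with
`A_{f p}ᴴ A_{f q} ∈ S`; hence `α(S) ≤ k`. The other inequalities are inclusions of the defining
sets, given one channel with `S_Φ = S`: for the Hermitian parts `H` of a spanning family of `S`,
the positive matrices `1` and `‖H‖ ± H` normalise to a POVM `(Pᵤ)` spanning `S`, and the block
column Kraus operators `Aᵤ = eᵤ ⊗ Bᵤ` with `Pᵤ = Bᵤᴴ Bᵤ` satisfy `Aᵤᴴ Aᵥ = δᵤᵥ Pᵤ`.
-/

open Matrix
open scoped ComplexOrder

/-- Quantum subcomplexity `β(S)`: the least `k` such that `S_Φ ⊆ S` for some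
quantum channel `Φ : M_ι → M_k`. -/
noncomputable def betaOS {ι : Type*} [Fintype ι] [DecidableEq ι]
    (S : Submodule ℂ (Matrix ι ι ℂ)) : ℕ :=
  sInf {k | ∃ r : ℕ, ∃ A : Fin r → Matrix (Fin k) ι ℂ, IsKraus A ∧ confGraph A ≤ S}

/-- Independence number `α(S)`: the largest `m` admitting an `S`-independent family
of `m` nonzero vectors, i.e. with `tr(Bᴴ xₚ xₖᴴ) = 0` for `B ∈ S`, `p ≠ q`. -/
noncomputable def alphaOS {ι : Type*} [Fintype ι] [DecidableEq ι]
    (S : Submodule ℂ (Matrix ι ι ℂ)) : ℕ :=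
  sSup {m | ∃ x : Fin m → ι → ℂ, (∀ p, x p ≠ 0) ∧
    ∀ p q, p ≠ q → ∀ B ∈ S, Matrix.trace (Bᴴ * Matrix.vecMulVec (x p) (star (x q))) = 0}

/-- A non-cancelling tuple of Kraus operators: each of them of the form `A · D` with
`A` entrywise nonnegative (real entries) and `D` an invertible diagonal matrix. -/
noncomputable def IsNonCancelling {ι : Type*} [Fintype ι] [DecidableEq ι] {k r : ℕ}
    (A : Fin r → Matrix (Fin k) ι ℂ) : Prop :=
  ∀ i, ∃ (B : Matrix (Fin k) ι ℝ) (d : ι → ℂ),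
    (∀ a b, 0 ≤ B a b) ∧ (∀ j, d j ≠ 0) ∧
    A i = (B.map ((↑) : ℝ → ℂ)) * Matrix.diagonal d

/-- `cc(S) ∈ ℕ ∪ {∞}`: the infimum of the `k` for which some non-cancelling quantum channel
`Φ : M_ι → M_k` has `S_Φ = S`. -/
noncomputable def ccOS {ι : Type*} [Fintype ι] [DecidableEq ι]
    (S : Submodule ℂ (Matrix ι ι ℂ)) : ℕ∞ :=
  sInf {c : ℕ∞ | ∃ k : ℕ, c = k ∧ ∃ r : ℕ, ∃ A : Fin r → Matrix (Fin k) ι ℂ,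
    IsKraus A ∧ IsNonCancelling A ∧ confGraph A = S}

open Submodule Set

section CStarAlgebra

variable {A : Type*} [CStarAlgebra A] [PartialOrder A] [StarOrderedRing A]

lemma exists_nonneg_sum_eq_one_span_eq {κ : Type*} [Fintype κ] (H : κ → A)
    (hH : ∀ z, IsSelfAdjoint (H z)) :
    ∃ P : Option (κ × Bool) → A, (∀ t, 0 ≤ P t) ∧ ∑ t, P t = 1 ∧
      span ℂ (range P) = span ℂ (insert 1 (range H)) := by
  let Q : Option (κ × Bool) → A
    | none => 1
    | some (z, true) => algebraMap ℝ A ‖H z‖ + H z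
    | some (z, false) => algebraMap ℝ A ‖H z‖ - H z
  have hQ : ∀ t, 0 ≤ Q t
    | none => zero_le_one
    | some (z, true) => neg_le_iff_add_nonneg'.mp (hH z).neg_algebraMap_norm_le_self
    | some (z, false) => sub_nonneg.mpr (hH z).le_algebraMap_norm_self
  set s : ℝ := 1 + ∑ z, 2 * ‖H z‖ with hs
  have hs0 : 0 < s := by positivity
  have hsum : ∑ t, Q t = algebraMap ℝ A s := by
    simp only [Fintype.sum_option, Fintype.sum_prod_type, Fintype.sum_bool, Q, hs, map_add,
      map_one, map_sum, add_add_sub_cancel, ← two_mul, map_mul, map_ofNat]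
  have hspan : span ℂ (range Q) = span ℂ (insert 1 (range H)) := by
    have h1 : (1 : A) ∈ span ℂ (insert 1 (range H)) := subset_span (mem_insert _ _)
    have hc : ∀ c : ℝ, algebraMap ℝ A c ∈ span ℂ (insert 1 (range H)) := fun c => by
      rw [Algebra.algebraMap_eq_smul_one]
      exact smul_of_tower_mem _ _ h1
    have hH' : ∀ z, H z ∈ span ℂ (insert 1 (range H)) :=
      fun z => subset_span (mem_insert_of_mem _ ⟨z, rfl⟩)
    have hQH : ∀ z, H z ∈ span ℂ (range Q) := fun z => by
      have hd : H z = (2⁻¹ : ℝ) • (Q (some (z, true)) - Q (some (z, false))) := by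
        simp only [Q]
        module
      rw [hd]
      exact smul_of_tower_mem _ _
        (sub_mem (subset_span ⟨some (z, true), rfl⟩) (subset_span ⟨some (z, false), rfl⟩))
    apply le_antisymm <;> rw [span_le]
    · rintro _ ⟨_ | ⟨z, _ | _⟩, rfl⟩
      exacts [h1, sub_mem (hc _) (hH' z), add_mem (hc _) (hH' z)]
    · rintro _ (rfl | ⟨z, rfl⟩)
      exacts [subset_span ⟨none, rfl⟩, hQH z]
  refine ⟨fun t => s⁻¹ • Q t, fun t => smul_nonneg (by positivity) (hQ t), ?_, ?_⟩
  · rw [← Finset.smul_sum, hsum, Algebra.algebraMap_eq_smul_one, smul_smul,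
      inv_mul_cancel₀ hs0.ne', one_smul]
  · simp_rw [← hspan, ← Complex.coe_smul, Set.range_smul]
    exact span_smul_eq_of_isUnit _ _ (by simpa using hs0.ne')

end CStarAlgebra

open ComplexStarModule in
lemma span_range_realPart_imaginaryPart {A : Type*} [AddCommGroup A] [Module ℂ A]
    [StarAddMonoid A] [StarModule ℂ A] {S : Submodule ℂ A} (hS : ∀ a ∈ S, star a ∈ S)
    {κ : Type*} (C : κ → A) (hC : span ℂ (range C) = S) :
    span ℂ (range (Sum.elim (fun j => (ℜ (C j) : A)) (fun j => (ℑ (C j) : A)))) = S := by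
  have hCS : ∀ j, C j ∈ S := fun j => hC ▸ subset_span ⟨j, rfl⟩
  apply le_antisymm
  · rw [span_le]
    rintro _ ⟨j | j, rfl⟩
    · rw [Sum.elim_inl, realPart_apply_coe]
      exact smul_of_tower_mem _ _ (add_mem (hCS j) (hS _ (hCS j)))
    · rw [Sum.elim_inr, imaginaryPart_apply_coe]
      exact smul_mem _ _ (smul_of_tower_mem _ _ (sub_mem (hCS j) (hS _ (hCS j))))
  · rw [← hC, span_le]
    rintro _ ⟨j, rfl⟩
    rw [← realPart_add_I_smul_imaginaryPart (C j)]
    exact add_mem (subset_span ⟨Sum.inl j, rfl⟩) (smul_mem _ _ (subset_span ⟨Sum.inr j, rfl⟩))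

lemma exists_conjTranspose_mul_eq_ite {ι : Type*} [Fintype ι] {r : ℕ}
    (B : Fin r → Matrix ι ι ℂ) :
    ∃ (k : ℕ) (A : Fin r → Matrix (Fin k) ι ℂ),
      ∀ u v, (A u)ᴴ * A v = if u = v then (B u)ᴴ * B u else 0 := by
  let e := Fintype.equivFin (Fin r × ι)
  let K : Fin r → Matrix (Fin r × ι) ι ℂ := fun u =>
    Matrix.of fun p c => if p.1 = u then B u p.2 c else 0
  refine ⟨_, fun u => (K u).submatrix e.symm id, fun u v => ?_⟩
  rw [conjTranspose_submatrix, submatrix_mul_equiv]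
  ext c c'
  rcases eq_or_ne u v with rfl | huv
  · simp [K, mul_apply, Fintype.sum_prod_type]
  · simp [K, mul_apply, Fintype.sum_prod_type, huv, huv.symm]

lemma trace_conjTranspose_mul_vecMulVec {ι κ : Type*} [Fintype ι] [Fintype κ]
    (A B : Matrix κ ι ℂ) (u v : ι → ℂ) :
    trace ((Aᴴ * B)ᴴ * vecMulVec u (star v)) = (A *ᵥ u) ⬝ᵥ star (B *ᵥ v) := by
  rw [conjTranspose_mul, conjTranspose_conjTranspose, mul_vecMulVec, trace_vecMulVec,
    ← mulVec_mulVec, dotProduct_comm, dotProduct_mulVec, ← star_mulVec, dotProduct_comm]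

section Kraus

variable {ι : Type*} [Fintype ι] [DecidableEq ι]

lemma IsKraus.exists_mulVec_ne_zero {k r : ℕ} {A : Fin r → Matrix (Fin k) ι ℂ}
    (hA : IsKraus A) {x : ι → ℂ} (hx : x ≠ 0) :
    ∃ i, A i *ᵥ x ≠ 0 := by
  by_contra! h
  apply hx
  rw [← one_mulVec x, ← hA, sum_mulVec]
  simp [← mulVec_mulVec, h]

lemma card_le_of_confGraph_le {k r m : ℕ} {S : Submodule ℂ (Matrix ι ι ℂ)}
    {A : Fin r → Matrix (Fin k) ι ℂ} (hA : IsKraus A) (hle : confGraph A ≤ S) {x : Fin m → ι → ℂ} (hx : ∀ p, x p ≠ 0)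
    (hind : ∀ p q, p ≠ q → ∀ B ∈ S, trace (Bᴴ * vecMulVec (x p) (star (x q))) = 0) :
    m ≤ k := by
  choose f hf using fun p => hA.exists_mulVec_ne_zero (hx p)
  let y p : EuclideanSpace ℂ (Fin k) := WithLp.toLp 2 (A (f p) *ᵥ x p)
  have hy : LinearIndependent ℂ y := by
    refine linearIndependent_of_ne_zero_of_inner_eq_zero (fun p => by simpa [y] using hf p)
      fun p q hpq => ?_
    change inner ℂ (y p) (y q) = 0
    rw [EuclideanSpace.inner_toLp_toLp, ← trace_conjTranspose_mul_vecMulVec]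
    exact hind q p (Ne.symm hpq) _ (hle (subset_span ⟨f q, f p, rfl⟩))
  simpa using hy.fintype_card_le_finrank

lemma alphaOS_le_of_confGraph_le {k r : ℕ} {S : Submodule ℂ (Matrix ι ι ℂ)}
    {A : Fin r → Matrix (Fin k) ι ℂ} (hA : IsKraus A) (hAS : confGraph A ≤ S) :
    alphaOS S ≤ k :=
  csSup_le' fun _ ⟨_, hx, hind⟩ => card_le_of_confGraph_le hA hAS hx hind

lemma isKraus_and_confGraph_eq_span {k r : ℕ} {A : Fin r → Matrix (Fin k) ι ℂ}
    {P : Fin r → Matrix ι ι ℂ} (hA : ∀ u v, (A u)ᴴ * A v = if u = v then P u else 0)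
    (hP : ∑ u, P u = 1) : IsKraus A ∧ confGraph A = span ℂ (range P) := by
  refine ⟨by simpa [IsKraus, hA] using hP, le_antisymm ?_ ?_⟩
  · rw [confGraph, span_le]
    rintro _ ⟨u, v, rfl⟩
    rw [hA]
    split_ifs
    exacts [subset_span ⟨u, rfl⟩, zero_mem _]
  · rw [span_le]
    rintro _ ⟨u, rfl⟩
    exact subset_span ⟨u, u, by simp [hA]⟩

open scoped MatrixOrder Matrix.Norms.L2Operator in
lemma exists_isKraus_confGraph_eq_span {r : ℕ} (P : Fin r → Matrix ι ι ℂ)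
    (hP : ∀ u, (P u).PosSemidef) (hsum : ∑ u, P u = 1) :
    ∃ (k : ℕ) (A : Fin r → Matrix (Fin k) ι ℂ), IsKraus A ∧ confGraph A = span ℂ (range P) := by
  choose B hB using fun u => CStarAlgebra.nonneg_iff_eq_star_mul_self.mp (hP u).nonneg
  obtain ⟨k, A, hA⟩ := exists_conjTranspose_mul_eq_ite B
  refine ⟨k, A, isKraus_and_confGraph_eq_span (fun u v => ?_) hsum⟩
  rw [hA, hB, star_eq_conjTranspose]

open scoped MatrixOrder Matrix.Norms.L2Operator ComplexStarModule in
lemma IsOperatorSystem.exists_posSemidef_sum_eq_one_span_eq {S : Submodule ℂ (Matrix ι ι ℂ)}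
    (hS : IsOperatorSystem S) :
    ∃ (r : ℕ) (P : Fin r → Matrix ι ι ℂ),
      (∀ u, (P u).PosSemidef) ∧ ∑ u, P u = 1 ∧ span ℂ (range P) = S := by
  obtain ⟨d, C, hC⟩ := fg_iff_exists_fin_generating_family.mp (IsNoetherian.noetherian S)
  obtain ⟨Q, hQ, hQsum, hQS⟩ := exists_nonneg_sum_eq_one_span_eq
    (Sum.elim (fun j => (ℜ (C j) : Matrix ι ι ℂ)) (fun j => (ℑ (C j) : Matrix ι ι ℂ)))
    (Sum.rec (fun j => (ℜ (C j)).2) (fun j => (ℑ (C j)).2))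
  rw [span_insert, span_range_realPart_imaginaryPart hS.2 C hC,
    sup_eq_right.mpr ((span_singleton_le_iff_mem _ _).mpr hS.1)] at hQS
  let e := Fintype.equivFin (Option ((Fin d ⊕ Fin d) × Bool))
  refine ⟨_, Q ∘ e.symm, fun u => nonneg_iff_posSemidef.mp (hQ _), ?_, ?_⟩
  · rwa [Function.comp_def, e.symm.sum_comp]
  · rwa [EquivLike.range_comp]

lemma IsOperatorSystem.exists_isKraus_confGraph_eq {S : Submodule ℂ (Matrix ι ι ℂ)}
    (hS : IsOperatorSystem S) :
    ∃ (k r : ℕ) (A : Fin r → Matrix (Fin k) ι ℂ), IsKraus A ∧ confGraph A = S := by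
  obtain ⟨r, P, hP, hsum, hPS⟩ := hS.exists_posSemidef_sum_eq_one_span_eq
  obtain ⟨k, A, hA, hAP⟩ := exists_isKraus_confGraph_eq_span P hP hsum
  exact ⟨k, r, A, hA, hAP.trans hPS⟩

lemma IsOperatorSystem.exists_isKraus_gammaOS {S : Submodule ℂ (Matrix ι ι ℂ)}
    (hS : IsOperatorSystem S) :
    ∃ (r : ℕ) (A : Fin r → Matrix (Fin (gammaOS S)) ι ℂ), IsKraus A ∧ confGraph A = S := by
  obtain ⟨k, r, A, hA, hAS⟩ := hS.exists_isKraus_confGraph_eq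
  exact Nat.sInf_mem (s := {k | ∃ r : ℕ, ∃ A : Fin r → Matrix (Fin k) ι ℂ,
    IsKraus A ∧ confGraph A = S}) ⟨k, r, A, hA, hAS⟩

lemma IsOperatorSystem.exists_isKraus_betaOS {S : Submodule ℂ (Matrix ι ι ℂ)}
    (hS : IsOperatorSystem S) :
    ∃ (r : ℕ) (A : Fin r → Matrix (Fin (betaOS S)) ι ℂ), IsKraus A ∧ confGraph A ≤ S := by
  obtain ⟨r, A, hA, hAS⟩ := hS.exists_isKraus_gammaOS
  exact Nat.sInf_mem (s := {k | ∃ r : ℕ, ∃ A : Fin r → Matrix (Fin k) ι ℂ,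
    IsKraus A ∧ confGraph A ≤ S}) ⟨_, r, A, hA, hAS.le⟩

lemma IsOperatorSystem.alphaOS_le_betaOS {S : Submodule ℂ (Matrix ι ι ℂ)}
    (hS : IsOperatorSystem S) : alphaOS S ≤ betaOS S := by
  obtain ⟨r, A, hA, hAS⟩ := hS.exists_isKraus_betaOS
  exact alphaOS_le_of_confGraph_le hA hAS

lemma IsOperatorSystem.betaOS_le_gammaOS {S : Submodule ℂ (Matrix ι ι ℂ)}
    (hS : IsOperatorSystem S) : betaOS S ≤ gammaOS S := by
  obtain ⟨r, A, hA, hAS⟩ := hS.exists_isKraus_gammaOS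
  exact Nat.sInf_le ⟨r, A, hA, hAS.le⟩

lemma gammaOS_le_ccOS (S : Submodule ℂ (Matrix ι ι ℂ)) : (gammaOS S : ℕ∞) ≤ ccOS S := by
  refine le_sInf ?_
  rintro _ ⟨k, rfl, r, A, hA, -, hAS⟩
  exact_mod_cast (Nat.sInf_le ⟨r, A, hA, hAS⟩ : gammaOS S ≤ k)

end Kraus

/-- `α(S) ≤ β(S) ≤ γ(S) ≤ cc(S)` for every operator system `S ⊆ M_n`
(the last inequality in `ℕ ∪ {∞}`). -/
theorem alpha_le_beta_le_gamma_le_cc (n : ℕ) (S : Submodule ℂ (Matrix (Fin n) (Fin n) ℂ))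
    (hS : IsOperatorSystem S) :
    alphaOS S ≤ betaOS S ∧ betaOS S ≤ gammaOS S ∧ (gammaOS S : ℕ∞) ≤ ccOS S :=
  ⟨hS.alphaOS_le_betaOS, hS.betaOS_le_gammaOS, gammaOS_le_ccOS S⟩
end

section
/- Let S₁ ⊆ M_{n₁} and S₂ ⊆ M_{n₂} be operator systems, and let S₁ ⊕ S₂ ⊆ M_{n₁+n₂} be the operator system of all block-diagonal matrices diag(A, B) with A ∈ S₁ and B ∈ S₂. Then for each π ∈ {β, γ}: π(S₁ ⊕ S₂) = π(S₁) + π(S₂). -/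
open Matrix
open scoped ComplexOrder

/-- The direct sum `S₁ ⊕ S₂` of operator systems: all block-diagonal matrices
`diag(A, B)` with `A ∈ S₁`, `B ∈ S₂`. -/
noncomputable def dsumOS {ι₁ ι₂ : Type*} [Fintype ι₁] [DecidableEq ι₁]
    [Fintype ι₂] [DecidableEq ι₂] (S₁ : Submodule ℂ (Matrix ι₁ ι₁ ℂ))
    (S₂ : Submodule ℂ (Matrix ι₂ ι₂ ℂ)) :
    Submodule ℂ (Matrix (ι₁ ⊕ ι₂) (ι₁ ⊕ ι₂) ℂ) :=
  Submodule.span ℂ {C | ∃ A ∈ S₁, ∃ B ∈ S₂, C = Matrix.fromBlocks A 0 0 B}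


namespace DsumAux

set_option linter.unusedSectionVars false
set_option linter.unusedVariables false
set_option linter.unnecessarySimpa false
set_option linter.unnecessarySeqFocus false
set_option linter.unusedTactic false
set_option maxHeartbeats 1000000

section Quad
variable {ι : Type*} [Fintype ι] [DecidableEq ι]
lemma quad_eq {H : Matrix ι ι ℂ} (x : ι → ℂ) :
    star x ⬝ᵥ (H *ᵥ x) = ∑ i, ∑ j, (starRingEnd ℂ) (x i) * H i j * x j := by
  simp [dotProduct, mulVec, Finset.mul_sum, mul_assoc]

lemma quad_real {H : Matrix ι ι ℂ} (hH : H.IsHermitian) (x : ι → ℂ) :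
    (star x ⬝ᵥ (H *ᵥ x)).im = 0 := by
  rw [← Complex.conj_eq_iff_im, quad_eq]
  simp only [map_sum]
  rw [Finset.sum_comm]
  refine Finset.sum_congr rfl fun i _ => Finset.sum_congr rfl fun j _ => ?_
  have h : (starRingEnd ℂ) (H j i) = H i j := hH.apply i j
  rw [_root_.map_mul, _root_.map_mul, Complex.conj_conj, h]; ring

lemma one_add_smul_posSemidef {H : Matrix ι ι ℂ} (hH : H.IsHermitian) {ε : ℝ} (hε : 0 ≤ ε)
    (hb : ε * (∑ i, ∑ j, ‖H i j‖) ≤ 1) :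
    (1 + (ε : ℂ) • H).PosSemidef := by
  rw [posSemidef_iff_dotProduct_mulVec]
  constructor
  · unfold Matrix.IsHermitian
    rw [conjTranspose_add, conjTranspose_smul, conjTranspose_one, hH]
    congr 1
    simp [Complex.star_def, Complex.conj_ofReal]
  · intro x
    have hsplit : star x ⬝ᵥ ((1 + (ε : ℂ) • H) *ᵥ x)
        = star x ⬝ᵥ x + (ε : ℂ) * (star x ⬝ᵥ (H *ᵥ x)) := by
      rw [add_mulVec, smul_mulVec, dotProduct_add, dotProduct_smul, one_mulVec]
      simp [smul_eq_mul]
    set t := star x ⬝ᵥ (H *ᵥ x) with ht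
    set s : ℝ := ∑ i, Complex.normSq (x i) with hs
    have hsx : star x ⬝ᵥ x = (s : ℂ) := by
      simp [dotProduct, hs, Complex.normSq_eq_conj_mul_self, Complex.star_def]
    have hs0 : 0 ≤ s := Finset.sum_nonneg fun i _ => Complex.normSq_nonneg _
    -- bound each |x i| * |x j| ≤ s
    have hxx : ∀ i j : ι, ‖x i‖ * ‖x j‖ ≤ s := by
      intro i j
      have hle : ∀ l : ι, Complex.normSq (x l) ≤ s :=
        fun l => Finset.single_le_sum (f := fun l => Complex.normSq (x l))
          (fun _ _ => Complex.normSq_nonneg _) (Finset.mem_univ l)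
      rcases le_total (‖x i‖) (‖x j‖) with h | h
      · calc ‖x i‖ * ‖x j‖ ≤ ‖x j‖ * ‖x j‖ :=
              mul_le_mul_of_nonneg_right h (norm_nonneg _)
          _ = Complex.normSq (x j) := by rw [← Complex.sq_norm]; ring
          _ ≤ s := hle j
      · calc ‖x i‖ * ‖x j‖ ≤ ‖x i‖ * ‖x i‖ :=
              mul_le_mul_of_nonneg_left h (norm_nonneg _)
          _ = Complex.normSq (x i) := by rw [← Complex.sq_norm]; ring
          _ ≤ s := hle i
    have htabs : ‖t‖ ≤ (∑ i, ∑ j, ‖H i j‖) * s := by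
      rw [ht, quad_eq, Finset.sum_mul]
      refine (norm_sum_le _ _).trans (Finset.sum_le_sum fun i _ => ?_)
      rw [Finset.sum_mul]
      refine (norm_sum_le _ _).trans (Finset.sum_le_sum fun j _ => ?_)
      rw [norm_mul, norm_mul, Complex.norm_conj]
      calc ‖x i‖ * ‖H i j‖ * ‖x j‖
          = ‖H i j‖ * (‖x i‖ * ‖x j‖) := by ring
        _ ≤ ‖H i j‖ * s :=
            mul_le_mul_of_nonneg_left (hxx i j) (norm_nonneg _)
    have htim : t.im = 0 := quad_real hH x
    rw [hsplit, hsx]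
    rw [Complex.nonneg_iff]
    constructor
    · simp only [Complex.add_re, Complex.ofReal_re, Complex.mul_re, Complex.ofReal_im,
        htim, mul_zero, zero_mul, sub_zero]
      have h1 : ε * (-t.re) ≤ ε * ‖t‖ :=
        mul_le_mul_of_nonneg_left ((neg_le_abs _).trans (Complex.abs_re_le_norm t)) hε
      have h2 : ε * ‖t‖ ≤ s := by
        calc ε * ‖t‖ ≤ ε * ((∑ i, ∑ j, ‖H i j‖) * s) :=
              mul_le_mul_of_nonneg_left htabs hε
          _ = (ε * (∑ i, ∑ j, ‖H i j‖)) * s := by ring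
          _ ≤ 1 * s := mul_le_mul_of_nonneg_right hb hs0
          _ = s := one_mul s
      linarith
    · simp [htim]


end Quad

section Blocks
variable {ι ι₁ ι₂ : Type*} [Fintype ι] [DecidableEq ι] [Fintype ι₁] [DecidableEq ι₁]
  [Fintype ι₂] [DecidableEq ι₂]
/-- top-left block as a linear map -/
def blkL₁ : Matrix (ι₁ ⊕ ι₂) (ι₁ ⊕ ι₂) ℂ →ₗ[ℂ] Matrix ι₁ ι₁ ℂ where
  toFun M := M.toBlocks₁₁
  map_add' _ _ := rfl
  map_smul' _ _ := rfl

/-- bottom-right block as a linear map -/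
def blkL₂ : Matrix (ι₁ ⊕ ι₂) (ι₁ ⊕ ι₂) ℂ →ₗ[ℂ] Matrix ι₂ ι₂ ℂ where
  toFun M := M.toBlocks₂₂
  map_add' _ _ := rfl
  map_smul' _ _ := rfl

/-- embedding as top-left block, as a linear map -/
def embL₁ : Matrix ι₁ ι₁ ℂ →ₗ[ℂ] Matrix (ι₁ ⊕ ι₂) (ι₁ ⊕ ι₂) ℂ where
  toFun X := fromBlocks X 0 0 0
  map_add' X Y := by
    ext (a | a) (b | b) <;> simp [fromBlocks]
  map_smul' c X := by
    ext (a | a) (b | b) <;> simp [fromBlocks]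

/-- embedding as bottom-right block, as a linear map -/
def embL₂ : Matrix ι₂ ι₂ ℂ →ₗ[ℂ] Matrix (ι₁ ⊕ ι₂) (ι₁ ⊕ ι₂) ℂ where
  toFun X := fromBlocks 0 0 0 X
  map_add' X Y := by
    ext (a | a) (b | b) <;> simp [fromBlocks]
  map_smul' c X := by
    ext (a | a) (b | b) <;> simp [fromBlocks]

lemma blkL₁_mul {k : Type*} [Fintype k] (M N : Matrix k (ι₁ ⊕ ι₂) ℂ) :
    blkL₁ (Mᴴ * N) = (M.submatrix id Sum.inl)ᴴ * (N.submatrix id Sum.inl) := by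
  ext a b
  simp [blkL₁, toBlocks₁₁, mul_apply]

lemma blkL₂_mul {k : Type*} [Fintype k] (M N : Matrix k (ι₁ ⊕ ι₂) ℂ) :
    blkL₂ (Mᴴ * N) = (M.submatrix id Sum.inr)ᴴ * (N.submatrix id Sum.inr) := by
  ext a b
  simp [blkL₂, toBlocks₂₂, mul_apply]

lemma submatrix_conj_mul {α β : Type*} [Fintype α] [Fintype β] {kk : ℕ} (e : Fin kk ≃ α)
    (M N : Matrix α β ℂ) :
    ((M.submatrix e id)ᴴ * (N.submatrix e id)) = Mᴴ * N := by
  ext a b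
  rw [mul_apply, mul_apply]
  exact Fintype.sum_equiv e _ _ (fun x => by
    simp [submatrix_apply, conjTranspose_apply])

/-- The direct sum of two quantum channels. -/
lemma dsum_channel {k₁ k₂ r s : ℕ} (A : Fin r → Matrix (Fin k₁) ι₁ ℂ)
    (B : Fin s → Matrix (Fin k₂) ι₂ ℂ) (hA : IsKraus A) (hB : IsKraus B) :
    ∃ E : Fin (r + s) → Matrix (Fin (k₁ + k₂)) (ι₁ ⊕ ι₂) ℂ,
      IsKraus E ∧ confGraph E = dsumOS (confGraph A) (confGraph B) := by
  classical
  set P : (Fin r ⊕ Fin s) → Matrix (Fin k₁ ⊕ Fin k₂) (ι₁ ⊕ ι₂) ℂ :=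
    Sum.elim (fun i => fromBlocks (A i) 0 0 0) (fun j => fromBlocks 0 0 0 (B j)) with hP
  set E : Fin (r + s) → Matrix (Fin (k₁ + k₂)) (ι₁ ⊕ ι₂) ℂ :=
    fun x => (P (finSumFinEquiv.symm x)).submatrix finSumFinEquiv.symm id with hE
  have hEE : ∀ x y : Fin (r + s), (E x)ᴴ * E y
      = (P (finSumFinEquiv.symm x))ᴴ * P (finSumFinEquiv.symm y) :=
    fun x y => submatrix_conj_mul _ _ _
  have hPP : ∀ u v : Fin r ⊕ Fin s, (P u)ᴴ * P v
      = Sum.elim (fun i => Sum.elim (fun i' => embL₁ ((A i)ᴴ * A i'))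
          (fun _ => (0 : Matrix (ι₁ ⊕ ι₂) (ι₁ ⊕ ι₂) ℂ)) v)
         (fun j => Sum.elim (fun _ => (0 : Matrix (ι₁ ⊕ ι₂) (ι₁ ⊕ ι₂) ℂ))
          (fun j' => embL₂ ((B j)ᴴ * B j')) v) u := by
    rintro (i | j) (i' | j') <;>
      simp [hP, embL₁, embL₂, fromBlocks_conjTranspose, fromBlocks_multiply,
        ← fromBlocks_zero]
  have hKrausE : IsKraus E := by
    unfold IsKraus
    have h1 : ∑ x : Fin (r + s), (E x)ᴴ * E x
        = ∑ u : Fin r ⊕ Fin s, (P u)ᴴ * P u := by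
      refine Fintype.sum_equiv finSumFinEquiv.symm _ _ fun x => ?_
      rw [hEE]
    rw [h1, Fintype.sum_sum_type]
    have h2 : ∑ i : Fin r, (P (Sum.inl i))ᴴ * P (Sum.inl i) = embL₁ (1 : Matrix ι₁ ι₁ ℂ) := by
      have : ∀ i : Fin r, (P (Sum.inl i))ᴴ * P (Sum.inl i) = embL₁ ((A i)ᴴ * A i) :=
        fun i => hPP (Sum.inl i) (Sum.inl i)
      rw [Finset.sum_congr rfl fun i _ => this i, ← map_sum, hA]
    have h3 : ∑ j : Fin s, (P (Sum.inr j))ᴴ * P (Sum.inr j) = embL₂ (1 : Matrix ι₂ ι₂ ℂ) := by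
      have : ∀ j : Fin s, (P (Sum.inr j))ᴴ * P (Sum.inr j) = embL₂ ((B j)ᴴ * B j) :=
        fun j => hPP (Sum.inr j) (Sum.inr j)
      rw [Finset.sum_congr rfl fun j _ => this j, ← map_sum, hB]
    rw [h2, h3]
    show fromBlocks 1 0 0 0 + fromBlocks 0 0 0 1 = 1
    rw [fromBlocks_add, ← fromBlocks_one]
    congr 1 <;> simp
  refine ⟨E, hKrausE, le_antisymm ?_ ?_⟩
  · rw [confGraph, Submodule.span_le]
    rintro M ⟨x, y, rfl⟩
    rw [SetLike.mem_coe, hEE]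
    rcases hu : finSumFinEquiv.symm x with i | j <;> rcases hv : finSumFinEquiv.symm y with i' | j'
    · rw [hPP]
      simp only [Sum.elim_inl, Sum.elim_inr]
      exact Submodule.subset_span ⟨(A i)ᴴ * A i', Submodule.subset_span ⟨i, i', rfl⟩,
        0, Submodule.zero_mem _, rfl⟩
    · rw [hPP]
      simp only [Sum.elim_inl, Sum.elim_inr]
      exact Submodule.zero_mem _
    · rw [hPP]
      simp only [Sum.elim_inl, Sum.elim_inr]
      exact Submodule.zero_mem _
    · rw [hPP]
      simp only [Sum.elim_inl, Sum.elim_inr]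
      exact Submodule.subset_span ⟨0, Submodule.zero_mem _, (B j)ᴴ * B j',
        Submodule.subset_span ⟨j, j', rfl⟩, rfl⟩
  · rw [dsumOS, Submodule.span_le]
    rintro M ⟨X, hX, Y, hY, rfl⟩
    have hX1 : embL₁ (ι₂ := ι₂) X ∈ confGraph E := by
      have hmap : Submodule.map (embL₁ (ι₂ := ι₂)) (confGraph A) ≤ confGraph E := by
        rw [confGraph, Submodule.map_span, Submodule.span_le]
        rintro M' ⟨M'', ⟨i, i', rfl⟩, rfl⟩
        apply Submodule.subset_span
        refine ⟨finSumFinEquiv (Sum.inl i), finSumFinEquiv (Sum.inl i'), ?_⟩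
        rw [hEE, Equiv.symm_apply_apply, Equiv.symm_apply_apply, hPP]
        simp only [Sum.elim_inl, Sum.elim_inr]
      exact hmap ⟨X, hX, rfl⟩
    have hY1 : embL₂ (ι₁ := ι₁) Y ∈ confGraph E := by
      have hmap : Submodule.map (embL₂ (ι₁ := ι₁)) (confGraph B) ≤ confGraph E := by
        rw [confGraph, Submodule.map_span, Submodule.span_le]
        rintro M' ⟨M'', ⟨j, j', rfl⟩, rfl⟩
        apply Submodule.subset_span
        refine ⟨finSumFinEquiv (Sum.inr j), finSumFinEquiv (Sum.inr j'), ?_⟩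
        rw [hEE, Equiv.symm_apply_apply, Equiv.symm_apply_apply, hPP]
        simp only [Sum.elim_inl, Sum.elim_inr]
      exact hmap ⟨Y, hY, rfl⟩
    have : fromBlocks X 0 0 Y = embL₁ X + embL₂ Y := by
      show _ = fromBlocks X 0 0 0 + fromBlocks 0 0 0 Y
      rw [fromBlocks_add]
      congr 1 <;> simp
    rw [SetLike.mem_coe, this]
    exact Submodule.add_mem _ hX1 hY1


/-- Columns of a family of matrices, as vectors in Euclidean space. -/
noncomputable def colVec {k r : ℕ} (C : Fin r → Matrix (Fin k) ι ℂ) (p : Fin r × ι) :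
    EuclideanSpace ℂ (Fin k) := WithLp.toLp 2 (fun x => C p.1 x p.2)

/-- The column span of a family of matrices. -/
noncomputable def colSpan {k r : ℕ} (C : Fin r → Matrix (Fin k) ι ℂ) :
    Submodule ℂ (EuclideanSpace ℂ (Fin k)) :=
  Submodule.span ℂ (Set.range (colVec C))

lemma inner_colVec {k r r' : ℕ} (C : Fin r → Matrix (Fin k) ι₁ ℂ)
    (D : Fin r' → Matrix (Fin k) ι₂ ℂ) (p : Fin r × ι₁) (q : Fin r' × ι₂) :
    inner (𝕜 := ℂ) (colVec C p) (colVec D q)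
      = ∑ x : Fin k, (starRingEnd ℂ) (C p.1 x p.2) * D q.1 x q.2 := by
  rw [PiLp.inner_apply]
  exact Finset.sum_congr rfl fun x _ => by rw [RCLike.inner_apply, mul_comm]; rfl

/-- Gram-preserving compression of a finite family of vectors onto the dimension
of its span, in an abstract inner product space. -/
lemma exists_gram_compress {E : Type*} [NormedAddCommGroup E] [InnerProductSpace ℂ E]
    [FiniteDimensional ℂ E] {κ : Type*} [Fintype κ] (v : κ → E) :
    ∃ w : κ → (Fin (Module.finrank ℂ (Submodule.span ℂ (Set.range v))) → ℂ),
      ∀ p q, (∑ x, (starRingEnd ℂ) (w p x) * w q x) = (inner ℂ (v p) (v q) : ℂ) := by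
  classical
  set W := Submodule.span ℂ (Set.range v) with hWdef
  have hv : ∀ p, v p ∈ W := fun p => Submodule.subset_span ⟨p, rfl⟩
  let vW : κ → W := fun p => ⟨v p, hv p⟩
  let onb : OrthonormalBasis (Fin (Module.finrank ℂ W)) ℂ W := stdOrthonormalBasis ℂ W
  refine ⟨fun p x => (inner ℂ (onb x) (vW p) : ℂ), fun p q => ?_⟩
  have h1 : ∀ x, (starRingEnd ℂ) ((inner ℂ (onb x) (vW p) : ℂ))
      = (inner ℂ (vW p) (onb x) : ℂ) := fun x => inner_conj_symm _ _
  rw [Finset.sum_congr rfl fun x _ => by rw [h1 x]]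
  rw [OrthonormalBasis.sum_inner_mul_inner]
  exact Submodule.coe_inner W (vW p) (vW q) ▸ rfl

/-- Compression of a family of matrices onto its column span, preserving all
pairwise Gram products. -/
lemma exists_compress {k r : ℕ} (C : Fin r → Matrix (Fin k) ι ℂ) :
    ∃ B : Fin r → Matrix (Fin (Module.finrank ℂ (colSpan C))) ι ℂ,
      ∀ i j, (B i)ᴴ * B j = (C i)ᴴ * C j := by
  obtain ⟨w, hw⟩ := exists_gram_compress (colVec C)
  set B : Fin r → Matrix (Fin (Module.finrank ℂ (colSpan C))) ι ℂ :=
    fun i => Matrix.of fun x a => w (i, a) x with hB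
  refine ⟨B, fun i j => ?_⟩
  ext a b
  rw [mul_apply]
  have h1 : ∑ x, (B i)ᴴ a x * B j x b
      = ∑ x, (starRingEnd ℂ) (w (i, a) x) * w (j, b) x :=
    Finset.sum_congr rfl fun x _ => by rw [conjTranspose_apply]; rfl
  rw [h1, hw (i, a) (j, b), inner_colVec, mul_apply]
  exact Finset.sum_congr rfl fun x _ => by rw [conjTranspose_apply]; rfl

/-- Orthogonal column spans give the dimension bound. -/
lemma colSpan_dim_add_le {k r r' : ℕ} (C : Fin r → Matrix (Fin k) ι₁ ℂ)
    (D : Fin r' → Matrix (Fin k) ι₂ ℂ)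
    (horth : ∀ p q, inner (𝕜 := ℂ) (colVec C p) (colVec D q) = (0 : ℂ)) :
    Module.finrank ℂ (colSpan C) + Module.finrank ℂ (colSpan D) ≤ k := by
  have hle : colSpan D ≤ (colSpan C)ᗮ := by
    rw [colSpan, Submodule.span_le]
    rintro v ⟨q, rfl⟩
    rw [SetLike.mem_coe, Submodule.mem_orthogonal]
    intro u hu
    induction hu using Submodule.span_induction with
    | mem y hy => obtain ⟨p, rfl⟩ := hy; exact horth p q
    | zero => exact inner_zero_left _
    | add a b _ _ ha hb => rw [inner_add_left, ha, hb, add_zero]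
    | smul c a _ ha => rw [inner_smul_left, ha, mul_zero]
  have hdisj : colSpan C ⊓ colSpan D = ⊥ := by
    rw [eq_bot_iff]
    rintro x ⟨hx1, hx2⟩
    have h0 : (inner (𝕜 := ℂ) x x : ℂ) = 0 := (Submodule.mem_orthogonal _ _).mp (hle hx2) x hx1
    have : x = 0 := inner_self_eq_zero.mp h0
    simp [this]
  have hsum := Submodule.finrank_sup_add_finrank_inf_eq (colSpan C) (colSpan D)
  rw [hdisj, finrank_bot, add_zero] at hsum
  rw [← hsum]
  have hle2 := Submodule.finrank_le (colSpan C ⊔ colSpan D)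
  rwa [finrank_euclideanSpace_fin] at hle2

/-- Splitting a channel whose confusability graph consists of block-diagonal
matrices into two channels. -/
lemma split_channel {k r : ℕ} (E : Fin r → Matrix (Fin k) (ι₁ ⊕ ι₂) ℂ) (hE : IsKraus E)
    (hcross : ∀ (x y : Fin r) (a : ι₁) (b : ι₂), ((E x)ᴴ * E y) (Sum.inl a) (Sum.inr b) = 0) :
    ∃ k₁ k₂ : ℕ, k₁ + k₂ ≤ k ∧
      (∃ B : Fin r → Matrix (Fin k₁) ι₁ ℂ, IsKraus B ∧
        confGraph B = Submodule.map blkL₁ (confGraph E)) ∧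
      (∃ B : Fin r → Matrix (Fin k₂) ι₂ ℂ, IsKraus B ∧
        confGraph B = Submodule.map blkL₂ (confGraph E)) := by
  classical
  set C : Fin r → Matrix (Fin k) ι₁ ℂ := fun i => (E i).submatrix id Sum.inl with hC
  set D : Fin r → Matrix (Fin k) ι₂ ℂ := fun i => (E i).submatrix id Sum.inr with hD
  have hCg : ∀ i j, (C i)ᴴ * C j = blkL₁ ((E i)ᴴ * E j) := fun i j => (blkL₁_mul _ _).symm
  have hDg : ∀ i j, (D i)ᴴ * D j = blkL₂ ((E i)ᴴ * E j) := fun i j => (blkL₂_mul _ _).symm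
  have horth : ∀ p q, inner (𝕜 := ℂ) (colVec C p) (colVec D q) = (0 : ℂ) := by
    rintro ⟨i, a⟩ ⟨j, b⟩
    rw [inner_colVec]
    have := hcross i j a b
    rw [mul_apply] at this
    rw [← this]
    exact Finset.sum_congr rfl fun x _ => by rw [conjTranspose_apply]; rfl
  obtain ⟨B₁, hB₁⟩ := exists_compress C
  obtain ⟨B₂, hB₂⟩ := exists_compress D
  refine ⟨_, _, colSpan_dim_add_le C D horth, ⟨B₁, ?_, ?_⟩, ⟨B₂, ?_, ?_⟩⟩
  · unfold IsKraus
    rw [Finset.sum_congr rfl fun i _ => hB₁ i i,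
      Finset.sum_congr rfl fun i _ => hCg i i, ← map_sum]
    rw [show ∑ i, (E i)ᴴ * E i = 1 from hE]
    show toBlocks₁₁ (1 : Matrix (ι₁ ⊕ ι₂) (ι₁ ⊕ ι₂) ℂ) = 1
    rw [← fromBlocks_one, toBlocks_fromBlocks₁₁]
  · rw [confGraph, confGraph, ← Submodule.span_image]
    congr 1
    ext M
    constructor
    · rintro ⟨i, j, rfl⟩
      exact ⟨(E i)ᴴ * E j, ⟨i, j, rfl⟩, by rw [← hCg, ← hB₁]⟩
    · rintro ⟨M', ⟨i, j, rfl⟩, rfl⟩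
      exact ⟨i, j, by rw [hB₁, hCg]⟩
  · unfold IsKraus
    rw [Finset.sum_congr rfl fun i _ => hB₂ i i,
      Finset.sum_congr rfl fun i _ => hDg i i, ← map_sum]
    rw [show ∑ i, (E i)ᴴ * E i = 1 from hE]
    show toBlocks₂₂ (1 : Matrix (ι₁ ⊕ ι₂) (ι₁ ⊕ ι₂) ℂ) = 1
    rw [← fromBlocks_one, toBlocks_fromBlocks₂₂]
  · rw [confGraph, confGraph, ← Submodule.span_image]
    congr 1
    ext M
    constructor
    · rintro ⟨i, j, rfl⟩
      exact ⟨(E i)ᴴ * E j, ⟨i, j, rfl⟩, by rw [← hDg, ← hB₂]⟩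
    · rintro ⟨M', ⟨i, j, rfl⟩, rfl⟩
      exact ⟨i, j, by rw [hB₂, hDg]⟩


lemma span_star_closed {s : Set (Matrix ι ι ℂ)} (hs : ∀ M ∈ s, Mᴴ ∈ s) {x : Matrix ι ι ℂ}
    (hx : x ∈ Submodule.span ℂ s) : xᴴ ∈ Submodule.span ℂ s := by
  induction hx using Submodule.span_induction with
  | mem y hy => exact Submodule.subset_span (hs y hy)
  | zero => simpa using Submodule.zero_mem _
  | add y z _ _ hy hz => rw [conjTranspose_add]; exact Submodule.add_mem _ hy hz
  | smul c y _ hy => rw [conjTranspose_smul]; exact Submodule.smul_mem _ _ hy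

lemma dsum_mono {S₁ T₁ : Submodule ℂ (Matrix ι₁ ι₁ ℂ)} {S₂ T₂ : Submodule ℂ (Matrix ι₂ ι₂ ℂ)}
    (h1 : S₁ ≤ T₁) (h2 : S₂ ≤ T₂) : dsumOS S₁ S₂ ≤ dsumOS T₁ T₂ := by
  apply Submodule.span_mono
  rintro M ⟨A, hA, B, hB, rfl⟩
  exact ⟨A, h1 hA, B, h2 hB, rfl⟩

lemma map_blkL₁_dsum (S₁ : Submodule ℂ (Matrix ι₁ ι₁ ℂ)) (S₂ : Submodule ℂ (Matrix ι₂ ι₂ ℂ)) :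
    Submodule.map blkL₁ (dsumOS S₁ S₂) = S₁ := by
  rw [dsumOS, ← Submodule.span_image]
  apply le_antisymm
  · rw [Submodule.span_le]
    rintro M ⟨N, ⟨A, hA, B, hB, rfl⟩, rfl⟩
    exact hA
  · intro A hA
    apply Submodule.subset_span
    exact ⟨fromBlocks A 0 0 0, ⟨A, hA, 0, Submodule.zero_mem _, rfl⟩,
      rfl⟩

lemma map_blkL₂_dsum (S₁ : Submodule ℂ (Matrix ι₁ ι₁ ℂ)) (S₂ : Submodule ℂ (Matrix ι₂ ι₂ ℂ)) :
    Submodule.map blkL₂ (dsumOS S₁ S₂) = S₂ := by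
  rw [dsumOS, ← Submodule.span_image]
  apply le_antisymm
  · rw [Submodule.span_le]
    rintro M ⟨N, ⟨A, hA, B, hB, rfl⟩, rfl⟩
    exact hB
  · intro B hB
    apply Submodule.subset_span
    exact ⟨fromBlocks 0 0 0 B, ⟨0, Submodule.zero_mem _, B, hB, rfl⟩,
      rfl⟩

lemma dsum_cross {S₁ : Submodule ℂ (Matrix ι₁ ι₁ ℂ)} {S₂ : Submodule ℂ (Matrix ι₂ ι₂ ℂ)}
    {M : Matrix (ι₁ ⊕ ι₂) (ι₁ ⊕ ι₂) ℂ} (hM : M ∈ dsumOS S₁ S₂) (a : ι₁) (b : ι₂) :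
    M (Sum.inl a) (Sum.inr b) = 0 := by
  induction hM using Submodule.span_induction with
  | mem y hy => obtain ⟨A, _, B, _, rfl⟩ := hy; simp [fromBlocks]
  | zero => rfl
  | add y z _ _ hy hz => simp [hy, hz]
  | smul c y _ hy => simp [hy]

lemma dsum_isOperatorSystem {S₁ : Submodule ℂ (Matrix ι₁ ι₁ ℂ)} {S₂ : Submodule ℂ (Matrix ι₂ ι₂ ℂ)}
    (h₁ : IsOperatorSystem S₁) (h₂ : IsOperatorSystem S₂) :
    IsOperatorSystem (dsumOS S₁ S₂) := by
  constructor
  · rw [← fromBlocks_one]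
    exact Submodule.subset_span ⟨1, h₁.1, 1, h₂.1, rfl⟩
  · intro M hM
    refine span_star_closed ?_ hM
    rintro N ⟨A, hA, B, hB, rfl⟩
    refine ⟨Aᴴ, h₁.2 A hA, Bᴴ, h₂.2 B hB, ?_⟩
    simp [fromBlocks_conjTranspose]


end Blocks

section Exist
variable {ι : Type*} [Fintype ι] [DecidableEq ι]
/-- A Hermitian family spanning an operator system together with `1`. -/
lemma exists_hermitian_family (S : Submodule ℂ (Matrix ι ι ℂ)) (hS : IsOperatorSystem S) :
    ∃ N : ℕ, ∃ G : Fin N → Matrix ι ι ℂ, (∀ i, (G i).IsHermitian) ∧ (∀ i, G i ∈ S) ∧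
      S ≤ Submodule.span ℂ ({1} ∪ Set.range G) := by
  classical
  set d := Module.finrank ℂ S with hd
  let b : Module.Basis (Fin d) ℂ S := Module.finBasis ℂ S
  let H : Fin d → Matrix ι ι ℂ := fun i => (b i : Matrix ι ι ℂ) + (b i : Matrix ι ι ℂ)ᴴ
  let K : Fin d → Matrix ι ι ℂ := fun i =>
    (-Complex.I) • ((b i : Matrix ι ι ℂ) - (b i : Matrix ι ι ℂ)ᴴ)
  refine ⟨d + d, Sum.elim H K ∘ finSumFinEquiv.symm, ?_, ?_, ?_⟩
  · intro i
    rcases hsum : (finSumFinEquiv.symm i) with j | j <;>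
      simp only [Function.comp_apply, hsum, Sum.elim_inl, Sum.elim_inr]
    · show (H j)ᴴ = H j
      simp only [H, conjTranspose_add, conjTranspose_conjTranspose]
      exact add_comm _ _
    · show (K j)ᴴ = K j
      simp only [K, conjTranspose_smul, conjTranspose_sub, conjTranspose_conjTranspose]
      rw [show star (-Complex.I) = Complex.I by simp]
      module
  · intro i
    rcases hsum : (finSumFinEquiv.symm i) with j | j <;>
      simp only [Function.comp_apply, hsum, Sum.elim_inl, Sum.elim_inr]
    · exact Submodule.add_mem _ (b j).2 (hS.2 _ (b j).2)
    · exact Submodule.smul_mem _ _ (Submodule.sub_mem _ (b j).2 (hS.2 _ (b j).2))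
  · intro s hs
    set G := Sum.elim H K ∘ finSumFinEquiv.symm with hG
    have hmem : ∀ j : Fin d, (b j : Matrix ι ι ℂ) ∈ Submodule.span ℂ ({1} ∪ Set.range G) := by
      intro j
      have hHm : H j ∈ Submodule.span ℂ ({1} ∪ Set.range G) := by
        apply Submodule.subset_span
        exact Or.inr ⟨finSumFinEquiv (Sum.inl j),
          by rw [hG, Function.comp_apply, Equiv.symm_apply_apply, Sum.elim_inl]⟩
      have hKm : K j ∈ Submodule.span ℂ ({1} ∪ Set.range G) := by
        apply Submodule.subset_span
        exact Or.inr ⟨finSumFinEquiv (Sum.inr j),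
          by rw [hG, Function.comp_apply, Equiv.symm_apply_apply, Sum.elim_inr]⟩
      have hbj : (b j : Matrix ι ι ℂ)
          = (1/2 : ℂ) • H j + (Complex.I/2) • K j := by
        simp only [H, K, smul_smul]
        rw [show (Complex.I/2) * (-Complex.I) = (1/2 : ℂ) by
          rw [div_mul_eq_mul_div, mul_neg, Complex.I_mul_I]; norm_num]
        rw [smul_add, smul_sub]
        module
      rw [hbj]
      exact Submodule.add_mem _ (Submodule.smul_mem _ _ hHm) (Submodule.smul_mem _ _ hKm)
    have := b.sum_repr ⟨s, hs⟩
    have hs' : s = ∑ j, (b.repr ⟨s, hs⟩) j • (b j : Matrix ι ι ℂ) := by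
      have := congrArg (S.subtype) this
      simp only [map_sum, _root_.map_smul, Submodule.coe_subtype] at this
      exact this.symm
    rw [hs']
    exact Submodule.sum_mem _ fun j _ => Submodule.smul_mem _ _ (hmem j)


open scoped MatrixOrder in
lemma exists_exact_channel (S : Submodule ℂ (Matrix ι ι ℂ)) (hS : IsOperatorSystem S) :
    ∃ k r : ℕ, ∃ A : Fin r → Matrix (Fin k) ι ℂ, IsKraus A ∧ confGraph A = S := by
  classical
  obtain ⟨N, G, hGh, hGS, hGspan⟩ := exists_hermitian_family S hS
  set G' : Fin (N + 1) → Matrix ι ι ℂ := Fin.snoc G (-(∑ i, G i)) with hG'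
  have hG'cast : ∀ i : Fin N, G' (Fin.castSucc i) = G i := fun i => by
    rw [hG', Fin.snoc_castSucc]
  have hG'last : G' (Fin.last N) = -(∑ i, G i) := by rw [hG', Fin.snoc_last]
  have hG'h : ∀ j, (G' j).IsHermitian := by
    intro j
    refine Fin.lastCases ?_ (fun i => ?_) j
    · rw [hG'last]
      show (-(∑ i, G i))ᴴ = -(∑ i, G i)
      rw [conjTranspose_neg, conjTranspose_sum]
      congr 1
      exact Finset.sum_congr rfl fun i _ => hGh i
    · rw [hG'cast i]; exact hGh i
  have hG'S : ∀ j, G' j ∈ S := by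
    intro j
    refine Fin.lastCases ?_ (fun i => ?_) j
    · rw [hG'last]
      exact Submodule.neg_mem _ (Submodule.sum_mem _ fun i _ => hGS i)
    · rw [hG'cast i]; exact hGS i
  have hG'sum : ∑ j, G' j = 0 := by
    rw [Fin.sum_univ_castSucc]
    simp only [hG'cast, hG'last]
    exact add_neg_cancel _
  -- choice of ε
  set Csum : Matrix ι ι ℂ → ℝ := fun M => ∑ i, ∑ j, ‖M i j‖ with hCsum
  have hCnonneg : ∀ M, 0 ≤ Csum M := fun M =>
    Finset.sum_nonneg fun i _ => Finset.sum_nonneg fun j _ => norm_nonneg _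
  set Ctot : ℝ := ∑ j, Csum (G' j) with hCtot
  have hCtot0 : 0 ≤ Ctot := Finset.sum_nonneg fun j _ => hCnonneg _
  set ε : ℝ := (1 + Ctot)⁻¹ with hε
  have hε0 : 0 < ε := inv_pos.2 (by linarith)
  have hεb : ∀ j, ε * Csum (G' j) ≤ 1 := by
    intro j
    have h1 : Csum (G' j) ≤ 1 + Ctot := by
      have h2 : Csum (G' j) ≤ Ctot :=
        Finset.single_le_sum (fun l _ => hCnonneg (G' l)) (Finset.mem_univ j)
      linarith
    calc ε * Csum (G' j) ≤ ε * (1 + Ctot) := mul_le_mul_of_nonneg_left h1 hε0.le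
      _ = 1 := inv_mul_cancel₀ (by linarith)
  set Q : Fin (N + 1) → Matrix ι ι ℂ := fun j => 1 + (ε : ℂ) • G' j with hQ
  have hQpsd : ∀ j, (Q j).PosSemidef := fun j =>
    one_add_smul_posSemidef (hG'h j) hε0.le (hεb j)
  have hQS : ∀ j, Q j ∈ S :=
    fun j => Submodule.add_mem _ hS.1 (Submodule.smul_mem _ _ (hG'S j))
  have hQsum : ∑ j, Q j = (((N : ℂ) + 1)) • (1 : Matrix ι ι ℂ) := by
    rw [hQ, Finset.sum_add_distrib, ← Finset.smul_sum, hG'sum, smul_zero, add_zero,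
      Finset.sum_const, Finset.card_univ, Fintype.card_fin, ← Nat.cast_smul_eq_nsmul ℂ]
    push_cast
    rfl
  set R : Fin (N + 1) → Matrix ι ι ℂ := fun j => CFC.sqrt (Q j) with hRdef
  have hRh : ∀ j, (R j)ᴴ = R j := fun j => (CFC.sqrt_nonneg (Q j)).isSelfAdjoint.star_eq
  have hRsq : ∀ j, R j * R j = Q j := fun j => CFC.sqrt_mul_sqrt_self (Q j) (hQpsd j).nonneg
  set c : ℝ := Real.sqrt (((N : ℝ) + 1))⁻¹ with hc
  have hc2 : (c : ℂ) * (c : ℂ) = (((N : ℂ) + 1))⁻¹ := by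
    rw [← Complex.ofReal_mul, hc, Real.mul_self_sqrt (by positivity)]
    push_cast
    rfl
  have hN0 : ((N : ℂ) + 1) ≠ 0 := by
    exact_mod_cast Nat.cast_add_one_ne_zero (R := ℂ) N
  have hcc0 : (c : ℂ) * (c : ℂ) ≠ 0 := by rw [hc2]; exact inv_ne_zero hN0
  set k := Fintype.card (Fin (N + 1) × ι) with hk
  set e : Fin (N + 1) × ι ≃ Fin k := Fintype.equivFin _ with he
  set A : Fin (N + 1) → Matrix (Fin k) ι ℂ := fun j =>
    Matrix.of (fun x a => if (e.symm x).1 = j then (c : ℂ) * R j (e.symm x).2 a else 0)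
      with hA
  have hAapp : ∀ j x a, A j x a = if (e.symm x).1 = j then (c : ℂ) * R j (e.symm x).2 a else 0 :=
    fun j x a => rfl
  have key : ∀ j j', (A j)ᴴ * A j'
      = if j = j' then ((c : ℂ) * (c : ℂ)) • Q j else 0 := by
    intro j j'
    ext a b
    rw [mul_apply]
    set F : Fin (N + 1) × ι → ℂ := fun p =>
      (if p.1 = j then star ((c : ℂ) * R j p.2 a) else 0) *
      (if p.1 = j' then (c : ℂ) * R j' p.2 b else 0) with hF
    have hterm : ∀ x : Fin k, (A j)ᴴ a x * A j' x b = F (e.symm x) := by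
      intro x
      rw [conjTranspose_apply, hAapp, hAapp, hF]
      simp only [apply_ite star, star_zero]
    rw [Fintype.sum_equiv e.symm (fun x => (A j)ᴴ a x * A j' x b) F hterm,
      Fintype.sum_prod_type]
    simp only [hF]
    by_cases hjj : j = j'
    · subst hjj
      rw [if_pos rfl]
      have hq : ∀ q : Fin (N + 1), q ∈ Finset.univ → q ≠ j →
          (∑ m : ι, (if q = j then star ((c : ℂ) * R j m a) else 0) *
            (if q = j then (c : ℂ) * R j m b else 0)) = 0 := by
        intro q _ hq
        exact Finset.sum_eq_zero fun m _ => by rw [if_neg hq, if_neg hq, mul_zero]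
      rw [Finset.sum_eq_single j (fun q h1 h2 => hq q h1 h2)
        (fun h => absurd (Finset.mem_univ j) h)]
      have : ∑ m : ι, (if j = j then star ((c : ℂ) * R j m a) else 0) *
            (if j = j then (c : ℂ) * R j m b else 0)
          = ((c : ℂ) * (c : ℂ)) * ∑ m : ι, star (R j m a) * R j m b := by
        rw [Finset.mul_sum]
        refine Finset.sum_congr rfl fun m _ => ?_
        rw [if_pos rfl, if_pos rfl, star_mul', Complex.star_def, Complex.conj_ofReal]
        ring
      rw [this]
      have h2 : ∑ m : ι, star (R j m a) * R j m b = ((R j)ᴴ * R j) a b := by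
        rw [mul_apply]
        exact Finset.sum_congr rfl fun m _ => by rw [conjTranspose_apply]
      rw [h2, hRh, hRsq, Matrix.smul_apply, smul_eq_mul]
    · rw [if_neg hjj, Matrix.zero_apply]
      refine Finset.sum_eq_zero fun q _ => Finset.sum_eq_zero fun m _ => ?_
      by_cases h1 : q = j
      · rw [if_neg (fun h2 => hjj (h1.symm.trans h2)), mul_zero]
      · rw [if_neg h1, zero_mul]
  have hKraus : IsKraus A := by
    unfold IsKraus
    have : ∀ j : Fin (N + 1), (A j)ᴴ * A j = ((c : ℂ) * (c : ℂ)) • Q j := by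
      intro j; rw [key, if_pos rfl]
    rw [Finset.sum_congr rfl fun j _ => this j, ← Finset.smul_sum, hQsum, smul_smul, hc2,
      inv_mul_cancel₀ hN0, one_smul]
  have hQcg : ∀ j, Q j ∈ confGraph A := by
    intro j
    have hgen : (A j)ᴴ * A j ∈ confGraph A := Submodule.subset_span ⟨j, j, rfl⟩
    rw [key, if_pos rfl] at hgen
    have := Submodule.smul_mem (confGraph A) (((c : ℂ) * (c : ℂ))⁻¹) hgen
    rwa [smul_smul, inv_mul_cancel₀ hcc0, one_smul] at this
  have h1cg : (1 : Matrix ι ι ℂ) ∈ confGraph A := by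
    have hsum : ∑ j, Q j ∈ confGraph A := Submodule.sum_mem _ fun j _ => hQcg j
    have := Submodule.smul_mem (confGraph A) (((N : ℂ) + 1)⁻¹) hsum
    rwa [hQsum, smul_smul, inv_mul_cancel₀ hN0, one_smul] at this
  have hGcg : ∀ i, G i ∈ confGraph A := by
    intro i
    have hQi := hQcg (Fin.castSucc i)
    have hε0' : ((ε : ℝ) : ℂ) ≠ 0 := Complex.ofReal_ne_zero.mpr hε0.ne'
    have hGi : G i = ((ε : ℝ) : ℂ)⁻¹ • (Q (Fin.castSucc i) - 1) := by
      rw [hQ]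
      simp only [hG'cast]
      rw [add_sub_cancel_left, smul_smul, inv_mul_cancel₀ hε0', one_smul]
    rw [hGi]
    exact Submodule.smul_mem _ _ (Submodule.sub_mem _ hQi h1cg)
  refine ⟨k, N + 1, A, hKraus, le_antisymm ?_ ?_⟩
  · rw [confGraph, Submodule.span_le]
    rintro M ⟨i, j, rfl⟩
    rw [SetLike.mem_coe, key]
    split_ifs
    · exact Submodule.smul_mem _ _ (hQS i)
    · exact Submodule.zero_mem _
  · refine hGspan.trans ?_
    rw [Submodule.span_le]
    rintro M (hM | ⟨i, rfl⟩)
    · rw [Set.mem_singleton_iff] at hM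
      rw [hM]; exact h1cg
    · exact hGcg i


lemma gammaOS_le {S : Submodule ℂ (Matrix ι ι ℂ)} {k r : ℕ}
    (A : Fin r → Matrix (Fin k) ι ℂ) (h1 : IsKraus A) (h2 : confGraph A = S) :
    gammaOS S ≤ k :=
  Nat.sInf_le ⟨r, A, h1, h2⟩

lemma betaOS_le {S : Submodule ℂ (Matrix ι ι ℂ)} {k r : ℕ}
    (A : Fin r → Matrix (Fin k) ι ℂ) (h1 : IsKraus A) (h2 : confGraph A ≤ S) :
    betaOS S ≤ k :=
  Nat.sInf_le ⟨r, A, h1, h2⟩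

lemma gamma_witness (S : Submodule ℂ (Matrix ι ι ℂ)) (hS : IsOperatorSystem S) :
    ∃ r : ℕ, ∃ A : Fin r → Matrix (Fin (gammaOS S)) ι ℂ, IsKraus A ∧ confGraph A = S := by
  have hne : {k | ∃ r : ℕ, ∃ A : Fin r → Matrix (Fin k) ι ℂ,
      IsKraus A ∧ confGraph A = S}.Nonempty := by
    obtain ⟨k, r, A, h1, h2⟩ := exists_exact_channel S hS
    exact ⟨k, r, A, h1, h2⟩
  exact Nat.sInf_mem hne

lemma beta_witness (S : Submodule ℂ (Matrix ι ι ℂ)) (hS : IsOperatorSystem S) :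
    ∃ r : ℕ, ∃ A : Fin r → Matrix (Fin (betaOS S)) ι ℂ, IsKraus A ∧ confGraph A ≤ S := by
  have hne : {k | ∃ r : ℕ, ∃ A : Fin r → Matrix (Fin k) ι ℂ,
      IsKraus A ∧ confGraph A ≤ S}.Nonempty := by
    obtain ⟨k, r, A, h1, h2⟩ := exists_exact_channel S hS
    exact ⟨k, r, A, h1, le_of_eq h2⟩
  exact Nat.sInf_mem hne

end Exist

end DsumAux

/-- for operator systems `S₁ ⊆ M_{n₁}` and `S₂ ⊆ M_{n₂}` and
`π ∈ {β, γ}`, `π(S₁ ⊕ S₂) = π(S₁) + π(S₂)`. -/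
theorem dsum_additive (n₁ n₂ : ℕ)
    (S₁ : Submodule ℂ (Matrix (Fin n₁) (Fin n₁) ℂ))
    (S₂ : Submodule ℂ (Matrix (Fin n₂) (Fin n₂) ℂ))
    (h₁ : IsOperatorSystem S₁) (h₂ : IsOperatorSystem S₂) :
    betaOS (dsumOS S₁ S₂) = betaOS S₁ + betaOS S₂ ∧
    gammaOS (dsumOS S₁ S₂) = gammaOS S₁ + gammaOS S₂ := by
  classical
  have hds := DsumAux.dsum_isOperatorSystem h₁ h₂
  constructor
  · apply le_antisymm
    · obtain ⟨r1, A1, hA1, hA1le⟩ := DsumAux.beta_witness S₁ h₁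
      obtain ⟨r2, A2, hA2, hA2le⟩ := DsumAux.beta_witness S₂ h₂
      obtain ⟨E, hE, hEcg⟩ := DsumAux.dsum_channel A1 A2 hA1 hA2
      refine DsumAux.betaOS_le E hE ?_
      rw [hEcg]
      exact DsumAux.dsum_mono hA1le hA2le
    · obtain ⟨r, E, hE, hEle⟩ := DsumAux.beta_witness (dsumOS S₁ S₂) hds
      have hcross : ∀ (x y : Fin r) (a : Fin n₁) (b : Fin n₂),
          ((E x)ᴴ * E y) (Sum.inl a) (Sum.inr b) = 0 := fun x y a b =>
        DsumAux.dsum_cross (hEle (Submodule.subset_span ⟨x, y, rfl⟩)) a b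
      obtain ⟨k₁, k₂, hk, ⟨B₁, hB₁k, hB₁cg⟩, ⟨B₂, hB₂k, hB₂cg⟩⟩ :=
        DsumAux.split_channel E hE hcross
      have hb1 : betaOS S₁ ≤ k₁ := by
        refine DsumAux.betaOS_le B₁ hB₁k ?_
        rw [hB₁cg]
        exact le_trans (Submodule.map_mono hEle) (le_of_eq (DsumAux.map_blkL₁_dsum S₁ S₂))
      have hb2 : betaOS S₂ ≤ k₂ := by
        refine DsumAux.betaOS_le B₂ hB₂k ?_
        rw [hB₂cg]
        exact le_trans (Submodule.map_mono hEle) (le_of_eq (DsumAux.map_blkL₂_dsum S₁ S₂))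
      exact le_trans (add_le_add hb1 hb2) hk
  · apply le_antisymm
    · obtain ⟨r1, A1, hA1, hA1cg⟩ := DsumAux.gamma_witness S₁ h₁
      obtain ⟨r2, A2, hA2, hA2cg⟩ := DsumAux.gamma_witness S₂ h₂
      obtain ⟨E, hE, hEcg⟩ := DsumAux.dsum_channel A1 A2 hA1 hA2
      refine DsumAux.gammaOS_le E hE ?_
      rw [hEcg, hA1cg, hA2cg]
    · obtain ⟨r, E, hE, hEcg⟩ := DsumAux.gamma_witness (dsumOS S₁ S₂) hds
      have hcross : ∀ (x y : Fin r) (a : Fin n₁) (b : Fin n₂),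
          ((E x)ᴴ * E y) (Sum.inl a) (Sum.inr b) = 0 := by
        intro x y a b
        have hmem : (E x)ᴴ * E y ∈ confGraph E := Submodule.subset_span ⟨x, y, rfl⟩
        rw [hEcg] at hmem
        exact DsumAux.dsum_cross hmem a b
      obtain ⟨k₁, k₂, hk, ⟨B₁, hB₁k, hB₁cg⟩, ⟨B₂, hB₂k, hB₂cg⟩⟩ :=
        DsumAux.split_channel E hE hcross
      have hg1 : gammaOS S₁ ≤ k₁ := by
        refine DsumAux.gammaOS_le B₁ hB₁k ?_
        rw [hB₁cg, hEcg, DsumAux.map_blkL₁_dsum S₁ S₂]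
      have hg2 : gammaOS S₂ ≤ k₂ := by
        refine DsumAux.gammaOS_le B₂ hB₂k ?_
        rw [hB₂cg, hEcg, DsumAux.map_blkL₂_dsum S₁ S₂]
      exact le_trans (add_le_add hg1 hg2) hk
end

section
/- For every operator system S ⊆ M_n: γ(S) = min{rank B : m ∈ ℕ, B = [B_{ij}]_{i,j=1}^m is a positive semidefinite mn×mn complex matrix with all n×n blocks B_{ij} ∈ S, span{B_{ij} : 1 ≤ i,j ≤ m} = S, and ∑_{i=1}^m B_{ii} = I_n}; moreover, this minimum is attained for some m ≤ 2n³. -/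
open Matrix
open scoped ComplexOrder

section Helpers

lemma psd_factor {ι : Type*} [Fintype ι] [DecidableEq ι] {B : Matrix ι ι ℂ}
    (hB : B.PosSemidef) :
    ∃ V : Matrix (Fin B.rank) ι ℂ, Vᴴ * V = B := by
  classical
  have hH := hB.1
  have hnn : ∀ i, 0 ≤ hH.eigenvalues i := hB.eigenvalues_nonneg
  have hcard : Fintype.card {i // hH.eigenvalues i ≠ 0} = B.rank :=
    (hH.rank_eq_card_non_zero_eigs).symm
  let e : Fin B.rank ≃ {i // hH.eigenvalues i ≠ 0} := (Fintype.equivFinOfCardEq hcard).symm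
  set U : Matrix ι ι ℂ := (hH.eigenvectorUnitary : Matrix ι ι ℂ) with hU
  set g : ι → ι → ι → ℂ :=
    fun j l s => (hH.eigenvalues s : ℂ) * U j s * (starRingEnd ℂ) (U l s) with hg
  have hBentry : ∀ j l, B j l = ∑ s, g j l s := by
    intro j l
    conv_lhs => rw [hH.spectral_theorem, Unitary.conjStarAlgAut_apply]
    rw [Matrix.mul_apply]
    congr 1; ext s
    rw [Matrix.mul_diagonal]
    simp only [hg, Unitary.coe_star, Matrix.star_apply, Function.comp_apply, RCLike.ofReal_alg, Complex.star_def,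
      Complex.real_smul, mul_one]
    ring
  refine ⟨Matrix.of fun p j => (Real.sqrt (hH.eigenvalues (e p)) : ℂ) * (starRingEnd ℂ) (U j (e p)), ?_⟩
  ext j l
  rw [Matrix.mul_apply, hBentry j l]
  calc
    ∑ p : Fin B.rank,
      ((Matrix.of fun p j => (Real.sqrt (hH.eigenvalues (e p)) : ℂ) * (starRingEnd ℂ) (U j (e p)))ᴴ) j p
        * (Matrix.of fun p j => (Real.sqrt (hH.eigenvalues (e p)) : ℂ) * (starRingEnd ℂ) (U j (e p))) p l
      = ∑ p : Fin B.rank, g j l (e p) := by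
        refine Finset.sum_congr rfl fun p _ => ?_
        simp only [Matrix.conjTranspose_apply, Matrix.of_apply, Complex.star_def,
          _root_.map_mul, Complex.conj_conj, Complex.conj_ofReal, hg]
        have hs : ((Real.sqrt (hH.eigenvalues (e p)) : ℂ)) * (Real.sqrt (hH.eigenvalues (e p)) : ℂ)
            = (hH.eigenvalues (e p) : ℂ) := by
          rw [← Complex.ofReal_mul, Real.mul_self_sqrt (hnn _)]
        calc (Real.sqrt (hH.eigenvalues (e p)) : ℂ) * U j (e p)
              * ((Real.sqrt (hH.eigenvalues (e p)) : ℂ) * (starRingEnd ℂ) (U l (e p)))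
            = ((Real.sqrt (hH.eigenvalues (e p)) : ℂ) * (Real.sqrt (hH.eigenvalues (e p)) : ℂ))
              * U j (e p) * (starRingEnd ℂ) (U l (e p)) := by ring
          _ = _ := by rw [hs]
    _ = ∑ s : {i // hH.eigenvalues i ≠ 0}, g j l s := Equiv.sum_comp e (fun s => g j l s)
    _ = ∑ s ∈ Finset.univ.filter (fun i => hH.eigenvalues i ≠ 0), g j l s :=
        (Finset.sum_subtype _ (by simp) _).symm
    _ = ∑ s, g j l s := by
        refine Finset.sum_filter_of_ne fun x _ hx => ?_
        intro h0
        exact hx (by simp [hg, h0])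

lemma psd_factor' {ι : Type*} [Fintype ι] [DecidableEq ι] {B : Matrix ι ι ℂ}
    (hB : B.PosSemidef) :
    ∃ (ρ : ℕ) (V : Matrix (Fin ρ) ι ℂ), ρ = B.rank ∧ Vᴴ * V = B := by
  obtain ⟨V, hV⟩ := psd_factor hB
  exact ⟨_, V, rfl, hV⟩

lemma slice_conj_mul {k m n : ℕ} (V : Matrix (Fin k) (Fin m × Fin n) ℂ) (i j : Fin m) :
    (Matrix.of fun a b : Fin n => (Vᴴ * V) (i, a) (j, b))
      = (Matrix.of fun c a => V c (i, a))ᴴ * (Matrix.of fun c a => V c (j, a)) := by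
  ext a b
  simp [Matrix.mul_apply, Matrix.conjTranspose_apply]

def KSet (n : ℕ) (S : Submodule ℂ (Matrix (Fin n) (Fin n) ℂ)) : Set ℕ :=
  {k | ∃ r : ℕ, ∃ A : Fin r → Matrix (Fin k) (Fin n) ℂ, IsKraus A ∧ confGraph A = S}

def RSet (n : ℕ) (S : Submodule ℂ (Matrix (Fin n) (Fin n) ℂ)) : Set ℕ :=
  {ρ : ℕ | ∃ m : ℕ, ∃ B : Matrix (Fin m × Fin n) (Fin m × Fin n) ℂ,
    B.PosSemidef ∧
    (∀ i j : Fin m, (Matrix.of fun a b : Fin n => B (i, a) (j, b)) ∈ S) ∧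
    Submodule.span ℂ {C | ∃ i j : Fin m,
      C = Matrix.of fun a b : Fin n => B (i, a) (j, b)} = S ∧
    (∑ i : Fin m, Matrix.of fun a b : Fin n => B (i, a) (i, b)) = 1 ∧
    B.rank = ρ}

lemma kraus_mem_RSet {n k r : ℕ} {S : Submodule ℂ (Matrix (Fin n) (Fin n) ℂ)}
    (A : Fin r → Matrix (Fin k) (Fin n) ℂ)
    (hA : IsKraus A) (hconf : confGraph A = S) :
    ∃ ρ ∈ RSet n S, ρ ≤ k := by
  classical
  set V : Matrix (Fin k) (Fin r × Fin n) ℂ := Matrix.of fun c pa => A pa.1 c pa.2 with hVdef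
  set B := Vᴴ * V with hBdef
  have hslice : ∀ i : Fin r, (Matrix.of fun c a => V c (i, a)) = A i := fun i => rfl
  have hblock : ∀ i j : Fin r,
      (Matrix.of fun a b : Fin n => B (i, a) (j, b)) = (A i)ᴴ * A j := by
    intro i j
    rw [hBdef, slice_conj_mul, hslice, hslice]
  refine ⟨B.rank, ⟨r, B, Matrix.posSemidef_conjTranspose_mul_self V, ?_, ?_, ?_, rfl⟩, ?_⟩
  · intro i j
    rw [hblock]
    exact hconf ▸ Submodule.subset_span ⟨i, j, rfl⟩
  · have hset : {C | ∃ i j : Fin r, C = Matrix.of fun a b : Fin n => B (i, a) (j, b)}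
        = {C | ∃ i j, C = (A i)ᴴ * A j} := by
      ext C
      constructor
      · rintro ⟨i, j, rfl⟩; exact ⟨i, j, (hblock i j).symm ▸ rfl⟩
      · rintro ⟨i, j, rfl⟩; exact ⟨i, j, (hblock i j).symm⟩
    rw [hset]
    exact hconf
  · calc (∑ i : Fin r, Matrix.of fun a b : Fin n => B (i, a) (i, b))
        = ∑ i, (A i)ᴴ * A i := by
          refine Finset.sum_congr rfl fun i _ => hblock i i
      _ = 1 := hA
  · rw [hBdef, Matrix.rank_conjTranspose_mul_self]
    exact Matrix.rank_le_card_height V |>.trans (by simp)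

lemma RSet_subset_KSet {n : ℕ} {S : Submodule ℂ (Matrix (Fin n) (Fin n) ℂ)} :
    RSet n S ⊆ KSet n S := by
  rintro ρ ⟨m, B, hPSD, hblocks, hspan, hsum, hrank⟩
  subst hrank
  obtain ⟨ρ, V, hρ, hV⟩ := psd_factor' hPSD
  rw [← hρ]
  refine ⟨m, fun p => Matrix.of fun c a => V c (p, a), ?_, ?_⟩
  · show (∑ p : Fin m, _) = _
    calc (∑ p : Fin m, (Matrix.of fun c a => V c (p, a))ᴴ * (Matrix.of fun c a => V c (p, a)))
        = ∑ p : Fin m, (Matrix.of fun a b : Fin n => B (p, a) (p, b)) := by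
          refine Finset.sum_congr rfl fun p _ => ?_
          rw [← hV, slice_conj_mul]
      _ = 1 := hsum
  · show Submodule.span ℂ _ = S
    have hset : {C | ∃ i j : Fin m,
        C = (Matrix.of fun c a => V c (i, a))ᴴ * (Matrix.of fun c a => V c (j, a))}
        = {C | ∃ i j : Fin m, C = Matrix.of fun a b : Fin n => B (i, a) (j, b)} := by
      ext C
      constructor
      · rintro ⟨i, j, rfl⟩; exact ⟨i, j, by rw [← hV, slice_conj_mul]⟩
      · rintro ⟨i, j, rfl⟩; exact ⟨i, j, by rw [← hV, slice_conj_mul]⟩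
    rw [hset, hspan]

lemma gamma_eq_sInf_RSet {n : ℕ} {S : Submodule ℂ (Matrix (Fin n) (Fin n) ℂ)} :
    gammaOS S = sInf (RSet n S) := by
  have hg : gammaOS S = sInf (KSet n S) := rfl
  by_cases hK : (KSet n S).Nonempty
  · obtain ⟨r, A, hA, hconf⟩ := Nat.sInf_mem hK
    obtain ⟨ρ, hρR, hρle⟩ := kraus_mem_RSet A hA hconf
    rw [hg]
    refine le_antisymm ?_ ?_
    · exact Nat.sInf_le (RSet_subset_KSet (Nat.sInf_mem ⟨ρ, hρR⟩))
    · exact le_trans (Nat.sInf_le hρR) hρle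
  · rw [Set.not_nonempty_iff_eq_empty] at hK
    have hR : RSet n S = ∅ := Set.eq_empty_of_subset_empty (hK ▸ RSet_subset_KSet)
    rw [hg, hK, hR]

lemma posSemidef_smul_one_add_smul {n : ℕ} {G : Matrix (Fin n) (Fin n) ℂ} (hG : Gᴴ = G)
    {c ε : ℝ} (hε : 0 ≤ ε)
    (hsmall : ε * (∑ a, ∑ b, ‖G a b‖) ≤ c) :
    Matrix.PosSemidef ((c : ℂ) • 1 + (ε : ℂ) • G) := by
  have habs : (0:ℝ) ≤ ∑ a, ∑ b, ‖G a b‖ :=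
    Finset.sum_nonneg fun a _ => Finset.sum_nonneg fun b _ => norm_nonneg _
  have hc : 0 ≤ c := le_trans (mul_nonneg hε habs) hsmall
  refine Matrix.PosSemidef.of_dotProduct_mulVec_nonneg ?_ ?_
  · show _ = _
    rw [Matrix.conjTranspose_add, Matrix.conjTranspose_smul, Matrix.conjTranspose_smul,
      Matrix.conjTranspose_one, hG]
    simp [Complex.star_def, Complex.conj_ofReal]
  · intro x
    have hq : star x ⬝ᵥ ((c : ℂ) • 1 + (ε : ℂ) • G) *ᵥ x
        = (c : ℂ) * (star x ⬝ᵥ x) + (ε : ℂ) * (star x ⬝ᵥ (G *ᵥ x)) := by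
      rw [Matrix.add_mulVec, Matrix.smul_mulVec, Matrix.smul_mulVec,
        Matrix.one_mulVec, dotProduct_add, dotProduct_smul, dotProduct_smul]
      simp [smul_eq_mul]
    set q : ℂ := star x ⬝ᵥ (G *ᵥ x) with hqdef
    set Sig : ℝ := ∑ i, Complex.normSq (x i) with hSig
    have hSignn : 0 ≤ Sig := Finset.sum_nonneg fun i _ => Complex.normSq_nonneg _
    have hxx : (star x ⬝ᵥ x) = (Sig : ℂ) := by
      rw [hSig]
      push_cast
      simp only [dotProduct, Pi.star_apply, Complex.star_def]
      refine Finset.sum_congr rfl fun i _ => ?_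
      rw [Complex.normSq_eq_conj_mul_self]
    have hGc : ∀ a b, (starRingEnd ℂ) (G a b) = G b a := by
      intro a b
      rw [← Complex.star_def, ← Matrix.conjTranspose_apply, hG]
    have hq2 : q = ∑ a, ∑ b, (starRingEnd ℂ) (x a) * G a b * x b := by
      rw [hqdef]
      simp only [dotProduct, Matrix.mulVec, dotProduct, Pi.star_apply, Complex.star_def,
        Finset.mul_sum]
      exact Finset.sum_congr rfl fun a _ => Finset.sum_congr rfl fun b _ => by ring
    have hqreal : (starRingEnd ℂ) q = q := by
      calc (starRingEnd ℂ) q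
          = ∑ a, ∑ b, x a * (starRingEnd ℂ) (G a b) * (starRingEnd ℂ) (x b) := by
            rw [hq2, map_sum]
            refine Finset.sum_congr rfl fun a _ => ?_
            rw [map_sum]
            refine Finset.sum_congr rfl fun b _ => ?_
            simp only [_root_.map_mul, Complex.conj_conj]
        _ = ∑ a, ∑ b, x a * G b a * (starRingEnd ℂ) (x b) := by simp_rw [hGc]
        _ = ∑ b, ∑ a, x a * G b a * (starRingEnd ℂ) (x b) := Finset.sum_comm
        _ = q := by
            rw [hq2]
            exact Finset.sum_congr rfl fun b _ => Finset.sum_congr rfl fun a _ => by ring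
    have him : q.im = 0 := by
      have := congrArg Complex.im hqreal
      simp only [Complex.conj_im] at this
      linarith
    have hxab : ∀ a b : Fin n, ‖x a‖ * ‖x b‖ ≤ Sig := by
      intro a b
      have h1 : Complex.normSq (x a) ≤ Sig :=
        Finset.single_le_sum (f := fun i => Complex.normSq (x i))
          (fun i _ => Complex.normSq_nonneg _) (Finset.mem_univ a)
      have h2 : Complex.normSq (x b) ≤ Sig :=
        Finset.single_le_sum (f := fun i => Complex.normSq (x i))
          (fun i _ => Complex.normSq_nonneg _) (Finset.mem_univ b)
      have e1 : ‖x a‖ ^ 2 = Complex.normSq (x a) := Complex.sq_norm _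
      have e2 : ‖x b‖ ^ 2 = Complex.normSq (x b) := Complex.sq_norm _
      nlinarith [norm_nonneg (x a), norm_nonneg (x b),
        sq_nonneg (‖x a‖ - ‖x b‖)]
    have hqbound : ‖q‖ ≤ (∑ a, ∑ b, ‖G a b‖) * Sig := by
      rw [hq2, Finset.sum_mul]
      refine le_trans (norm_sum_le _ _) (Finset.sum_le_sum fun a _ => ?_)
      rw [Finset.sum_mul]
      refine le_trans (norm_sum_le _ _) (Finset.sum_le_sum fun b _ => ?_)
      rw [norm_mul, norm_mul, Complex.norm_conj]
      calc ‖x a‖ * ‖G a b‖ * ‖x b‖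
          = ‖G a b‖ * (‖x a‖ * ‖x b‖) := by ring
        _ ≤ ‖G a b‖ * Sig :=
            mul_le_mul_of_nonneg_left (hxab a b) (norm_nonneg _)
    have hre : q.re ≥ -((∑ a, ∑ b, ‖G a b‖) * Sig) := by
      have := Complex.abs_re_le_norm q
      have h2 := neg_abs_le q.re
      linarith
    rw [hq, hxx]
    rw [Complex.le_def]
    constructor
    · simp only [Complex.add_re, Complex.mul_re, Complex.ofReal_re, Complex.ofReal_im,
        Complex.zero_re, him, zero_mul, mul_zero, sub_zero]
      nlinarith [mul_le_mul_of_nonneg_left hre hε, mul_le_mul_of_nonneg_right hsmall hSignn]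
    · simp [him]

open scoped MatrixOrder in
lemma KSet_nonempty {n : ℕ} {S : Submodule ℂ (Matrix (Fin n) (Fin n) ℂ)}
    (hS : IsOperatorSystem S) : (KSet n S).Nonempty := by
  classical
  set d := Module.finrank ℂ S with hd
  let bS : Module.Basis (Fin d) ℂ S := Module.finBasis ℂ S
  let F : Fin d → Matrix (Fin n) (Fin n) ℂ := fun j => (bS j : Matrix (Fin n) (Fin n) ℂ)
  have hFS : ∀ j, F j ∈ S := fun j => (bS j).2
  have hFspan : Submodule.span ℂ (Set.range F) = S := by
    have h1 : Set.range F = S.subtype '' (Set.range bS) := by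
      rw [← Set.range_comp]; rfl
    rw [h1, ← Submodule.map_span, bS.span_eq, Submodule.map_subtype_top]
  -- Hermitian spanning family
  let G : Fin d ⊕ Fin d → Matrix (Fin n) (Fin n) ℂ :=
    Sum.elim (fun j => F j + (F j)ᴴ) (fun j => Complex.I • (F j - (F j)ᴴ))
  have hGHerm : ∀ t, (G t)ᴴ = G t := by
    rintro (j | j)
    · simp [G, Matrix.conjTranspose_add, add_comm]
    · simp only [G, Sum.elim_inr, Matrix.conjTranspose_smul, Matrix.conjTranspose_sub,
        Complex.star_def, Complex.conj_I, Matrix.conjTranspose_conjTranspose]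
      rw [smul_sub, smul_sub, neg_smul, neg_smul]
      abel
  have hGS : ∀ t, G t ∈ S := by
    rintro (j | j)
    · exact S.add_mem (hFS j) (hS.2 _ (hFS j))
    · exact S.smul_mem _ (S.sub_mem (hFS j) (hS.2 _ (hFS j)))
  -- the bound and epsilon
  set T : ℝ := 1 + ∑ t, (∑ a, ∑ b, ‖G t a b‖) with hT
  have habs_nn : ∀ t, (0:ℝ) ≤ ∑ a, ∑ b, ‖G t a b‖ := fun t =>
    Finset.sum_nonneg fun a _ => Finset.sum_nonneg fun b _ => norm_nonneg _
  have hT1 : (1:ℝ) ≤ T := le_add_of_nonneg_right (Finset.sum_nonneg fun t _ => habs_nn t)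
  have hTpos : (0:ℝ) < T := lt_of_lt_of_le one_pos hT1
  set c : ℝ := 1 / (2 * d + 1) with hc
  have hcpos : 0 < c := by positivity
  set ε : ℝ := c / T with hε
  have hεpos : 0 < ε := by positivity
  have hsmall : ∀ t, ε * (∑ a, ∑ b, ‖G t a b‖) ≤ c := by
    intro t
    have h1 : (∑ a, ∑ b, ‖G t a b‖) ≤ T := by
      rw [hT]
      have := Finset.single_le_sum (f := fun t => ∑ a, ∑ b, ‖G t a b‖)
        (fun t _ => habs_nn t) (Finset.mem_univ t)
      linarith
    calc ε * (∑ a, ∑ b, ‖G t a b‖) ≤ ε * T :=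
          mul_le_mul_of_nonneg_left h1 hεpos.le
      _ = c := by rw [hε, div_mul_cancel₀ _ hTpos.ne']
  have hsmall_neg : ε * (∑ a, ∑ b, ‖(-∑ t, G t) a b‖) ≤ c := by
    have h1 : (∑ a, ∑ b, ‖(-∑ t, G t) a b‖) ≤ T := by
      have h2 : ∀ a b : Fin n, ‖(-∑ t, G t) a b‖ ≤ ∑ t, ‖G t a b‖ := by
        intro a b
        simp only [Matrix.neg_apply, Matrix.sum_apply, norm_neg]
        exact norm_sum_le _ _
      calc (∑ a, ∑ b, ‖(-∑ t, G t) a b‖)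
          ≤ ∑ a, ∑ b, ∑ t, ‖G t a b‖ :=
            Finset.sum_le_sum fun a _ => Finset.sum_le_sum fun b _ => h2 a b
        _ = ∑ a, ∑ t, ∑ b, ‖G t a b‖ :=
            Finset.sum_congr rfl fun a _ => Finset.sum_comm
        _ = ∑ t, ∑ a, ∑ b, ‖G t a b‖ := Finset.sum_comm
        _ ≤ T := by rw [hT]; linarith
    calc ε * _ ≤ ε * T := mul_le_mul_of_nonneg_left h1 hεpos.le
      _ = c := by rw [hε, div_mul_cancel₀ _ hTpos.ne']
  -- the E family
  let X := Option (Fin d ⊕ Fin d)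
  let GE : X → Matrix (Fin n) (Fin n) ℂ := fun o => Option.elim o (-∑ t, G t) G
  have hGEHerm : ∀ o, (GE o)ᴴ = GE o := by
    rintro (_ | t)
    · simp only [GE, Option.elim, Matrix.conjTranspose_neg, Matrix.conjTranspose_sum]
      congr 1
      exact Finset.sum_congr rfl fun t _ => hGHerm t
    · exact hGHerm t
  have hGEsmall : ∀ o, ε * (∑ a, ∑ b, ‖GE o a b‖) ≤ c := by
    rintro (_ | t)
    · exact hsmall_neg
    · exact hsmall t
  let E : X → Matrix (Fin n) (Fin n) ℂ := fun o => (c : ℂ) • 1 + (ε : ℂ) • GE o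
  have hEPSD : ∀ o, (E o).PosSemidef := fun o =>
    posSemidef_smul_one_add_smul (hGEHerm o) hεpos.le (hGEsmall o)
  have hES : ∀ o, E o ∈ S := by
    intro o
    refine S.add_mem (S.smul_mem _ hS.1) (S.smul_mem _ ?_)
    rcases o with _ | t
    · exact S.neg_mem (Submodule.sum_mem S fun t _ => hGS t)
    · exact hGS t
  have hcard : (Fintype.card X : ℂ) * (c:ℂ) = 1 := by
    have : Fintype.card X = 2 * d + 1 := by
      simp [X, Fintype.card_option, Fintype.card_sum, Fintype.card_fin]
      ring
    rw [this, hc]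
    push_cast
    have : (2 * (d:ℂ) + 1) ≠ 0 := by
      intro h
      have := congrArg Complex.re h
      push_cast at this
      linarith
    field_simp
  have hEsum : ∑ o, E o = 1 := by
    have hGEsum : ∑ o, GE o = 0 := by
      rw [Fintype.sum_option]
      simp only [GE, Option.elim]
      rw [Fintype.sum_sum_type]
      abel
    calc ∑ o, E o = (Fintype.card X : ℂ) • ((c:ℂ) • 1) + (ε:ℂ) • ∑ o, GE o := by
          rw [Finset.sum_add_distrib, Finset.sum_const, Finset.card_univ, Finset.smul_sum]
          simp [← Nat.cast_smul_eq_nsmul ℂ]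
      _ = 1 := by
          rw [hGEsum, smul_zero, add_zero, smul_smul, hcard, one_smul]
  -- span of E equals S
  have hEspan : Submodule.span ℂ (Set.range E) = S := by
    refine le_antisymm (Submodule.span_le.mpr ?_) ?_
    · rintro _ ⟨o, rfl⟩; exact hES o
    · have h1W : (1 : Matrix (Fin n) (Fin n) ℂ) ∈ Submodule.span ℂ (Set.range E) := by
        rw [← hEsum]
        exact Submodule.sum_mem _ fun o _ => Submodule.subset_span ⟨o, rfl⟩
      have hGW : ∀ t, G t ∈ Submodule.span ℂ (Set.range E) := by
        intro t
        have hmem : E (some t) - (c:ℂ) • 1 ∈ Submodule.span ℂ (Set.range E) :=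
          Submodule.sub_mem _ (Submodule.subset_span ⟨some t, rfl⟩)
            (Submodule.smul_mem _ _ h1W)
        have heq : G t = ((ε:ℂ))⁻¹ • (E (some t) - (c:ℂ) • 1) := by
          have : E (some t) - (c:ℂ) • 1 = (ε:ℂ) • G t := by
            simp [E, GE]
          rw [this, smul_smul, inv_mul_cancel₀, one_smul]
          exact_mod_cast Complex.ofReal_ne_zero.mpr hεpos.ne'
        rw [heq]
        exact Submodule.smul_mem _ _ hmem
      have hFW : ∀ j, F j ∈ Submodule.span ℂ (Set.range E) := by
        intro j
        have heq : F j = (1/2 : ℂ) • G (Sum.inl j) + (-(Complex.I)/2 : ℂ) • G (Sum.inr j) := by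
          simp only [G, Sum.elim_inl, Sum.elim_inr, smul_smul]
          rw [show (-(Complex.I)/2 : ℂ) * Complex.I = 1/2 by
            field_simp [Complex.I_mul_I]; simp [Complex.I_sq]]
          rw [smul_add, smul_sub]
          module
        rw [heq]
        exact Submodule.add_mem _ (Submodule.smul_mem _ _ (hGW _))
          (Submodule.smul_mem _ _ (hGW _))
      rw [← hFspan]
      refine Submodule.span_le.mpr ?_
      rintro _ ⟨j, rfl⟩
      exact hFW j
  -- Kraus operators
  let Y := X × Fin n
  let e : Y ≃ Fin (Fintype.card Y) := Fintype.equivFin Y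
  let eo : Fin (Fintype.card X) ≃ X := (Fintype.equivFin X).symm
  let sq : X → Matrix (Fin n) (Fin n) ℂ := fun o => CFC.sqrt (E o)
  have hsqH : ∀ o, (sq o)ᴴ = sq o := fun o => (CFC.sqrt_nonneg (E o)).posSemidef.1
  have hsqmul : ∀ o, sq o * sq o = E o := fun o => CFC.sqrt_mul_sqrt_self (E o) (hEPSD o).nonneg
  let A : Fin (Fintype.card X) → Matrix (Fin (Fintype.card Y)) (Fin n) ℂ := fun i =>
    Matrix.of fun cI a => if (e.symm cI).1 = eo i then sq (eo i) (e.symm cI).2 a else 0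
  have hprod : ∀ i j, (A i)ᴴ * A j = if i = j then E (eo i) else 0 := by
    intro i j
    ext a b
    rw [Matrix.mul_apply]
    refine Eq.trans (Fintype.sum_equiv e.symm _ (fun p : Y =>
      (starRingEnd ℂ) (if p.1 = eo i then sq (eo i) p.2 a else 0) *
        (if p.1 = eo j then sq (eo j) p.2 b else 0)) fun cI => rfl) ?_
    rw [Fintype.sum_prod_type]
    by_cases hij : i = j
    · subst hij
      rw [if_pos rfl]
      rw [Finset.sum_eq_single (eo i)]
      · simp only [if_pos rfl]
        calc ∑ v, (starRingEnd ℂ) (sq (eo i) v a) * sq (eo i) v b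
            = ((sq (eo i))ᴴ * sq (eo i)) a b := by
              rw [Matrix.mul_apply]
              simp [Matrix.conjTranspose_apply, Complex.star_def]
          _ = E (eo i) a b := by rw [hsqH, hsqmul]
      · intro o _ ho
        simp [if_neg ho]
      · simp
    · rw [if_neg hij]
      have : ∀ o : X, ¬(o = eo i ∧ o = eo j) := by
        rintro o ⟨h1, h2⟩
        exact hij (eo.injective (h1 ▸ h2))
      refine Finset.sum_eq_zero fun o _ => Finset.sum_eq_zero fun v _ => ?_
      by_cases h1 : o = eo i
      · have h2 : ¬ o = eo j := fun h2 => this o ⟨h1, h2⟩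
        simp [if_pos h1, if_neg h2]
      · simp [if_neg h1]
  refine ⟨Fintype.card Y, Fintype.card X, A, ?_, ?_⟩
  · show (∑ i, (A i)ᴴ * A i) = 1
    calc ∑ i, (A i)ᴴ * A i = ∑ i, E (eo i) := by
          refine Finset.sum_congr rfl fun i _ => ?_
          rw [hprod, if_pos rfl]
      _ = ∑ o, E o := Equiv.sum_comp eo E
      _ = 1 := hEsum
  · show Submodule.span ℂ _ = S
    refine le_antisymm (Submodule.span_le.mpr ?_) ?_
    · rintro _ ⟨i, j, rfl⟩
      rw [hprod]
      by_cases hij : i = j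
      · rw [if_pos hij]; exact hES _
      · rw [if_neg hij]; exact S.zero_mem
    · rw [← hEspan]
      refine Submodule.span_le.mpr ?_
      rintro _ ⟨o, rfl⟩
      refine Submodule.subset_span ⟨eo.symm o, eo.symm o, ?_⟩
      rw [hprod, if_pos rfl, Equiv.apply_symm_apply]

lemma carath_cone {V : Type*} [AddCommGroup V] [Module ℝ V] [FiniteDimensional ℝ V]
    {ι : Type*} [DecidableEq ι] (s : Finset ι) (w : ι → V) (c : ι → ℝ)
    (hc : ∀ i ∈ s, 0 ≤ c i) :
    ∃ t ⊆ s, t.card ≤ Module.finrank ℝ V ∧ ∃ c' : ι → ℝ,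
      (∀ i ∈ t, 0 ≤ c' i) ∧ ∑ i ∈ t, c' i • w i = ∑ i ∈ s, c i • w i := by
  classical
  induction s using Finset.strongInduction generalizing c with
  | _ s ih =>
  by_cases hcard : s.card ≤ Module.finrank ℝ V
  · exact ⟨s, subset_rfl, hcard, c, hc, rfl⟩
  · push_neg at hcard
    have hdep : ¬ LinearIndependent ℝ (fun i : {x // x ∈ s} => w i) := by
      intro hli
      have h1 := hli.fintype_card_le_finrank
      rw [Fintype.card_coe] at h1
      omega
    obtain ⟨g0, hg0sum, i0, hg0i⟩ := Fintype.not_linearIndependent_iff.mp hdep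
    set g : ι → ℝ := fun i => if h : i ∈ s then g0 ⟨i, h⟩ else 0 with hgdef
    have hgsum : ∑ i ∈ s, g i • w i = 0 := by
      rw [← Finset.sum_attach s (fun i => g i • w i)]
      rw [← hg0sum]
      refine Finset.sum_congr rfl fun i _ => ?_
      simp [hgdef, i.2]
    have hex : ∃ i ∈ s, g i ≠ 0 := ⟨i0, i0.2, by simpa [hgdef, i0.2] using hg0i⟩
    obtain ⟨g', hg'sum, j0, hj0s, hj0pos⟩ :
        ∃ g' : ι → ℝ, ∑ i ∈ s, g' i • w i = 0 ∧ ∃ j ∈ s, 0 < g' j := by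
      by_cases hpos : ∃ j ∈ s, 0 < g j
      · exact ⟨g, hgsum, hpos⟩
      · push_neg at hpos
        obtain ⟨i1, hi1s, hi1⟩ := hex
        refine ⟨fun i => -g i, ?_, i1, hi1s, ?_⟩
        · simp only [neg_smul, Finset.sum_neg_distrib, hgsum, neg_zero]
        · have h2 := lt_of_le_of_ne (hpos i1 hi1s) hi1
          show (0:ℝ) < -g i1
          linarith
    set P : Finset ι := s.filter (fun i => 0 < g' i) with hP
    have hj0P : j0 ∈ P := Finset.mem_filter.mpr ⟨hj0s, hj0pos⟩
    have hPne : P.Nonempty := ⟨j0, hj0P⟩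
    set τ : ℝ := P.inf' hPne (fun i => c i / g' i) with hτ
    have hτnn : 0 ≤ τ := by
      refine Finset.le_inf' hPne _ fun i hi => ?_
      obtain ⟨his, hgi⟩ := Finset.mem_filter.mp hi
      exact div_nonneg (hc i his) hgi.le
    obtain ⟨istar, histarP, histareq⟩ := Finset.exists_mem_eq_inf' hPne (fun i => c i / g' i)
    obtain ⟨histars, hgstar⟩ := Finset.mem_filter.mp histarP
    set cnew : ι → ℝ := fun i => c i - τ * g' i with hcnew
    have hcnew_nonneg : ∀ i ∈ s, 0 ≤ cnew i := by
      intro i his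
      by_cases hiP : i ∈ P
      · have h1 : τ ≤ c i / g' i := Finset.inf'_le _ hiP
        have hgi : 0 < g' i := (Finset.mem_filter.mp hiP).2
        have := (le_div_iff₀ hgi).mp h1
        simp only [hcnew]
        linarith
      · have hgi : g' i ≤ 0 := by
          by_contra h
          exact hiP (Finset.mem_filter.mpr ⟨his, lt_of_not_ge h⟩)
        have : τ * g' i ≤ 0 := mul_nonpos_of_nonneg_of_nonpos hτnn hgi
        have := hc i his
        simp only [hcnew]
        linarith
    have hcnew_sum : ∑ i ∈ s, cnew i • w i = ∑ i ∈ s, c i • w i := by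
      simp only [hcnew, sub_smul, Finset.sum_sub_distrib]
      have : ∑ i ∈ s, (τ * g' i) • w i = 0 := by
        simp_rw [mul_smul]
        rw [← Finset.smul_sum, hg'sum, smul_zero]
      rw [this, sub_zero]
    have hzero : cnew istar = 0 := by
      simp only [hcnew]
      rw [hτ, histareq, div_mul_cancel₀ _ hgstar.ne']
      ring
    have hsub : s.erase istar ⊂ s := Finset.erase_ssubset histars
    obtain ⟨t, hts, htcard, c'', h1, h2⟩ :=
      ih (s.erase istar) hsub cnew (fun i hi => hcnew_nonneg i (Finset.mem_of_mem_erase hi))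
    refine ⟨t, hts.trans (Finset.erase_subset _ _), htcard, c'', h1, ?_⟩
    rw [h2, Finset.sum_erase s (by rw [hzero, zero_smul]), hcnew_sum]

lemma exists_indep_finset {V : Type*} [AddCommGroup V] [Module ℂ V] [FiniteDimensional ℂ V]
    (T : Set V) :
    ∃ t : Finset V, ↑t ⊆ T ∧ Submodule.span ℂ (t : Set V) = Submodule.span ℂ T ∧
      t.card = Module.finrank ℂ (Submodule.span ℂ T) := by
  classical
  obtain ⟨s, hsub, hspan, hli⟩ := exists_linearIndependent ℂ T
  have : Finite ↥s := hli.finite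
  haveI : Fintype ↥s := Fintype.ofFinite _
  refine ⟨s.toFinset, by rw [Set.coe_toFinset]; exact hsub, by rw [Set.coe_toFinset, hspan], ?_⟩
  have h1 : Module.finrank ℂ (Submodule.span ℂ s) = s.toFinset.card :=
    finrank_span_set_eq_card hli
  rw [hspan] at h1
  exact h1.symm

lemma part2_main {n : ℕ} {S : Submodule ℂ (Matrix (Fin n) (Fin n) ℂ)}
    (hS : IsOperatorSystem S) (hn : 2 ≤ n) :
    ∃ m ≤ 2 * n ^ 3, ∃ B : Matrix (Fin m × Fin n) (Fin m × Fin n) ℂ,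
      B.PosSemidef ∧
      (∀ i j : Fin m, (Matrix.of fun a b : Fin n => B (i, a) (j, b)) ∈ S) ∧
      Submodule.span ℂ {C | ∃ i j : Fin m,
        C = Matrix.of fun a b : Fin n => B (i, a) (j, b)} = S ∧
      (∑ i : Fin m, Matrix.of fun a b : Fin n => B (i, a) (i, b)) = 1 ∧
      B.rank = gammaOS S := by
  classical
  have hne := KSet_nonempty hS
  set γ := gammaOS S with hγ
  have hγK : γ ∈ KSet n S := Nat.sInf_mem hne
  obtain ⟨r, A, hKraus, hconf⟩ := hγK
  -- products that span S
  set T : Set (Matrix (Fin n) (Fin n) ℂ) := {C | ∃ i j, C = (A i)ᴴ * A j} with hT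
  have hspanT : Submodule.span ℂ T = S := hconf
  obtain ⟨tf, htsub, htspan, htcard⟩ := exists_indep_finset T
  obtain ⟨d', hd'⟩ : ∃ d', tf.card = d' := ⟨tf.card, rfl⟩
  have hd'n : d' ≤ n ^ 2 := by
    have h1 : Module.finrank ℂ (Submodule.span ℂ T) = Module.finrank ℂ ↥S := by
      rw [hspanT]
    have h2 : Module.finrank ℂ ↥S ≤ Module.finrank ℂ (Matrix (Fin n) (Fin n) ℂ) :=
      Submodule.finrank_le S
    have h3 : Module.finrank ℂ (Matrix (Fin n) (Fin n) ℂ) = n ^ 2 := by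
      rw [Module.finrank_matrix]
      simp [pow_two]
    omega
  -- enumerate tf and choose pairs
  let e1 : Fin d' ≃ ↥tf := (hd' ▸ tf.equivFin).symm
  have hchoice : ∀ u : Fin d', ∃ i j, ((e1 u : ↥tf) : Matrix (Fin n) (Fin n) ℂ) = (A i)ᴴ * A j := by
    intro u
    exact htsub (e1 u).2
  choose iu ju hiju using hchoice
  -- eta
  set η : ℝ := 1 / (2 * d' + 1) with hη
  have hd0 : (0:ℝ) ≤ (d' : ℝ) := Nat.cast_nonneg _
  have hηpos : 0 < η := by
    rw [hη]
    apply div_pos one_pos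
    linarith
  have hη1 : η * (2 * d' + 1) = 1 := by
    rw [hη]; field_simp
  -- real smul cast helper
  have hcast : ∀ (x : ℝ) (M : Matrix (Fin n) (Fin n) ℂ), x • M = (x : ℂ) • M := by
    intro x M
    ext a b
    simp [Complex.real_smul]
  -- counts
  set cnt : Fin r → ℕ := fun i =>
    (Finset.univ.filter (fun u => iu u = i)).card +
      (Finset.univ.filter (fun u => ju u = i)).card with hcnt
  have hcnt_le : ∀ i, (cnt i : ℝ) ≤ 2 * d' := by
    intro i
    have h1 := Finset.card_filter_le Finset.univ (fun u => iu u = i)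
    have h2 := Finset.card_filter_le Finset.univ (fun u => ju u = i)
    rw [Finset.card_univ, Fintype.card_fin] at h1 h2
    have h3 : cnt i ≤ 2 * d' := by
      show (Finset.univ.filter (fun u => iu u = i)).card
        + (Finset.univ.filter (fun u => ju u = i)).card ≤ 2 * d'
      omega
    calc (cnt i : ℝ) ≤ ((2 * d' : ℕ) : ℝ) := by exact_mod_cast h3
      _ = 2 * d' := by push_cast; ring
  -- coefficients
  set w : Fin r → Matrix (Fin n) (Fin n) ℂ := fun i => (A i)ᴴ * A i with hw
  set c : Fin r → ℝ := fun i => 1 - η * cnt i with hcdef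
  have hc_nonneg : ∀ i, 0 ≤ c i := by
    intro i
    have h1 : η * (cnt i : ℝ) ≤ η * (2 * d') :=
      mul_le_mul_of_nonneg_left (hcnt_le i) hηpos.le
    have h2 : η * (2 * (d':ℝ)) ≤ 1 := by
      nlinarith [hη1]
    simp only [hcdef]
    linarith
  -- regrouping identity
  have hgroup : ∀ g : Fin d' → Fin r,
      ∑ i, ((Finset.univ.filter (fun u => g u = i)).card : ℝ) • w i = ∑ u, w (g u) := by
    intro g
    have h1 : ∀ i : Fin r, ((Finset.univ.filter (fun u => g u = i)).card : ℝ) • w i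
        = ∑ u ∈ Finset.univ.filter (fun u => g u = i), w (g u) := by
      intro i
      rw [Finset.sum_congr rfl (fun u hu => by
        rw [(Finset.mem_filter.mp hu).2])]
      rw [Finset.sum_const, ← Nat.cast_smul_eq_nsmul ℝ]
    rw [Finset.sum_congr rfl fun i _ => h1 i]
    exact Finset.sum_fiberwise_of_maps_to (fun u _ => Finset.mem_univ (g u)) _
  have hkey : ∑ u, (η • w (iu u) + η • w (ju u)) + ∑ i, c i • w i = 1 := by
    have hsplit : ∑ i, c i • w i
        = ∑ i, w i - η • (∑ u, w (iu u) + ∑ u, w (ju u)) := by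
      have h1 : ∀ i, c i • w i = w i - (η * cnt i) • w i := by
        intro i
        simp only [hcdef, sub_smul, one_smul]
      rw [Finset.sum_congr rfl fun i _ => h1 i, Finset.sum_sub_distrib]
      congr 1
      have h2 : ∀ i, (η * (cnt i:ℝ)) • w i
          = η • (((Finset.univ.filter (fun u => iu u = i)).card : ℝ) • w i)
            + η • (((Finset.univ.filter (fun u => ju u = i)).card : ℝ) • w i) := by
        intro i
        rw [← smul_add, ← add_smul, hcnt]
        push_cast
        rw [mul_smul]
      rw [Finset.sum_congr rfl fun i _ => h2 i, Finset.sum_add_distrib,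
        ← Finset.smul_sum, ← Finset.smul_sum, hgroup, hgroup, smul_add]
    rw [hsplit, Finset.sum_add_distrib, ← Finset.smul_sum, ← Finset.smul_sum]
    have h3 : ∑ i, w i = 1 := hKraus
    rw [h3, smul_add]
    abel
  -- Caratheodory
  obtain ⟨t', ht'sub, ht'card, c', hc'nn, hc'sum⟩ :=
    carath_cone Finset.univ w c (fun i _ => hc_nonneg i)
  set q : ℕ := t'.card with hq
  have hqle : q ≤ 2 * n ^ 2 := by
    have h1 : Module.finrank ℝ (Matrix (Fin n) (Fin n) ℂ) = 2 * n ^ 2 := by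
      rw [Module.finrank_matrix, Complex.finrank_real_complex]
      simp [pow_two]
      ring
    rw [h1] at ht'card
    omega
  let e2 : Fin q ≃ ↥t' := ((show t'.card = q from hq.symm) ▸ t'.equivFin).symm
  -- the final family
  obtain ⟨m, hmdef⟩ : ∃ m, m = d' + (d' + q) := ⟨_, rfl⟩
  have hmle : m ≤ 2 * n ^ 3 := by
    have h4 : m ≤ 4 * n ^ 2 := by omega
    have h5 : 4 * n ^ 2 ≤ 2 * n ^ 3 := by nlinarith
    omega
  let φ : Fin m ≃ (Fin d' ⊕ (Fin d' ⊕ Fin q)) :=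
    ((show d' + (d' + q) = m from hmdef.symm) ▸ finSumFinEquiv.symm).trans
      (Equiv.sumCongr (Equiv.refl (Fin d')) finSumFinEquiv.symm)
  let Z0 : (Fin d' ⊕ (Fin d' ⊕ Fin q)) → Matrix (Fin γ) (Fin n) ℂ :=
    Sum.elim (fun u => ((Real.sqrt η : ℝ) : ℂ) • A (iu u))
      (Sum.elim (fun u => ((Real.sqrt η : ℝ) : ℂ) • A (ju u))
        (fun v => ((Real.sqrt (c' ((e2 v : ↥t') : Fin r)) : ℝ) : ℂ) • A ((e2 v : ↥t') : Fin r)))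
  let Z : Fin m → Matrix (Fin γ) (Fin n) ℂ := fun p => Z0 (φ p)
  let V : Matrix (Fin γ) (Fin m × Fin n) ℂ := Matrix.of fun cc pa => Z pa.1 cc pa.2
  have hblock : ∀ p p' : Fin m,
      (Matrix.of fun a b : Fin n => (Vᴴ * V) (p, a) (p', b)) = (Z p)ᴴ * Z p' := by
    intro p p'
    rw [slice_conj_mul]
    rfl
  have hmulsmul : ∀ (z z' : ℂ) (s s' : Fin r),
      ((z • A s)ᴴ * (z' • A s')) = (star z * z') • ((A s)ᴴ * A s') := by
    intro z z' s s'
    rw [Matrix.conjTranspose_smul, Matrix.smul_mul, Matrix.mul_smul, smul_smul]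
  have hPmem : ∀ s s' : Fin r, (A s)ᴴ * A s' ∈ S := fun s s' =>
    hconf ▸ Submodule.subset_span ⟨s, s', rfl⟩
  have hform : ∀ x, ∃ (z : ℂ) (s : Fin r), Z0 x = z • A s := by
    rintro (u | u | v)
    exacts [⟨_, _, rfl⟩, ⟨_, _, rfl⟩, ⟨_, _, rfl⟩]
  have hZmem : ∀ p p' : Fin m, (Z p)ᴴ * Z p' ∈ S := by
    intro p p'
    obtain ⟨z, s, hz⟩ := hform (φ p)
    obtain ⟨z', s', hz'⟩ := hform (φ p')
    show (Z0 (φ p))ᴴ * Z0 (φ p') ∈ S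
    rw [hz, hz', hmulsmul]
    exact S.smul_mem _ (hPmem s s')
  have hsqη : (star (((Real.sqrt η : ℝ) : ℂ)) * ((Real.sqrt η : ℝ) : ℂ)) = ((η : ℝ) : ℂ) := by
    rw [Complex.star_def, Complex.conj_ofReal, ← Complex.ofReal_mul, Real.mul_self_sqrt hηpos.le]
  have hsum : ∑ p : Fin m, (Z p)ᴴ * Z p = 1 := by
    have step1 : ∑ p : Fin m, (Z p)ᴴ * Z p = ∑ x, (Z0 x)ᴴ * Z0 x :=
      Equiv.sum_comp φ (fun x => (Z0 x)ᴴ * Z0 x)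
    have step2 : ∑ x, (Z0 x)ᴴ * Z0 x
        = (∑ u : Fin d', η • w (iu u)) + ((∑ u : Fin d', η • w (ju u))
            + ∑ v : Fin q, c' ((e2 v : ↥t') : Fin r) • w ((e2 v : ↥t') : Fin r)) := by
      rw [Fintype.sum_sum_type, Fintype.sum_sum_type]
      congr 1
      · refine Finset.sum_congr rfl fun u _ => ?_
        show ((((Real.sqrt η : ℝ):ℂ)) • A (iu u))ᴴ * ((((Real.sqrt η : ℝ):ℂ)) • A (iu u)) = _
        rw [hmulsmul, hsqη, hcast]
      congr 1
      · refine Finset.sum_congr rfl fun u _ => ?_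
        show ((((Real.sqrt η : ℝ):ℂ)) • A (ju u))ᴴ * ((((Real.sqrt η : ℝ):ℂ)) • A (ju u)) = _
        rw [hmulsmul, hsqη, hcast]
      · refine Finset.sum_congr rfl fun v _ => ?_
        show ((((Real.sqrt (c' _) : ℝ):ℂ)) • A _)ᴴ * ((((Real.sqrt (c' _) : ℝ):ℂ)) • A _) = _
        rw [hmulsmul, Complex.star_def, Complex.conj_ofReal, ← Complex.ofReal_mul,
          Real.mul_self_sqrt (hc'nn _ (e2 v).2), hcast]
    have step3 : ∑ v : Fin q, c' ((e2 v : ↥t') : Fin r) • w ((e2 v : ↥t') : Fin r)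
        = ∑ i ∈ t', c' i • w i := by
      rw [Equiv.sum_comp e2 (fun x : ↥t' => c' (x : Fin r) • w (x : Fin r))]
      exact Finset.sum_coe_sort t' (fun i => c' i • w i)
    rw [step1, step2, step3, hc'sum]
    have h4 : ∑ u : Fin d', (η • w (iu u) + η • w (ju u))
        = ∑ u : Fin d', η • w (iu u) + ∑ u : Fin d', η • w (ju u) :=
      Finset.sum_add_distrib
    have h5 := hkey
    rw [h4] at h5
    calc (∑ u : Fin d', η • w (iu u)) + ((∑ u : Fin d', η • w (ju u)) + ∑ i, c i • w i)
        = (∑ u : Fin d', η • w (iu u) + ∑ u : Fin d', η • w (ju u)) + ∑ i, c i • w i := by abel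
      _ = 1 := h5
  have hBsum : (∑ p : Fin m, Matrix.of fun a b : Fin n => (Vᴴ * V) (p, a) (p, b)) = 1 := by
    rw [Finset.sum_congr rfl fun p _ => hblock p p]
    exact hsum
  have hηC : ((η:ℝ):ℂ) ≠ 0 := by
    simp only [ne_eq, Complex.ofReal_eq_zero]
    exact hηpos.ne'
  have hspanB : Submodule.span ℂ {C | ∃ p p' : Fin m,
      C = Matrix.of fun a b : Fin n => (Vᴴ * V) (p, a) (p', b)} = S := by
    have hsetB : {C | ∃ p p' : Fin m, C = Matrix.of fun a b : Fin n => (Vᴴ * V) (p, a) (p', b)}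
        = {C | ∃ p p' : Fin m, C = (Z p)ᴴ * Z p'} := by
      ext C
      constructor
      · rintro ⟨p, p', rfl⟩; exact ⟨p, p', (hblock p p').symm ▸ rfl⟩
      · rintro ⟨p, p', rfl⟩; exact ⟨p, p', (hblock p p').symm⟩
    rw [hsetB]
    refine le_antisymm (Submodule.span_le.mpr ?_) ?_
    · rintro _ ⟨p, p', rfl⟩
      exact hZmem p p'
    · rw [← hspanT, ← htspan]
      refine Submodule.span_le.mpr ?_
      intro x hx
      set u : Fin d' := e1.symm ⟨x, hx⟩ with hu
      have hx1 : x = (A (iu u))ᴴ * A (ju u) := by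
        have := hiju u
        rwa [hu, Equiv.apply_symm_apply] at this
      set p : Fin m := φ.symm (Sum.inl u) with hp
      set p' : Fin m := φ.symm (Sum.inr (Sum.inl u)) with hp'
      have hZp : Z p = ((Real.sqrt η : ℝ) : ℂ) • A (iu u) := by
        show Z0 (φ (φ.symm (Sum.inl u))) = _
        rw [Equiv.apply_symm_apply]
        rfl
      have hZp' : Z p' = ((Real.sqrt η : ℝ) : ℂ) • A (ju u) := by
        show Z0 (φ (φ.symm (Sum.inr (Sum.inl u)))) = _
        rw [Equiv.apply_symm_apply]
        rfl
      have hprod : (Z p)ᴴ * Z p' = ((η:ℝ):ℂ) • x := by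
        rw [hZp, hZp', hmulsmul, hsqη, hx1]
      have hxeq : x = (((η:ℝ):ℂ))⁻¹ • ((Z p)ᴴ * Z p') := by
        rw [hprod, smul_smul, inv_mul_cancel₀ hηC, one_smul]
      rw [hxeq]
      exact Submodule.smul_mem _ _ (Submodule.subset_span ⟨p, p', rfl⟩)
  have hblocksS : ∀ p p' : Fin m,
      (Matrix.of fun a b : Fin n => (Vᴴ * V) (p, a) (p', b)) ∈ S := by
    intro p p'
    rw [hblock]
    exact hZmem p p'
  have hrankB : (Vᴴ * V).rank = γ := by
    refine le_antisymm ?_ ?_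
    · calc (Vᴴ * V).rank = V.rank := Matrix.rank_conjTranspose_mul_self V
        _ ≤ Fintype.card (Fin γ) := Matrix.rank_le_card_height V
        _ = γ := by simp
    · have hmem : (Vᴴ * V).rank ∈ RSet n S :=
        ⟨m, Vᴴ * V, Matrix.posSemidef_conjTranspose_mul_self V, hblocksS, hspanB, hBsum, rfl⟩
      have h6 := Nat.sInf_le hmem
      rwa [← gamma_eq_sInf_RSet] at h6
  exact ⟨m, hmle, Vᴴ * V, Matrix.posSemidef_conjTranspose_mul_self V, hblocksS, hspanB,
    hBsum, hrankB⟩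

lemma part2_zero {S : Submodule ℂ (Matrix (Fin 0) (Fin 0) ℂ)} :
    ∃ m ≤ 2 * 0 ^ 3, ∃ B : Matrix (Fin m × Fin 0) (Fin m × Fin 0) ℂ,
      B.PosSemidef ∧
      (∀ i j : Fin m, (Matrix.of fun a b : Fin 0 => B (i, a) (j, b)) ∈ S) ∧
      Submodule.span ℂ {C | ∃ i j : Fin m,
        C = Matrix.of fun a b : Fin 0 => B (i, a) (j, b)} = S ∧
      (∑ i : Fin m, Matrix.of fun a b : Fin 0 => B (i, a) (i, b)) = 1 ∧
      B.rank = gammaOS S := by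
  have hallsub : ∀ (W W' : Submodule ℂ (Matrix (Fin 0) (Fin 0) ℂ)), W = W' := by
    intro W W'
    ext x
    rw [Subsingleton.elim x 0]
    simp
  have hγ : gammaOS S = 0 := by
    apply Nat.sInf_eq_zero.mpr
    left
    exact ⟨0, fun _ => 0, Subsingleton.elim _ _, hallsub _ _⟩
  refine ⟨0, by norm_num, 1, Matrix.PosSemidef.one, fun i j => i.elim0, ?_, ?_, ?_⟩
  · exact hallsub _ _
  · exact Subsingleton.elim _ _
  · rw [hγ]
    have := Matrix.rank_le_card_height (1 : Matrix (Fin 0 × Fin 0) (Fin 0 × Fin 0) ℂ)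
    simpa using this


lemma part2_one {S : Submodule ℂ (Matrix (Fin 1) (Fin 1) ℂ)} (hS : IsOperatorSystem S) :
    ∃ m ≤ 2 * 1 ^ 3, ∃ B : Matrix (Fin m × Fin 1) (Fin m × Fin 1) ℂ,
      B.PosSemidef ∧
      (∀ i j : Fin m, (Matrix.of fun a b : Fin 1 => B (i, a) (j, b)) ∈ S) ∧
      Submodule.span ℂ {C | ∃ i j : Fin m,
        C = Matrix.of fun a b : Fin 1 => B (i, a) (j, b)} = S ∧
      (∑ i : Fin m, Matrix.of fun a b : Fin 1 => B (i, a) (i, b)) = 1 ∧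
      B.rank = gammaOS S := by
  have htop : ∀ (W : Submodule ℂ (Matrix (Fin 1) (Fin 1) ℂ)),
      (1 : Matrix (Fin 1) (Fin 1) ℂ) ∈ W → W = ⊤ := by
    intro W hW
    rw [eq_top_iff]
    intro x _
    have hx : x = x 0 0 • (1 : Matrix (Fin 1) (Fin 1) ℂ) := by
      ext a b
      rw [Subsingleton.elim a 0, Subsingleton.elim b 0]
      simp
    rw [hx]
    exact W.smul_mem _ hW
  have hStop : S = ⊤ := htop S hS.1
  have hmem1 : (1:ℕ) ∈ KSet 1 S := by
    refine ⟨1, fun _ => 1, ?_, ?_⟩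
    · show (∑ _i : Fin 1, (1 : Matrix (Fin 1) (Fin 1) ℂ)ᴴ * 1) = 1
      simp
    · show Submodule.span ℂ _ = S
      rw [hStop]
      refine htop _ (Submodule.subset_span ?_)
      exact ⟨0, 0, by simp⟩
  have hmem0 : (0:ℕ) ∉ KSet 1 S := by
    rintro ⟨r, A, hk, -⟩
    have h1 := congrFun (congrFun hk 0) 0
    rw [Matrix.sum_apply] at h1
    have h2 : ∀ i ∈ Finset.univ, ((A i)ᴴ * A i) 0 0 = (0:ℂ) := by
      intro i _
      rw [Matrix.mul_apply, Finset.univ_eq_empty, Finset.sum_empty]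
    rw [Finset.sum_congr rfl h2, Finset.sum_const, smul_zero] at h1
    have h3 : (1 : Matrix (Fin 1) (Fin 1) ℂ) 0 0 = 1 := by simp
    rw [h3] at h1
    exact one_ne_zero h1.symm
  have hγ1 : gammaOS S = 1 := by
    refine le_antisymm (Nat.sInf_le hmem1) ?_
    have hne : (KSet 1 S).Nonempty := ⟨1, hmem1⟩
    have hm := Nat.sInf_mem hne
    rcases Nat.eq_zero_or_pos (sInf (KSet 1 S)) with h0 | hpos
    · rw [h0] at hm
      exact absurd hm hmem0
    · exact hpos
  have hblock : (Matrix.of fun a b : Fin 1 =>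
      (1 : Matrix (Fin 1 × Fin 1) (Fin 1 × Fin 1) ℂ) (0, a) (0, b))
      = (1 : Matrix (Fin 1) (Fin 1) ℂ) := by
    ext a b
    rw [Subsingleton.elim a b]
    simp
  refine ⟨1, by norm_num, 1, Matrix.PosSemidef.one, ?_, ?_, ?_, ?_⟩
  · intro i j
    rw [hStop]
    exact Submodule.mem_top
  · rw [hStop]
    refine htop _ (Submodule.subset_span ?_)
    exact ⟨0, 0, hblock.symm⟩
  · rw [Fin.sum_univ_one]
    rw [show (0 : Fin 1) = 0 from rfl]
    exact hblock
  · rw [hγ1, Matrix.rank_one]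
    simp

end Helpers

/-- `γ(S)` is the minimum rank of a PSD `m × m` block matrix with blocks
in `S` spanning `S` and with block trace `I_n`; the minimum is attained with `m ≤ 2n³`. -/
theorem gamma_eq_minrank (n : ℕ) (S : Submodule ℂ (Matrix (Fin n) (Fin n) ℂ))
    (hS : IsOperatorSystem S) :
    gammaOS S =
      sInf {ρ : ℕ | ∃ m : ℕ, ∃ B : Matrix (Fin m × Fin n) (Fin m × Fin n) ℂ,
        B.PosSemidef ∧
        (∀ i j : Fin m, (Matrix.of fun a b : Fin n => B (i, a) (j, b)) ∈ S) ∧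
        Submodule.span ℂ {C | ∃ i j : Fin m,
          C = Matrix.of fun a b : Fin n => B (i, a) (j, b)} = S ∧
        (∑ i : Fin m, Matrix.of fun a b : Fin n => B (i, a) (i, b)) = 1 ∧
        B.rank = ρ} ∧
    ∃ m ≤ 2 * n ^ 3, ∃ B : Matrix (Fin m × Fin n) (Fin m × Fin n) ℂ,
      B.PosSemidef ∧
      (∀ i j : Fin m, (Matrix.of fun a b : Fin n => B (i, a) (j, b)) ∈ S) ∧
      Submodule.span ℂ {C | ∃ i j : Fin m,
        C = Matrix.of fun a b : Fin n => B (i, a) (j, b)} = S ∧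
      (∑ i : Fin m, Matrix.of fun a b : Fin n => B (i, a) (i, b)) = 1 ∧
      B.rank = gammaOS S := by
  constructor
  · exact gamma_eq_sInf_RSet
  · match n, S, hS with
    | 0, S, hS => exact part2_zero
    | 1, S, hS => exact part2_one hS
    | (n + 2), S, hS => exact part2_main hS (by omega)
end

section
/- For every operator system S ⊆ M_n: β(S) = min{rank B : m ∈ ℕ, B = [B_{ij}]_{i,j=1}^m is a positive semidefinite mn×mn complex matrix with all n×n blocks B_{ij} ∈ S and ∑_{i=1}^m B_{ii} = I_n}; moreover, this minimum is attained for some m ≤ 2n³. -/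
open Matrix
open scoped ComplexOrder

/-!
A positive semidefinite block matrix `B = [B_ij]` of rank `ρ` factors as `B = Nᴴ N` with `N`
having `ρ` rows. The column blocks `A_i` of `N` satisfy `A_iᴴ A_j = B_ij`, so they are Kraus
operators of a channel into `M_ρ` exactly when the block trace of `B` is `I`, and then
`S_Φ ⊆ S` exactly when all blocks lie in `S`; hence `β(S) ≤ rank B`. Conversely, the Gram block
matrix `[A_iᴴ A_j]` of Kraus operators of a channel into `M_k` has rank at most `k`. To bound the
number `m` of blocks, replace the Kraus operators by at most `k n` linear combinations of
themselves (an orthonormalisation of their span), which leaves `∑ A_iᴴ A_i` unchanged and does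
not enlarge `S_Φ`; and `β(S) ≤ n` via the identity channel.
-/

namespace Matrix

variable {𝕜 : Type*} [RCLike 𝕜] {m n : Type*} [Fintype m] [Fintype n] [DecidableEq n]

/-- The rows of `U` form an orthonormal basis of the column space of `M`, so `Uᴴ * U` is the
orthogonal projection onto it. -/
theorem exists_conjTranspose_mul_self_mul_eq (M : Matrix m n 𝕜) :
    ∃ U : Matrix (Fin M.rank) m 𝕜, Uᴴ * U * M = M := by
  set W := LinearMap.range (toEuclideanLin M)
  have hW : Module.finrank 𝕜 W = M.rank := by
    rw [rank_eq_finrank_range_toLin M (EuclideanSpace.basisFun m 𝕜).toBasis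
      (EuclideanSpace.basisFun n 𝕜).toBasis, ← toEuclideanLin_eq_toLin_orthonormal]
  let b := (stdOrthonormalBasis 𝕜 W).reindex (finCongr hW)
  refine ⟨of fun a i => star ((b a : EuclideanSpace 𝕜 m) i), ?_⟩
  ext i j
  have hcol : WithLp.toLp 2 (M.col j) ∈ W :=
    ⟨EuclideanSpace.single j 1, by ext; simp [mulVec, dotProduct, Pi.single_apply]⟩
  have hrepr := congrArg (fun x : W => (x : EuclideanSpace 𝕜 m) i) (b.sum_repr' ⟨_, hcol⟩)
  simp only [Submodule.coe_inner, EuclideanSpace.inner_eq_star_dotProduct, dotProduct,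
    Submodule.coe_sum, Submodule.coe_smul, WithLp.ofLp_sum, WithLp.ofLp_smul, Finset.sum_apply,
    Pi.smul_apply, Pi.star_apply, col_apply, smul_eq_mul, RCLike.star_def] at hrepr
  simp only [mul_apply, conjTranspose_apply, of_apply, RCLike.star_def, RCLike.conj_conj,
    Finset.sum_mul]
  rw [Finset.sum_comm, ← hrepr]
  refine Finset.sum_congr rfl fun _ _ => ?_
  rw [Finset.sum_mul]
  exact Finset.sum_congr rfl fun _ _ => by ring

open scoped MatrixOrder in
theorem PosSemidef.exists_eq_conjTranspose_mul_self_rank {B : Matrix n n 𝕜}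
    (hB : B.PosSemidef) : ∃ N : Matrix (Fin B.rank) n 𝕜, B = Nᴴ * N := by
  obtain ⟨C, rfl⟩ := CStarAlgebra.nonneg_iff_eq_star_mul_self.mp hB.nonneg
  obtain ⟨U, hU⟩ := exists_conjTranspose_mul_self_mul_eq C
  rw [star_eq_conjTranspose, rank_conjTranspose_mul_self]
  exact ⟨U * C, by rw [conjTranspose_mul, Matrix.mul_assoc, ← Matrix.mul_assoc Uᴴ, hU]⟩

omit [Fintype n] [DecidableEq n] in
theorem submatrix_conjTranspose_mul_self_prodMk {R κ α : Type*} [Star R]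
    [NonUnitalNonAssocSemiring R] [Fintype κ] (M : Matrix κ (α × n) R) (i j : α) :
    (Mᴴ * M).submatrix (Prod.mk i) (Prod.mk j) =
      (M.submatrix id (Prod.mk i))ᴴ * M.submatrix id (Prod.mk j) := by
  rw [submatrix_mul _ _ _ id _ Function.bijective_id, conjTranspose_submatrix]

omit [Fintype n] [DecidableEq n] in
theorem conjTranspose_sum_smul_mul_sum_smul {κ : Type*} [Fintype κ]
    (A : κ → Matrix m n 𝕜) (u v : κ → 𝕜) :
    (∑ i, u i • A i)ᴴ * ∑ j, v j • A j = ∑ i, ∑ j, (star (u i) * v j) • ((A i)ᴴ * A j) := by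
  simp only [conjTranspose_sum, conjTranspose_smul, Matrix.sum_mul, Matrix.mul_sum,
    Matrix.smul_mul, Matrix.mul_smul, Finset.smul_sum, smul_smul]
  rw [Finset.sum_comm]
  exact Finset.sum_congr rfl fun _ _ => Finset.sum_congr rfl fun _ _ => by rw [mul_comm]

end Matrix

section Kraus

variable {ι : Type*} [Fintype ι] {k r : ℕ}

theorem conjTranspose_sum_smul_mul_sum_smul_mem_confGraph (A : Fin r → Matrix (Fin k) ι ℂ)
    (u v : Fin r → ℂ) : (∑ i, u i • A i)ᴴ * ∑ j, v j • A j ∈ confGraph A := by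
  rw [conjTranspose_sum_smul_mul_sum_smul]
  exact Submodule.sum_mem _ fun i _ => Submodule.sum_mem _ fun j _ =>
    Submodule.smul_mem _ _ (Submodule.subset_span ⟨i, j, rfl⟩)

/-- The new operators are `∑ i, U a i • A i`, where `Uᴴ * U` is the projection onto the column
space of the matrix `V` whose rows are the flattened `A i`: since it fixes `V`, it preserves
`∑ i, (A i)ᴴ * A i`. -/
theorem IsKraus.exists_card_le_confGraph_le [DecidableEq ι] {A : Fin r → Matrix (Fin k) ι ℂ}
    (hA : IsKraus A) :
    ∃ d ≤ k * Fintype.card ι, ∃ A' : Fin d → Matrix (Fin k) ι ℂ,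
      IsKraus A' ∧ confGraph A' ≤ confGraph A := by
  let V : Matrix (Fin r) (Fin k × ι) ℂ := of fun i p => A i p.1 p.2
  obtain ⟨U, hU⟩ := exists_conjTranspose_mul_self_mul_eq V
  have hproj : ∀ i, ∑ j, (Uᴴ * U) i j • A j = A i := fun i => by
    ext c x
    simpa [mul_apply, V, Matrix.sum_apply] using congrFun (congrFun hU i) (c, x)
  refine ⟨V.rank, by simpa using V.rank_le_card_width, fun a => ∑ i, U a i • A i, ?_, ?_⟩
  · calc ∑ a, (∑ i, U a i • A i)ᴴ * ∑ j, U a j • A j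
        = ∑ i, (A i)ᴴ * ∑ j, (Uᴴ * U) i j • A j := by
          simp only [conjTranspose_sum_smul_mul_sum_smul]
          simp only [Matrix.mul_sum, Matrix.mul_smul, mul_apply, conjTranspose_apply,
            Finset.sum_smul]
          rw [Finset.sum_comm]
          exact Finset.sum_congr rfl fun _ _ => Finset.sum_comm
      _ = 1 := by simp only [hproj]; exact hA
  · rw [confGraph, Submodule.span_le]
    rintro _ ⟨a, b, rfl⟩
    exact conjTranspose_sum_smul_mul_sum_smul_mem_confGraph A _ _

theorem exists_posSemidef_blocks_eq_conjTranspose_mul (A : Fin r → Matrix (Fin k) ι ℂ) :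
    ∃ B : Matrix (Fin r × ι) (Fin r × ι) ℂ, B.PosSemidef ∧ B.rank ≤ k ∧
      ∀ i j, (of fun a b => B (i, a) (j, b)) = (A i)ᴴ * A j := by
  let N : Matrix (Fin k) (Fin r × ι) ℂ := of fun c p => A p.1 c p.2
  refine ⟨Nᴴ * N, posSemidef_conjTranspose_mul_self N, ?_, ?_⟩
  · rw [rank_conjTranspose_mul_self]
    exact N.rank_le_card_height.trans_eq (Fintype.card_fin k)
  · exact submatrix_conjTranspose_mul_self_prodMk N

variable [DecidableEq ι]

theorem exists_isKraus_confGraph_le_card {S : Submodule ℂ (Matrix ι ι ℂ)} (hS : 1 ∈ S) :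
    ∃ r, ∃ A : Fin r → Matrix (Fin (Fintype.card ι)) ι ℂ, IsKraus A ∧ confGraph A ≤ S := by
  let e := (Fintype.equivFin ι).symm
  have hid : ((1 : Matrix ι ι ℂ).submatrix e id)ᴴ * (1 : Matrix ι ι ℂ).submatrix e id = 1 := by
    simp [conjTranspose_submatrix]
  refine ⟨1, fun _ => (1 : Matrix ι ι ℂ).submatrix e id, by simp [IsKraus], ?_⟩
  rw [confGraph, Submodule.span_le]
  rintro _ ⟨_, _, rfl⟩
  simpa [hid] using hS

theorem betaOS_le_card {S : Submodule ℂ (Matrix ι ι ℂ)} (hS : 1 ∈ S) :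
    betaOS S ≤ Fintype.card ι :=
  Nat.sInf_le (exists_isKraus_confGraph_le_card hS)

theorem exists_isKraus_confGraph_le_betaOS {S : Submodule ℂ (Matrix ι ι ℂ)} (hS : 1 ∈ S) :
    ∃ r, ∃ A : Fin r → Matrix (Fin (betaOS S)) ι ℂ, IsKraus A ∧ confGraph A ≤ S :=
  Nat.sInf_mem (s := {k | ∃ r, ∃ A : Fin r → Matrix (Fin k) ι ℂ, IsKraus A ∧ confGraph A ≤ S})
    ⟨_, exists_isKraus_confGraph_le_card hS⟩

theorem betaOS_le_rank (S : Submodule ℂ (Matrix ι ι ℂ)) {m : ℕ}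
    {B : Matrix (Fin m × ι) (Fin m × ι) ℂ} (hB : B.PosSemidef)
    (hblocks : ∀ i j : Fin m, (of fun a b => B (i, a) (j, b)) ∈ S)
    (htr : ∑ i : Fin m, (of fun a b => B (i, a) (i, b)) = 1) :
    betaOS S ≤ B.rank := by
  obtain ⟨N, hN⟩ := hB.exists_eq_conjTranspose_mul_self_rank
  have hblock : ∀ i j : Fin m, (of fun a b => B (i, a) (j, b)) =
      (N.submatrix id (Prod.mk i))ᴴ * N.submatrix id (Prod.mk j) := fun i j => by
    rw [← submatrix_conjTranspose_mul_self_prodMk, ← hN]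
    rfl
  refine Nat.sInf_le ⟨m, fun i => N.submatrix id (Prod.mk i), ?_, ?_⟩
  · simpa only [IsKraus, hblock] using htr
  · rw [confGraph, Submodule.span_le]
    rintro _ ⟨i, j, rfl⟩
    exact hblock i j ▸ hblocks i j

theorem exists_blocks_rank_eq_betaOS {S : Submodule ℂ (Matrix ι ι ℂ)} (hS : 1 ∈ S) :
    ∃ m ≤ betaOS S * Fintype.card ι, ∃ B : Matrix (Fin m × ι) (Fin m × ι) ℂ,
      B.PosSemidef ∧ (∀ i j : Fin m, (of fun a b => B (i, a) (j, b)) ∈ S) ∧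
      (∑ i : Fin m, of fun a b => B (i, a) (i, b)) = 1 ∧ B.rank = betaOS S := by
  obtain ⟨r, A, hA, hAS⟩ := exists_isKraus_confGraph_le_betaOS hS
  obtain ⟨m, hm, A', hA', hA'A⟩ := hA.exists_card_le_confGraph_le
  obtain ⟨B, hB, hrank, hblocks⟩ := exists_posSemidef_blocks_eq_conjTranspose_mul A'
  have hblocksS : ∀ i j : Fin m, (of fun a b => B (i, a) (j, b)) ∈ S := fun i j =>
    hAS (hA'A (hblocks i j ▸ Submodule.subset_span ⟨i, j, rfl⟩))
  have htr : (∑ i : Fin m, of fun a b => B (i, a) (i, b)) = 1 := by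
    simp only [hblocks]
    exact hA'
  exact ⟨m, hm, B, hB, hblocksS, htr, hrank.antisymm (betaOS_le_rank S hB hblocksS htr)⟩

end Kraus

/-- `β(S)` is the minimum rank of a PSD `m × m` block matrix with blocks
in `S` and block trace `I_n`; the minimum is attained with `m ≤ 2n³`. -/
theorem beta_eq_minrank (n : ℕ) (S : Submodule ℂ (Matrix (Fin n) (Fin n) ℂ))
    (hS : IsOperatorSystem S) :
    betaOS S =
      sInf {ρ : ℕ | ∃ m : ℕ, ∃ B : Matrix (Fin m × Fin n) (Fin m × Fin n) ℂ,
        B.PosSemidef ∧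
        (∀ i j : Fin m, (Matrix.of fun a b : Fin n => B (i, a) (j, b)) ∈ S) ∧
        (∑ i : Fin m, Matrix.of fun a b : Fin n => B (i, a) (i, b)) = 1 ∧
        B.rank = ρ} ∧
    ∃ m ≤ 2 * n ^ 3, ∃ B : Matrix (Fin m × Fin n) (Fin m × Fin n) ℂ,
      B.PosSemidef ∧
      (∀ i j : Fin m, (Matrix.of fun a b : Fin n => B (i, a) (j, b)) ∈ S) ∧
      (∑ i : Fin m, Matrix.of fun a b : Fin n => B (i, a) (i, b)) = 1 ∧
      B.rank = betaOS S := by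
  obtain ⟨m, hm, B, hB, hblocks, htr, hrank⟩ := exists_blocks_rank_eq_betaOS hS.1
  refine ⟨le_antisymm (le_csInf ⟨_, m, B, hB, hblocks, htr, hrank⟩ ?_)
    (Nat.sInf_le ⟨m, B, hB, hblocks, htr, hrank⟩), m, ?_, B, hB, hblocks, htr, hrank⟩
  · rintro _ ⟨m', B', hB', hblocks', htr', rfl⟩
    exact betaOS_le_rank S hB' hblocks' htr'
  · have hβ : betaOS S ≤ n := by simpa using betaOS_le_card hS.1
    calc m ≤ n * n := by simpa using hm.trans (Nat.mul_le_mul_right _ hβ)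
      _ ≤ 2 * n ^ 3 := by
        rcases n with _ | n
        · simp
        · nlinarith
end
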